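/- arXiv:1902.06452 — 6 statements merged into one kernel-verified Lean document; each statement's English description precedes it below -/
import Mathlib

section
/- Let s ≥ 2. For all ξ, η ∈ ℤ, one has the inequality |σ(ξ)η² − σ(ξ−η)η² − σ(η)η² − (s+1)(ξ−η)|η|^s η² − (s(s+1)/2)(ξ−η)²|η|^s η| ≲ |η|³|ξ−η|^s + |η|^s|ξ−η|³, where σ(x) = x|x|^s (the implicit constant depending only on s). -/
open MeasureTheory Real Complex AddCircle
open scoped BigOperators ENNReal

noncomputable section

instance : Fact (0 < 2 * Real.pi) := ⟨by positivity⟩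

/-- The torus `ℝ/2πℤ`. -/
abbrev Torus := AddCircle (2 * Real.pi)

/-- Fourier coefficient of a real-valued function on the torus
(with respect to the normalized Haar measure). -/
def FC (f : Torus → ℝ) (n : ℤ) : ℂ :=
  fourierCoeff (fun x => (f x : ℂ)) n

/-- Inhomogeneous Sobolev `H^s` norm, via Fourier coefficients:
`‖f‖_{H^s} = ( ∑ ⟨n⟩^{2s} |f̂(n)|² )^{1/2}`. -/
def HsNorm (s : ℝ) (f : Torus → ℝ) : ℝ :=
  Real.sqrt (∑' n : ℤ, ((1 + (n : ℝ) ^ 2) ^ s) * ‖FC f n‖ ^ 2)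

/-- Homogeneous Sobolev norm `‖D^s f‖_{L²} = ( ∑ |n|^{2s} |f̂(n)|² )^{1/2}`,
where `D = 𝓕⁻¹ |ξ| 𝓕`. -/
def DsNorm (s : ℝ) (f : Torus → ℝ) : ℝ :=
  Real.sqrt (∑' n : ℤ, (|(n : ℝ)| ^ (2 * s)) * ‖FC f n‖ ^ 2)

/-- Membership in `H^s(𝕋)` (finiteness of the Sobolev sum). -/
def MemHs (s : ℝ) (f : Torus → ℝ) : Prop :=
  Summable (fun n : ℤ => ((1 + (n : ℝ) ^ 2) ^ s) * ‖FC f n‖ ^ 2)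

/-- `g` is the image of `f` under the Fourier multiplier with symbol `m`. -/
def HasSymbol (m : ℤ → ℂ) (f g : Torus → ℝ) : Prop :=
  ∀ n : ℤ, FC g n = m n * FC f n

/-- Symbol of the Hilbert transform `H`: `-i sgn(n)`. -/
def symH (n : ℤ) : ℂ := -Complex.I * (Int.sign n : ℂ)

/-- Symbol of `D^s = 𝓕⁻¹|ξ|^s𝓕`. -/
def symD (s : ℝ) (n : ℤ) : ℂ := ((|(n : ℝ)| ^ s : ℝ) : ℂ)

/-- Symbol of `∂ₓ`. -/
def symDx (n : ℤ) : ℂ := Complex.I * (n : ℂ)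

/-- Symbol of the smoothed antiderivative `J`: `ψ(ξ)/|ξ|`. -/
def symJ (ψ : ℝ → ℝ) (n : ℤ) : ℂ := ((ψ n / |(n : ℝ)| : ℝ) : ℂ)

/-- `ψ` is a smooth cutoff: `0 ≤ ψ ≤ 1`, `ψ = 1` on `|ξ| ≥ 2`, `ψ = 0` on `|ξ| ≤ 1`. -/
def IsCutoff (ψ : ℝ → ℝ) : Prop :=
  ContDiff ℝ (⊤ : ℕ∞) ψ ∧ (∀ x, 0 ≤ ψ x) ∧ (∀ x, ψ x ≤ 1) ∧
    (∀ x, 2 ≤ |x| → ψ x = 1) ∧ (∀ x, |x| ≤ 1 → ψ x = 0)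

/-- Rapid decay of Fourier coefficients (a model for "sufficiently smooth"). -/
def SmoothFC (f : Torus → ℝ) : Prop :=
  ∀ k : ℕ, Summable (fun n : ℤ => |(n : ℝ)| ^ k * ‖FC f n‖)

/-- `L²` pairing `⟨f, g⟩ = ∫ f g`. -/
def inn (f g : Torus → ℝ) : ℝ := ∫ x : Torus, f x * g x ∂haarAddCircle

/-- Trilinear integral `∫ f g h`. -/
def inn3 (f g h : Torus → ℝ) : ℝ := ∫ x : Torus, f x * g x * h x ∂haarAddCircle

/-- Quadrilinear integral `∫ f g h k`. -/
def inn4 (f g h k : Torus → ℝ) : ℝ :=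
  ∫ x : Torus, f x * g x * h x * k x ∂haarAddCircle


/-- `σ(x) = x|x|^s`. -/
def sigmaSym (s : ℝ) (x : ℝ) : ℝ := x * |x| ^ s

noncomputable section StatementAux

lemma sq_rpow_half (x r : ℝ) : (x^2) ^ (r/2) = |x| ^ r := by
  rw [← sq_abs, ← Real.rpow_natCast |x| 2, ← Real.rpow_mul (abs_nonneg x)]
  congr 1; push_cast; ring

lemma rabs_split {s : ℝ} (hs : 2 ≤ s) (x : ℝ) : |x| ^ s = |x| ^ (s-2) * x^2 := by
  rcases eq_or_ne x 0 with rfl | hx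
  · simp [Real.zero_rpow (by linarith : s ≠ 0)]
  · rw [← sq_abs, ← Real.rpow_natCast |x| 2, ← Real.rpow_add (abs_pos.2 hx)]
    norm_num

lemma hasDerivAt_absRpow {s : ℝ} (hs : 2 ≤ s) (x : ℝ) :
    HasDerivAt (fun y : ℝ => |y| ^ s) (s * x * |x| ^ (s-2)) x := by
  have h1 : HasDerivAt (fun y : ℝ => (y^2 : ℝ)) (2*x) x := by
    simpa using hasDerivAt_pow 2 x
  have h3 : HasDerivAt (fun y : ℝ => (y^2 : ℝ) ^ (s/2)) ((2*x) * (s/2) * (x^2) ^ (s/2 - 1)) x :=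
    h1.rpow_const (Or.inr (by linarith))
  have hfun : (fun y : ℝ => ((y^2 : ℝ)) ^ (s/2)) = fun y : ℝ => |y| ^ s := by
    funext y; rw [sq_rpow_half]
  have hval : (2*x) * (s/2) * (x^2) ^ (s/2 - 1) = s * x * |x| ^ (s-2) := by
    have : (x^2 : ℝ) ^ (s/2 - 1) = |x| ^ (s-2) := by
      rw [show s/2 - 1 = (s-2)/2 by ring, sq_rpow_half]
    rw [this]; ring
  rw [← hfun, ← hval]
  exact h3

lemma hasDerivAt_sigma {s : ℝ} (hs : 2 ≤ s) (x : ℝ) :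
    HasDerivAt (fun y : ℝ => y * |y| ^ s) ((s+1) * |x| ^ s) x := by
  have h : HasDerivAt (fun y : ℝ => y * |y| ^ s) (1 * |x| ^ s + x * (s * x * |x| ^ (s-2))) x :=
    (hasDerivAt_id x).mul (hasDerivAt_absRpow hs x)
  simp only [id_eq, one_mul] at h
  convert h using 1
  linear_combination s * (rabs_split hs x)

lemma hasDerivAt_D1 {s : ℝ} (hs : 2 ≤ s) (x : ℝ) :
    HasDerivAt (fun y : ℝ => (s+1) * |y| ^ s) (s*(s+1)*x*|x|^(s-2)) x := by
  have h := (hasDerivAt_absRpow hs x).const_mul (s+1)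
  have : (s+1) * (s * x * |x| ^ (s-2)) = s*(s+1)*x*|x|^(s-2) := by ring
  simpa [this] using h

lemma hasDerivAt_D2 {s : ℝ} (hs : 2 ≤ s) {x : ℝ} (hx : 0 < x) :
    HasDerivAt (fun y : ℝ => s*(s+1)*y*|y|^(s-2)) (s*(s+1)*((s-1)*x^(s-2))) x := by
  have hbase : HasDerivAt (fun y : ℝ => y ^ (s-1)) ((s-1) * x ^ (s-2)) x := by
    have := Real.hasDerivAt_rpow_const (x := x) (p := s-1) (Or.inl hx.ne')
    simpa [show s - 1 - 1 = s - 2 by ring] using this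
  have heq : (fun y : ℝ => y * |y| ^ (s-2)) =ᶠ[nhds x] (fun y : ℝ => y ^ (s-1)) := by
    filter_upwards [isOpen_Ioi.mem_nhds hx] with y hy
    have hy' : (0:ℝ) < y := hy
    rw [abs_of_pos hy', show s - 1 = 1 + (s-2) by ring, Real.rpow_add hy', Real.rpow_one]
  have h2 : HasDerivAt (fun y : ℝ => y * |y| ^ (s-2)) ((s-1) * x ^ (s-2)) x :=
    hbase.congr_of_eventuallyEq heq
  have h3 := h2.const_mul (s*(s+1))
  have : (fun y : ℝ => s*(s+1)*y*|y|^(s-2)) = fun y : ℝ => s*(s+1)*(y*|y|^(s-2)) := by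
    funext y; ring
  rw [this]
  exact h3

lemma mvt_abs {f f' : ℝ → ℝ} {y C : ℝ}
    (h : ∀ t ∈ Set.uIcc 0 y, HasDerivAt f (f' t) t)
    (hb : ∀ t ∈ Set.uIcc 0 y, |f' t| ≤ C) : |f y - f 0| ≤ C * |y| := by
  have := (convex_uIcc (0:ℝ) y).norm_image_sub_le_of_norm_hasDerivWithin_le
    (fun t ht => (h t ht).hasDerivWithinAt)
    (fun t ht => by simpa [Real.norm_eq_abs] using hb t ht)
    Set.left_mem_uIcc Set.right_mem_uIcc
  simpa [Real.norm_eq_abs] using this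

lemma abs_mem_uIcc {y t : ℝ} (ht : t ∈ Set.uIcc 0 y) : |t| ≤ |y| := by
  rw [Set.mem_uIcc] at ht
  rcases ht with ⟨h1, h2⟩ | ⟨h1, h2⟩
  · calc |t| ≤ max |(0:ℝ)| |y| := abs_le_max_abs_abs h1 h2
      _ ≤ |y| := by simp
  · calc |t| ≤ max |y| |(0:ℝ)| := abs_le_max_abs_abs h1 h2
      _ ≤ |y| := by simp

/-- The Taylor-type expression. -/
def Texpr (s a b : ℝ) : ℝ :=
  (a+b) * |a+b| ^ s - a * |a| ^ s - b * |b| ^ s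
    - (s+1) * |a| ^ s * b - s*(s+1)*a*|a|^(s-2)*b^2/2

lemma Texpr_neg (s a b : ℝ) : Texpr s (-a) (-b) = - Texpr s a b := by
  unfold Texpr
  simp only [← neg_add, abs_neg]
  ring

lemma mvt_abs' {f f' : ℝ → ℝ} {y C : ℝ} (hC : 0 ≤ C)
    (h : ∀ t ∈ Set.uIcc 0 y, HasDerivAt f (f' t) t)
    (hb : ∀ t ∈ Set.uIcc 0 y, |f' t| ≤ C) (hf0 : f 0 = 0) :
    ∀ t ∈ Set.uIcc 0 y, |f t| ≤ C * |y| := by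
  intro t ht
  have hsub : Set.uIcc 0 t ⊆ Set.uIcc 0 y := Set.uIcc_subset_uIcc Set.left_mem_uIcc ht
  have h2 := mvt_abs (fun u hu => h u (hsub hu)) (fun u hu => hb u (hsub hu))
  rw [hf0, sub_zero] at h2
  have h3 := abs_mem_uIcc ht
  nlinarith [abs_nonneg t]

lemma near_bound {s : ℝ} (hs : 2 ≤ s) {a b : ℝ} (ha : 0 < a) (hb : 2*|b| ≤ a) :
    |Texpr s a b| ≤ (s*(s+1)*(s-1)*(3/2)^(s-2) + 1) * (a^(s-2) * |b|^3) := by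
  have hcoef : (0:ℝ) ≤ s*(s+1)*(s-1) :=
    le_of_lt (mul_pos (mul_pos (by linarith) (by linarith)) (by linarith))
  set M : ℝ := s*(s+1)*(s-1)*((3/2)*a)^(s-2) with hM
  have hM0 : 0 ≤ M := mul_nonneg hcoef (Real.rpow_nonneg (by linarith) _)
  have hmem : ∀ t ∈ Set.uIcc 0 b, a/2 ≤ a + t ∧ a + t ≤ (3/2)*a := by
    intro t ht
    have h1 := abs_le.1 (abs_mem_uIcc ht)
    constructor <;> linarith [abs_nonneg b]
  -- level 2
  set f₂ : ℝ → ℝ := fun t => s*(s+1)*(a+t)*|a+t|^(s-2) - s*(s+1)*a*|a|^(s-2) with hf₂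
  have hder₂ : ∀ t ∈ Set.uIcc 0 b,
      HasDerivAt f₂ (s*(s+1)*((s-1)*(a+t)^(s-2))) t := by
    intro t ht
    have hpos : 0 < a + t := lt_of_lt_of_le (by linarith) (hmem t ht).1
    have h := (hasDerivAt_D2 hs hpos).comp t ((hasDerivAt_id t).const_add a)
    simp only [Function.comp_def] at h
    simpa [hf₂, mul_one] using (h.sub_const (s*(s+1)*a*|a|^(s-2)))
  have hbound₂ : ∀ t ∈ Set.uIcc 0 b, |s*(s+1)*((s-1)*(a+t)^(s-2))| ≤ M := by
    intro t ht
    obtain ⟨hl, hr⟩ := hmem t ht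
    have hpos : 0 < a + t := lt_of_lt_of_le (by linarith) hl
    have hY : (a+t)^(s-2) ≤ ((3/2)*a)^(s-2) :=
      Real.rpow_le_rpow hpos.le hr (by linarith)
    have hnn : 0 ≤ s*(s+1)*((s-1)*(a+t)^(s-2)) := by
      have := Real.rpow_nonneg hpos.le (s-2)
      nlinarith
    rw [abs_of_nonneg hnn]
    calc s*(s+1)*((s-1)*(a+t)^(s-2)) = s*(s+1)*(s-1)*(a+t)^(s-2) := by ring
      _ ≤ M := mul_le_mul_of_nonneg_left hY hcoef
  have key₂ : ∀ t ∈ Set.uIcc 0 b, |f₂ t| ≤ M * |b| :=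
    mvt_abs' hM0 hder₂ hbound₂ (by simp [hf₂])
  -- level 1
  set f₁ : ℝ → ℝ := fun t => (s+1)*|a+t|^s - (s+1)*|a|^s - s*(s+1)*a*|a|^(s-2)*t with hf₁
  have hder₁ : ∀ t ∈ Set.uIcc 0 b, HasDerivAt f₁ (f₂ t) t := by
    intro t _
    have h := (hasDerivAt_D1 hs (a+t)).comp t ((hasDerivAt_id t).const_add a)
    simp only [Function.comp_def] at h
    have hl : HasDerivAt (fun u : ℝ => s*(s+1)*a*|a|^(s-2)*u) (s*(s+1)*a*|a|^(s-2)) t := by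
      simpa using (hasDerivAt_id t).const_mul (s*(s+1)*a*|a|^(s-2))
    simpa [hf₁, hf₂, mul_one, Pi.sub_def] using (h.sub_const ((s+1)*|a|^s)).sub hl
  have key₁ : ∀ t ∈ Set.uIcc 0 b, |f₁ t| ≤ M * |b| * |b| :=
    mvt_abs' (by positivity) hder₁ key₂ (by simp [hf₁])
  -- level 0
  set f₀ : ℝ → ℝ := fun t => (a+t)*|a+t|^s - a*|a|^s - (s+1)*|a|^s*t
      - s*(s+1)*a*|a|^(s-2)*(t^2/2) with hf₀
  have hder₀ : ∀ t ∈ Set.uIcc 0 b, HasDerivAt f₀ (f₁ t) t := by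
    intro t _
    have h := (hasDerivAt_sigma hs (a+t)).comp t ((hasDerivAt_id t).const_add a)
    simp only [Function.comp_def] at h
    have hl : HasDerivAt (fun u : ℝ => (s+1)*|a|^s*u) ((s+1)*|a|^s) t := by
      simpa using (hasDerivAt_id t).const_mul ((s+1)*|a|^s)
    have hq : HasDerivAt (fun u : ℝ => s*(s+1)*a*|a|^(s-2)*(u^2/2))
        (s*(s+1)*a*|a|^(s-2)*t) t := by
      have h2 : HasDerivAt (fun u : ℝ => s*(s+1)*a*|a|^(s-2)*(u^2/2)) _ t := ((hasDerivAt_pow 2 t).div_const 2).const_mul (s*(s+1)*a*|a|^(s-2))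
      convert h2 using 1
      ring
    simpa [hf₀, hf₁, mul_one, Pi.sub_def] using ((h.sub_const (a*|a|^s)).sub hl).sub hq
  have key₀ : |f₀ b| ≤ M * |b| * |b| * |b| := by
    have := mvt_abs hder₀ key₁
    rw [show f₀ 0 = 0 by simp [hf₀], sub_zero] at this
    exact this
  -- assemble
  have hTeq : Texpr s a b = f₀ b - b * |b| ^ s := by
    simp only [hf₀]; unfold Texpr; ring
  have hσb : |b * |b| ^ s| = |b|^(s-2) * |b|^3 := by
    rw [abs_mul, abs_of_nonneg (Real.rpow_nonneg (abs_nonneg b) s), rabs_split hs b,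
      ← sq_abs]
    ring
  have hb3 : |b|^(s-2) ≤ a^(s-2) :=
    Real.rpow_le_rpow (abs_nonneg b) (by linarith [abs_nonneg b]) (by linarith)
  have hMle : M = s*(s+1)*(s-1)*(3/2)^(s-2) * a^(s-2) := by
    rw [hM, Real.mul_rpow (by norm_num) ha.le]; ring
  have h1 : |Texpr s a b| ≤ |f₀ b| + |b * |b| ^ s| := by
    rw [hTeq]; exact abs_sub _ _
  have ha2 : (0:ℝ) ≤ a^(s-2) := Real.rpow_nonneg ha.le _
  have hb0 : (0:ℝ) ≤ |b| := abs_nonneg b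
  have hc2 : (0:ℝ) ≤ (3/2:ℝ)^(s-2) := Real.rpow_nonneg (by norm_num) _
  have key₀' : |f₀ b| ≤ M * |b|^3 := by
    have hring : M * |b| * |b| * |b| = M * |b|^3 := by ring
    linarith [key₀]
  have hM3 : M * |b|^3 = s*(s+1)*(s-1)*(3/2)^(s-2) * a^(s-2) * |b|^3 := by
    rw [hMle]
  have hint1 : |b|^(s-2) * |b|^3 ≤ a^(s-2) * |b|^3 :=
    mul_le_mul_of_nonneg_right hb3 (pow_nonneg hb0 3)
  have hgoal : (s*(s+1)*(s-1)*(3/2)^(s-2) + 1) * (a^(s-2) * |b|^3)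
      = s*(s+1)*(s-1)*(3/2)^(s-2) * a^(s-2) * |b|^3 + a^(s-2) * |b|^3 := by ring
  linarith [h1, key₀', hσb.le, hσb.ge]

lemma mvt_gen {f f' : ℝ → ℝ} {x y C : ℝ}
    (h : ∀ t ∈ Set.uIcc x y, HasDerivAt f (f' t) t)
    (hb : ∀ t ∈ Set.uIcc x y, |f' t| ≤ C) : |f y - f x| ≤ C * |y - x| := by
  have := (convex_uIcc x y).norm_image_sub_le_of_norm_hasDerivWithin_le
    (fun t ht => (h t ht).hasDerivWithinAt)
    (fun t ht => by simpa [Real.norm_eq_abs] using hb t ht)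
    Set.left_mem_uIcc Set.right_mem_uIcc
  simpa [Real.norm_eq_abs] using this

lemma near_bound_abs {s : ℝ} (hs : 2 ≤ s) {a b : ℝ} (ha : a ≠ 0) (hb : 2*|b| ≤ |a|) :
    |Texpr s a b| ≤ (s*(s+1)*(s-1)*(3/2)^(s-2) + 1) * (|a|^(s-2) * |b|^3) := by
  rcases ha.lt_or_gt with hneg | hpos
  · have h := near_bound hs (a := -a) (b := -b) (by linarith) (by rw [abs_neg]; rwa [abs_of_neg hneg] at hb)
    rw [Texpr_neg, abs_neg, abs_neg] at h
    rwa [abs_of_neg hneg]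
  · have h := near_bound hs (a := a) (b := b) hpos (by rwa [abs_of_pos hpos] at hb)
    rwa [abs_of_pos hpos]

lemma far_bound {s : ℝ} (hs : 2 ≤ s) {a b : ℝ} (h : |a| ≤ 2*|b|) :
    |Texpr s a b| ≤ ((s+1)*3^s + 2^s + 4*(s+1) + s*(s+1))
      * (|a| * |b|^s + |a|^(s-2) * |b|^3) := by
  have hb0 : (0:ℝ) ≤ |b| := abs_nonneg b
  have ha0 : (0:ℝ) ≤ |a| := abs_nonneg a
  -- MVT piece
  have hm : ∀ t ∈ Set.uIcc b (a+b), |(s+1)*|t|^s| ≤ (s+1)*(3^s*|b|^s) := by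
    intro t ht
    have htle : |t| ≤ 3*|b| := by
      have h4 : |a+b| ≤ 3*|b| := (abs_add_le a b).trans (by linarith)
      have h3 : |b| ≤ 3*|b| := by linarith
      rcases Set.mem_uIcc.1 ht with ⟨h1, h2⟩ | ⟨h1, h2⟩
      · exact (abs_le_max_abs_abs h1 h2).trans (max_le h3 h4)
      · exact (abs_le_max_abs_abs h1 h2).trans (max_le h4 h3)
    have hts : |t|^s ≤ 3^s*|b|^s := by
      rw [← Real.mul_rpow (by norm_num) hb0]
      exact Real.rpow_le_rpow (abs_nonneg t) htle (by linarith)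
    rw [abs_of_nonneg (mul_nonneg (by linarith) (Real.rpow_nonneg (abs_nonneg t) s))]
    exact mul_le_mul_of_nonneg_left hts (by linarith)
  have hmvt : |(a+b)*|a+b|^s - b*|b|^s| ≤ (s+1)*(3^s*|b|^s) * |a| := by
    have h5 := mvt_gen (fun t _ => hasDerivAt_sigma hs t) hm
    simpa [show a + b - b = a by ring] using h5
  -- direct pieces
  have hsplit2 : |a|^s = |a|^(s-2) * a^2 := rabs_split hs a
  have ha2 : a^2 ≤ 4*|b|^2 := by nlinarith [sq_abs a, sq_abs b]
  have haQ : (0:ℝ) ≤ |a|^(s-2) := Real.rpow_nonneg ha0 _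
  have hbs : (0:ℝ) ≤ |b|^s := Real.rpow_nonneg hb0 _
  have h2 : |a*|a|^s| ≤ 2^s * (|a| * |b|^s) := by
    rw [abs_mul, abs_of_nonneg (Real.rpow_nonneg ha0 s)]
    have : |a|^s ≤ 2^s*|b|^s := by
      rw [← Real.mul_rpow (by norm_num) hb0]
      exact Real.rpow_le_rpow ha0 h (by linarith)
    nlinarith
  have h3 : |(s+1)*|a|^s*b| ≤ 4*(s+1) * (|a|^(s-2) * |b|^3) := by
    rw [abs_mul, abs_mul, abs_of_nonneg (by linarith : (0:ℝ) ≤ s+1),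
      abs_of_nonneg (Real.rpow_nonneg ha0 s), hsplit2]
    nlinarith [mul_nonneg (mul_nonneg (mul_nonneg (by linarith : (0:ℝ) ≤ s+1) haQ)
      (abs_nonneg b)) (sub_nonneg.2 ha2)]
  have h4 : |s*(s+1)*a*|a|^(s-2)*b^2/2| ≤ s*(s+1) * (|a|^(s-2) * |b|^3) := by
    have hc : (0:ℝ) ≤ s*(s+1) := by nlinarith
    have hb2 : b^2 = |b|^2 := (sq_abs b).symm
    have key : |a| * b^2 ≤ 2*|b|^3 := by
      nlinarith [mul_le_mul_of_nonneg_right h (sq_nonneg b)]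
    have e : |s*(s+1)*a*|a|^(s-2)*b^2/2| = s*(s+1) * |a| * |a|^(s-2) * b^2 / 2 := by
      rw [abs_div, abs_mul, abs_mul, abs_mul, abs_of_nonneg hc,
        abs_of_nonneg (Real.rpow_nonneg ha0 _), abs_of_nonneg (sq_nonneg b)]
      norm_num
    rw [e]
    nlinarith [mul_nonneg (mul_nonneg hc haQ) (sub_nonneg.2 key)]
  -- split
  have hsplit : |Texpr s a b| ≤ |(a+b)*|a+b|^s - b*|b|^s| + |a*|a|^s|
      + |(s+1)*|a|^s*b| + |s*(s+1)*a*|a|^(s-2)*b^2/2| := by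
    have e : Texpr s a b = (((a+b)*|a+b|^s - b*|b|^s) - a*|a|^s - (s+1)*|a|^s*b)
        - s*(s+1)*a*|a|^(s-2)*b^2/2 := by unfold Texpr; ring
    rw [e]
    calc |(((a+b)*|a+b|^s - b*|b|^s) - a*|a|^s - (s+1)*|a|^s*b)
          - s*(s+1)*a*|a|^(s-2)*b^2/2|
        ≤ |((a+b)*|a+b|^s - b*|b|^s) - a*|a|^s - (s+1)*|a|^s*b|
          + |s*(s+1)*a*|a|^(s-2)*b^2/2| := abs_sub _ _
      _ ≤ |((a+b)*|a+b|^s - b*|b|^s) - a*|a|^s| + |(s+1)*|a|^s*b|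
          + |s*(s+1)*a*|a|^(s-2)*b^2/2| := by linarith [abs_sub (((a+b)*|a+b|^s - b*|b|^s) - a*|a|^s) ((s+1)*|a|^s*b)]
      _ ≤ |(a+b)*|a+b|^s - b*|b|^s| + |a*|a|^s| + |(s+1)*|a|^s*b|
          + |s*(s+1)*a*|a|^(s-2)*b^2/2| := by linarith [abs_sub ((a+b)*|a+b|^s - b*|b|^s) (a*|a|^s)]
  -- combine
  have hP : (0:ℝ) ≤ |a| * |b|^s := mul_nonneg ha0 hbs
  have hQ : (0:ℝ) ≤ |a|^(s-2) * |b|^3 := mul_nonneg haQ (pow_nonneg hb0 3)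
  have c3 : (0:ℝ) ≤ (3:ℝ)^s := Real.rpow_nonneg (by norm_num) _
  have c2 : (0:ℝ) ≤ (2:ℝ)^s := Real.rpow_nonneg (by norm_num) _
  nlinarith [mul_nonneg (mul_nonneg (by linarith : (0:ℝ) ≤ s+1) c3) hQ,
    mul_nonneg c2 hQ,
    mul_nonneg (by nlinarith : (0:ℝ) ≤ 4*(s+1) + s*(s+1)) hP]

lemma main_real {s : ℝ} (hs : 2 ≤ s) :
    ∃ C > (0:ℝ), ∀ a b : ℝ,
      |a^2 * Texpr s a b| ≤ C * (|a|^3 * |b|^s + |a|^s * |b|^3) := by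
  have p3 : (0:ℝ) < (3:ℝ)^s := Real.rpow_pos_of_pos (by norm_num) _
  have p2 : (0:ℝ) < (2:ℝ)^s := Real.rpow_pos_of_pos (by norm_num) _
  have p32 : (0:ℝ) < ((3:ℝ)/2)^(s-2) := Real.rpow_pos_of_pos (by norm_num) _
  have hC1 : (0:ℝ) < (s+1)*3^s + 2^s + 4*(s+1) + s*(s+1) := by
    nlinarith [mul_pos (by linarith : (0:ℝ) < s+1) p3]
  have hC2 : (0:ℝ) < s*(s+1)*(s-1)*(3/2)^(s-2) + 1 := by
    nlinarith [mul_pos (mul_pos (mul_pos (by linarith : (0:ℝ) < s)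
      (by linarith : (0:ℝ) < s+1)) (by linarith : (0:ℝ) < s-1)) p32]
  refine ⟨((s+1)*3^s + 2^s + 4*(s+1) + s*(s+1)) + (s*(s+1)*(s-1)*(3/2)^(s-2) + 1),
    by linarith, ?_⟩
  intro a b
  have e1 : a^2 * |a| = |a|^3 := by rw [← sq_abs]; ring
  have e2 : a^2 * |a|^(s-2) = |a|^s := by rw [rabs_split hs a]; ring
  have hrw : |a^2 * Texpr s a b| = a^2 * |Texpr s a b| := by
    rw [abs_mul, abs_of_nonneg (sq_nonneg a)]
  have hX : (0:ℝ) ≤ |a|^3 * |b|^s + |a|^s * |b|^3 := by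
    have := Real.rpow_nonneg (abs_nonneg a) s
    have := Real.rpow_nonneg (abs_nonneg b) s
    positivity
  by_cases hcase : |a| ≤ 2*|b|
  · have h := far_bound hs hcase
    have h2 := mul_le_mul_of_nonneg_left h (sq_nonneg a)
    have eX : a^2 * (|a| * |b|^s + |a|^(s-2) * |b|^3) = |a|^3 * |b|^s + |a|^s * |b|^3 := by
      rw [← e1, ← e2]; ring
    rw [hrw]
    calc a^2 * |Texpr s a b|
        ≤ a^2 * (((s+1)*3^s + 2^s + 4*(s+1) + s*(s+1)) * (|a| * |b|^s + |a|^(s-2) * |b|^3)) := h2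
      _ = ((s+1)*3^s + 2^s + 4*(s+1) + s*(s+1)) * (|a|^3 * |b|^s + |a|^s * |b|^3) := by
          rw [← eX]; ring
      _ ≤ _ := by nlinarith [mul_nonneg hC2.le hX]
  · push_neg at hcase
    have ha : a ≠ 0 := by
      intro h0
      rw [h0] at hcase
      simp at hcase
      linarith [abs_nonneg b, hcase]
    have h := near_bound_abs hs ha (le_of_lt hcase)
    have h2 := mul_le_mul_of_nonneg_left h (sq_nonneg a)
    rw [hrw]
    calc a^2 * |Texpr s a b|
        ≤ a^2 * ((s*(s+1)*(s-1)*(3/2)^(s-2) + 1) * (|a|^(s-2) * |b|^3)) := h2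
      _ = (s*(s+1)*(s-1)*(3/2)^(s-2) + 1) * (|a|^s * |b|^3) := by
          rw [← e2]; ring
      _ ≤ _ := by
          have hterm : (0:ℝ) ≤ |a|^3 * |b|^s :=
            mul_nonneg (pow_nonneg (abs_nonneg a) 3) (Real.rpow_nonneg (abs_nonneg b) s)
          have hterm2 : (0:ℝ) ≤ |a|^s * |b|^3 :=
            mul_nonneg (Real.rpow_nonneg (abs_nonneg a) s) (pow_nonneg (abs_nonneg b) 3)
          nlinarith [mul_nonneg hC1.le hX, mul_nonneg hC2.le hterm]

end StatementAux

/-- second-order symbol (Taylor) estimate for `σ(x) = x|x|^s`, `s ≥ 2`. -/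
theorem statement3 (s : ℝ) (hs : 2 ≤ s) :
    ∃ C > (0 : ℝ), ∀ ξ η : ℤ,
      |sigmaSym s ξ * (η : ℝ) ^ 2 - sigmaSym s ((ξ : ℝ) - (η : ℝ)) * (η : ℝ) ^ 2
          - sigmaSym s η * (η : ℝ) ^ 2
          - (s + 1) * ((ξ : ℝ) - (η : ℝ)) * |(η : ℝ)| ^ s * (η : ℝ) ^ 2
          - s * (s + 1) / 2 * ((ξ : ℝ) - (η : ℝ)) ^ 2 * |(η : ℝ)| ^ s * (η : ℝ)| ≤
        C * (|(η : ℝ)| ^ 3 * |(ξ : ℝ) - (η : ℝ)| ^ s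
          + |(η : ℝ)| ^ s * |(ξ : ℝ) - (η : ℝ)| ^ 3) := by
  obtain ⟨C, hC, hbound⟩ := main_real hs
  refine ⟨C, hC, ?_⟩
  intro ξ η
  have key := hbound (η : ℝ) ((ξ : ℝ) - (η : ℝ))
  have eL : sigmaSym s ξ * (η : ℝ) ^ 2 - sigmaSym s ((ξ : ℝ) - (η : ℝ)) * (η : ℝ) ^ 2
      - sigmaSym s η * (η : ℝ) ^ 2
      - (s + 1) * ((ξ : ℝ) - (η : ℝ)) * |(η : ℝ)| ^ s * (η : ℝ) ^ 2
      - s * (s + 1) / 2 * ((ξ : ℝ) - (η : ℝ)) ^ 2 * |(η : ℝ)| ^ s * (η : ℝ)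
      = (η : ℝ)^2 * Texpr s (η : ℝ) ((ξ : ℝ) - (η : ℝ)) := by
    unfold sigmaSym Texpr
    rw [show (η : ℝ) + ((ξ : ℝ) - (η : ℝ)) = (ξ : ℝ) from by ring]
    linear_combination (-(s * (s + 1) / 2 * ((ξ : ℝ) - (η : ℝ))^2 * (η : ℝ)))
      * (rabs_split hs (η : ℝ))
  rw [eL]
  exact key

end
end

section
/- Let s₀ > 3/2 and s ≥ 0. For all ξ, η ∈ ℤ, | |ξ|^{s+1} − |ξ−η|^{s+1} − |η|^{s+1} | ≲ |η||ξ−η|^s + |ξ−η||η|^s, and the same bound holds for | |ξ|^s ξ − |ξ−η|^s(ξ−η) − |η|^s η |. -/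
open MeasureTheory Real Complex AddCircle
open scoped BigOperators ENNReal

noncomputable section

lemma rpow_succ' {s p : ℝ} (hs : 0 ≤ s) (hp : 0 ≤ p) : p ^ s * p = p ^ (s + 1) := by
  rcases eq_or_lt_of_le hp with h | h
  · rw [← h, Real.zero_rpow (by linarith : s + 1 ≠ 0), mul_zero]
  · rw [Real.rpow_add_one h.ne' s]

lemma bern_aux {s u v : ℝ} (hs : 0 ≤ s) (hu : 0 ≤ u) (huv : u ≤ v) :
    v ^ (s + 1) - u ^ (s + 1) ≤ (s + 1) * v ^ s * (v - u) := by
  have hv : 0 ≤ v := hu.trans huv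
  rcases eq_or_lt_of_le hv with h0 | hv'
  · have hu0 : u = 0 := le_antisymm (huv.trans h0.symm.le) hu
    simp [← h0, hu0, Real.zero_rpow (by linarith : s + 1 ≠ 0)]
  · have ht : -1 ≤ u / v - 1 := by
      have : 0 ≤ u / v := div_nonneg hu hv
      linarith
    have hb := one_add_mul_self_le_rpow_one_add ht (by linarith : (1:ℝ) ≤ s + 1)
    rw [add_sub_cancel] at hb
    have hvpow : 0 < v ^ (s + 1) := Real.rpow_pos_of_pos hv' _
    have h2 := mul_le_mul_of_nonneg_left hb hvpow.le
    rw [Real.div_rpow hu hv'.le, mul_div_cancel₀ _ hvpow.ne'] at h2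
    have hvv : v ^ (s + 1) = v ^ s * v := (rpow_succ' hs hv).symm
    have huv' : v ^ (s + 1) * (u / v) = v ^ s * u := by
      rw [hvv]; field_simp
    nlinarith [h2, huv']

lemma gmono {s p q : ℝ} (hs : 0 ≤ s) (hqp : q ≤ p) :
    0 ≤ |p| ^ s * p - |q| ^ s * q ∧
    |p| ^ s * p - |q| ^ s * q ≤ (s + 1) * (max |p| |q|) ^ s * (p - q) := by
  rcases le_or_gt 0 q with hq | hq
  · -- 0 ≤ q ≤ p
    have hp : 0 ≤ p := hq.trans hqp
    rw [_root_.abs_of_nonneg hp, _root_.abs_of_nonneg hq, max_eq_left hqp, rpow_succ' hs hp,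
      rpow_succ' hs hq]
    exact ⟨by linarith [Real.rpow_le_rpow hq hqp (by linarith : (0:ℝ) ≤ s + 1)],
      bern_aux hs hq hqp⟩
  · rcases le_or_gt p 0 with hp | hp
    · -- q ≤ p ≤ 0
      have h1 : |p| ≤ |q| := by rw [_root_.abs_of_nonpos hp, _root_.abs_of_nonpos hq.le]; linarith
      rw [max_eq_right h1, _root_.abs_of_nonpos hp, _root_.abs_of_nonpos hq.le]
      have hb := bern_aux hs (neg_nonneg.2 hp) (by linarith : -p ≤ -q)
      have e1 : (-p) ^ s * p = -((-p) ^ (s+1)) := by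
        rw [show (-p)^s * p = -((-p)^s * (-p)) by ring, rpow_succ' hs (neg_nonneg.2 hp)]
      have e2 : (-q) ^ s * q = -((-q) ^ (s+1)) := by
        rw [show (-q)^s * q = -((-q)^s * (-q)) by ring, rpow_succ' hs (by linarith)]
      constructor
      · rw [e1, e2]
        have := Real.rpow_le_rpow (neg_nonneg.2 hp) (by linarith : -p ≤ -q) (by linarith : 0 ≤ s+1)
        linarith
      · rw [e1, e2]; linarith [hb]
    · -- q < 0 < p
      have e1 : |p| ^ s * p = p ^ (s + 1) := by rw [_root_.abs_of_pos hp, rpow_succ' hs hp.le]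
      have e2 : |q| ^ s * q = -((-q) ^ (s + 1)) := by
        rw [_root_.abs_of_neg hq, show (-q)^s * q = -((-q)^s * (-q)) by ring, rpow_succ' hs (by linarith)]
      have hp1 : 0 ≤ p ^ (s+1) := Real.rpow_nonneg hp.le _
      have hq1 : 0 ≤ (-q) ^ (s+1) := Real.rpow_nonneg (by linarith) _
      constructor
      · rw [e1, e2]; linarith
      · rw [e1, e2]
        set M := max |p| |q| with hM
        have hMp : p ≤ M := le_max_of_le_left (le_abs_self p)
        have hMq : -q ≤ M := le_max_of_le_right (neg_le_abs q)
        have hM0 : 0 ≤ M := hp.le.trans hMp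
        have b1 : p ^ (s+1) ≤ M ^ s * p := by
          rw [← rpow_succ' hs hp.le]
          exact mul_le_mul_of_nonneg_right (Real.rpow_le_rpow hp.le hMp hs) hp.le
        have b2 : (-q) ^ (s+1) ≤ M ^ s * (-q) := by
          rw [← rpow_succ' hs (by linarith : (0:ℝ) ≤ -q)]
          exact mul_le_mul_of_nonneg_right (Real.rpow_le_rpow (by linarith) hMq hs) (by linarith)
        have hMs : 0 ≤ M ^ s := Real.rpow_nonneg hM0 _
        have hone : (1:ℝ) * (M ^ s * (p - q)) ≤ (s+1) * (M ^ s * (p - q)) := by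
          apply mul_le_mul_of_nonneg_right (by linarith) (by nlinarith)
        calc p ^ (s+1) - -((-q)^(s+1)) ≤ M ^ s * p + M ^ s * (-q) := by linarith
          _ = 1 * (M ^ s * (p - q)) := by ring
          _ ≤ (s+1) * (M ^ s * (p-q)) := hone
          _ = (s+1) * M ^ s * (p-q) := by ring

lemma key_sym {s a b : ℝ} (hs : 0 ≤ s) (hba : |b| ≤ |a|) :
    |(|a + b| ^ (s + 1) - |a| ^ (s + 1) - |b| ^ (s + 1))| ≤
        ((s + 1) * 2 ^ s + 1) * (|b| * |a| ^ s) ∧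
    |(|a + b| ^ s * (a + b) - |a| ^ s * a - |b| ^ s * b)| ≤
        ((s + 1) * 2 ^ s + 1) * (|b| * |a| ^ s) := by
  set x := |a| with hxdef
  set y := |b| with hydef
  set z := |a + b| with hzdef
  have hx0 : 0 ≤ x := abs_nonneg a
  have hy0 : 0 ≤ y := abs_nonneg b
  have hz0 : 0 ≤ z := abs_nonneg _
  have hz1 : z ≤ x + y := abs_add_le a b
  have hz2 : x - z ≤ y := by
    have := abs_sub_abs_le_abs_sub a (a + b)
    simp only [← hxdef, ← hzdef] at this
    calc x - z ≤ |a - (a + b)| := this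
      _ = y := by rw [show a - (a + b) = -b by ring, abs_neg]
  have h2x : (2 * x) ^ s = 2 ^ s * x ^ s := Real.mul_rpow (by norm_num) hx0
  have hxs : 0 ≤ x ^ s := Real.rpow_nonneg hx0 _
  have h2xs : x ^ s ≤ (2 * x) ^ s := Real.rpow_le_rpow hx0 (by linarith) hs
  have hzx : z ^ s ≤ (2 * x) ^ s := Real.rpow_le_rpow hz0 (by linarith) hs
  have h2xs0 : 0 ≤ (2 * x) ^ s := Real.rpow_nonneg (by linarith) _
  have hys : y ^ s ≤ x ^ s := Real.rpow_le_rpow hy0 hba hs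
  have hyy : y ^ (s + 1) ≤ y * x ^ s := by
    rw [← rpow_succ' hs hy0]
    nlinarith [Real.rpow_nonneg hy0 s]
  -- the first-order difference bound
  have h1 : |z ^ (s + 1) - x ^ (s + 1)| ≤ (s + 1) * (2 * x) ^ s * y := by
    rw [abs_le]
    rcases le_total z x with h | h
    · have hb := bern_aux hs hz0 h
      constructor
      · nlinarith [mul_le_mul_of_nonneg_left h2xs (by linarith : (0:ℝ) ≤ s + 1),
          mul_le_mul_of_nonneg_left hz2 (mul_nonneg (by linarith : (0:ℝ) ≤ s+1) hxs)]
      · nlinarith [Real.rpow_le_rpow hz0 h (by linarith : (0:ℝ) ≤ s + 1),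
          mul_nonneg (mul_nonneg (by linarith : (0:ℝ) ≤ s+1) h2xs0) hy0]
    · have hb := bern_aux hs hx0 h
      constructor
      · nlinarith [Real.rpow_le_rpow hx0 h (by linarith : (0:ℝ) ≤ s + 1),
          mul_nonneg (mul_nonneg (by linarith : (0:ℝ) ≤ s+1) h2xs0) hy0]
      · nlinarith [mul_le_mul_of_nonneg_left hzx (by linarith : (0:ℝ) ≤ s + 1),
          mul_le_mul_of_nonneg_left (by linarith : z - x ≤ y)
            (mul_nonneg (by linarith : (0:ℝ) ≤ s+1) h2xs0),
          mul_le_mul_of_nonneg_right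
            (mul_le_mul_of_nonneg_left hzx (by linarith : (0:ℝ) ≤ s + 1)) (by linarith : 0 ≤ z - x)]
  constructor
  · -- part 1
    have hyp : 0 ≤ y ^ (s + 1) := Real.rpow_nonneg hy0 _
    have : |z ^ (s + 1) - x ^ (s + 1) - y ^ (s + 1)| ≤
        |z ^ (s + 1) - x ^ (s + 1)| + y ^ (s + 1) := by
      calc |z ^ (s + 1) - x ^ (s + 1) - y ^ (s + 1)|
          ≤ |z ^ (s + 1) - x ^ (s + 1)| + |y ^ (s + 1)| := abs_sub _ _
        _ = _ := by rw [_root_.abs_of_nonneg hyp]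
    rw [h2x] at h1
    calc |z ^ (s + 1) - x ^ (s + 1) - y ^ (s + 1)|
        ≤ (s + 1) * (2 ^ s * x ^ s) * y + y * x ^ s := by linarith
      _ = ((s + 1) * 2 ^ s + 1) * (y * x ^ s) := by ring
  · -- part 2
    have hM : max |a + b| |a| ≤ 2 * x := by
      apply max_le (by linarith) (by linarith)
    have hM0 : 0 ≤ max |a + b| |a| := le_trans hz0 (le_max_left _ _)
    have hMs : (max |a + b| |a|) ^ s ≤ (2 * x) ^ s := Real.rpow_le_rpow hM0 hM hs
    have hg : |(|a + b| ^ s * (a + b) - |a| ^ s * a)| ≤ (s + 1) * (2 * x) ^ s * y := by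
      rcases le_total a (a + b) with h | h
      · obtain ⟨hpos, hub⟩ := gmono hs h
        rw [_root_.abs_of_nonneg hpos]
        have hb' : a + b - a = b := by ring
        have hby : b ≤ y := le_abs_self b
        have hb0 : 0 ≤ b := by linarith
        calc |a + b| ^ s * (a + b) - |a| ^ s * a
            ≤ (s + 1) * (max |a + b| |a|) ^ s * (a + b - a) := hub
          _ ≤ (s + 1) * (2 * x) ^ s * y := by
              rw [hb']
              have hl : (s + 1) * (max |a + b| |a|) ^ s ≤ (s + 1) * (2 * x) ^ s :=
                mul_le_mul_of_nonneg_left hMs (by linarith)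
              exact mul_le_mul hl hby hb0 (mul_nonneg (by linarith) h2xs0)
      · obtain ⟨hpos, hub⟩ := gmono hs h
        rw [show |a + b| ^ s * (a + b) - |a| ^ s * a
            = -(|a| ^ s * a - |a + b| ^ s * (a + b)) by ring, abs_neg, _root_.abs_of_nonneg hpos]
        have hb' : a - (a + b) = -b := by ring
        have hby : -b ≤ y := neg_le_abs b
        have hb0 : 0 ≤ -b := by linarith
        have hM' : max |a| |a + b| ≤ 2 * x := max_le (by linarith) (by linarith)
        have hM0' : 0 ≤ max |a| |a + b| := le_trans hx0 (le_max_left _ _)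
        have hMs' : (max |a| |a + b|) ^ s ≤ (2 * x) ^ s := Real.rpow_le_rpow hM0' hM' hs
        calc |a| ^ s * a - |a + b| ^ s * (a + b)
            ≤ (s + 1) * (max |a| |a + b|) ^ s * (a - (a + b)) := hub
          _ ≤ (s + 1) * (2 * x) ^ s * y := by
              rw [hb']
              have hl : (s + 1) * (max |a| |a + b|) ^ s ≤ (s + 1) * (2 * x) ^ s :=
                mul_le_mul_of_nonneg_left hMs' (by linarith)
              exact mul_le_mul hl hby hb0 (mul_nonneg (by linarith) h2xs0)
    have hgb : |(|b| ^ s * b)| ≤ y * x ^ s := by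
      rw [abs_mul, _root_.abs_of_nonneg (Real.rpow_nonneg hy0 s)]
      calc y ^ s * y ≤ x ^ s * y := mul_le_mul_of_nonneg_right hys hy0
        _ = y * x ^ s := by ring
    have habs : |(|a + b| ^ s * (a + b) - |a| ^ s * a - |b| ^ s * b)| ≤
        |(|a + b| ^ s * (a + b) - |a| ^ s * a)| + |(|b| ^ s * b)| := abs_sub _ _
    rw [h2x] at hg
    calc |(|a + b| ^ s * (a + b) - |a| ^ s * a - |b| ^ s * b)|
        ≤ (s + 1) * (2 ^ s * x ^ s) * y + y * x ^ s := by linarith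
      _ = ((s + 1) * 2 ^ s + 1) * (y * x ^ s) := by ring

lemma key_full {s : ℝ} (hs : 0 ≤ s) (a b : ℝ) :
    |(|a + b| ^ (s + 1) - |a| ^ (s + 1) - |b| ^ (s + 1))| ≤
        ((s + 1) * 2 ^ s + 1) * (|b| * |a| ^ s + |a| * |b| ^ s) ∧
    |(|a + b| ^ s * (a + b) - |a| ^ s * a - |b| ^ s * b)| ≤
        ((s + 1) * 2 ^ s + 1) * (|b| * |a| ^ s + |a| * |b| ^ s) := by
  have hC : (0:ℝ) ≤ (s + 1) * 2 ^ s + 1 := by positivity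
  have h1 : 0 ≤ |b| * |a| ^ s := mul_nonneg (abs_nonneg b) (Real.rpow_nonneg (abs_nonneg a) s)
  have h2 : 0 ≤ |a| * |b| ^ s := mul_nonneg (abs_nonneg a) (Real.rpow_nonneg (abs_nonneg b) s)
  rcases le_total |b| |a| with h | h
  · obtain ⟨p1, p2⟩ := key_sym hs h
    exact ⟨p1.trans (by nlinarith), p2.trans (by nlinarith)⟩
  · obtain ⟨p1, p2⟩ := key_sym hs h
    rw [add_comm b a] at p1 p2
    rw [show |a + b| ^ (s+1) - |b| ^ (s+1) - |a| ^ (s+1)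
        = |a + b| ^ (s+1) - |a| ^ (s+1) - |b| ^ (s+1) by ring] at p1
    rw [show |a + b| ^ s * (a + b) - |b| ^ s * b - |a| ^ s * a
        = |a + b| ^ s * (a + b) - |a| ^ s * a - |b| ^ s * b by ring] at p2
    exact ⟨p1.trans (by nlinarith), p2.trans (by nlinarith)⟩


/-- first-order symbol estimates for `|ξ|^{s+1}` and `|ξ|^s ξ`. -/
theorem statement4 (s₀ s : ℝ) (hs₀ : 3 / 2 < s₀) (hs : 0 ≤ s) :
    ∃ C > (0 : ℝ), ∀ ξ η : ℤ,
      |(|(ξ : ℝ)| ^ (s + 1) - |(ξ : ℝ) - (η : ℝ)| ^ (s + 1) - |(η : ℝ)| ^ (s + 1))| ≤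
          C * (|(η : ℝ)| * |(ξ : ℝ) - (η : ℝ)| ^ s + |(ξ : ℝ) - (η : ℝ)| * |(η : ℝ)| ^ s) ∧
      |(|(ξ : ℝ)| ^ s * (ξ : ℝ) - |(ξ : ℝ) - (η : ℝ)| ^ s * ((ξ : ℝ) - (η : ℝ))
            - |(η : ℝ)| ^ s * (η : ℝ))| ≤
          C * (|(η : ℝ)| * |(ξ : ℝ) - (η : ℝ)| ^ s + |(ξ : ℝ) - (η : ℝ)| * |(η : ℝ)| ^ s) := by
  refine ⟨(s + 1) * 2 ^ s + 1, by positivity, fun ξ η => ?_⟩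
  have h := key_full hs ((ξ : ℝ) - (η : ℝ)) (η : ℝ)
  rw [show ((ξ : ℝ) - (η : ℝ)) + (η : ℝ) = (ξ : ℝ) by ring] at h
  exact h

end
end

section
/- For sufficiently smooth real-valued functions f, g, h on 𝕋, the following identity holds: ∫ (H∂_x⁴f) g h dx + ∫ f (H∂_x⁴g) h dx + ∫ f g (H∂_x⁴h) dx = −∫ ([H,h]∂_x⁴f) g dx − ∫ ([H,f]∂_x⁴h) g dx + 4∫ (∂_x³f)(Hg)(∂_x h) dx − 4∫ (∂_x f)(H∂_x g)(∂_x² h) dx + 2∫ (∂_x²f)(Hg)(∂_x² h) dx, where H is the Hilbert transform and [A,B] = AB − BA. -/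
open MeasureTheory Real Complex AddCircle
open scoped BigOperators ENNReal

noncomputable section

namespace Statement5Aux

lemma cont_integrable {E : Type*} [NormedAddCommGroup E] {u : Torus → E} (hu : Continuous u) :
    Integrable u (haarAddCircle : Measure Torus) :=
  hu.integrable_of_hasCompactSupport (HasCompactSupport.of_compactSpace u)

lemma norm_fc_le {u : Torus → ℂ} (n : ℤ) :
    ‖fourierCoeff u n‖ ≤ ∫ x : Torus, ‖u x‖ ∂haarAddCircle := by
  rw [fourierCoeff]
  refine le_trans (norm_integral_le_integral_norm _) (le_of_eq ?_)
  refine integral_congr_ae (Filter.Eventually.of_forall fun x => ?_)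
  show ‖fourier (-n) x • u x‖ = ‖u x‖
  rw [norm_smul]
  have : ‖fourier (-n) x‖ = 1 := Circle.norm_coe _
  rw [this, one_mul]

lemma hasSum_pairing {u P : Torus → ℂ} (hu : Continuous u) (hP : Continuous P)
    (hsu : Summable fun n => ‖fourierCoeff u n‖) :
    HasSum (fun m => fourierCoeff u m * fourierCoeff P (-m))
      (∫ x : Torus, u x * P x ∂haarAddCircle) := by
  have hinv : ∀ x : Torus, HasSum (fun m : ℤ => fourierCoeff u m • fourier m x) (u x) := by
    intro x
    have := has_pointwise_sum_fourier_series_of_summable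
      (f := (⟨u, hu⟩ : C(Torus, ℂ))) hsu.of_norm x
    simpa using this
  have key := hasSum_integral_of_summable_integral_norm
      (F := fun (m : ℤ) (x : Torus) => (fourierCoeff u m • fourier m x) * P x)
      (μ := (haarAddCircle : Measure Torus))
      (fun m => cont_integrable ((((continuous_const (y := fourierCoeff u m)).smul (map_continuous (fourier m)))).mul hP))
      ?_
  · have h1 : (fun m : ℤ => ∫ x : Torus, (fourierCoeff u m • fourier m x) * P x ∂haarAddCircle)
        = fun m => fourierCoeff u m * fourierCoeff P (-m) := by
      funext m
      have h2 : fourierCoeff P (-m) = ∫ x : Torus, fourier m x * P x ∂haarAddCircle := by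
        simp [fourierCoeff, smul_eq_mul]
      rw [h2, ← integral_const_mul]
      refine integral_congr_ae (Filter.Eventually.of_forall fun x => ?_)
      show (fourierCoeff u m • fourier m x) * P x = fourierCoeff u m * (fourier m x * P x)
      rw [smul_eq_mul]; ring
    have h3 : (∫ x : Torus, (∑' m : ℤ, (fourierCoeff u m • fourier m x) * P x) ∂haarAddCircle)
        = ∫ x : Torus, u x * P x ∂haarAddCircle := by
      refine integral_congr_ae (Filter.Eventually.of_forall fun x => ?_)
      exact ((hinv x).mul_right (P x)).tsum_eq
    rw [h1, h3] at key
    exact key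
  · have h4 : (fun m : ℤ => ∫ x : Torus, ‖(fourierCoeff u m • fourier m x) * P x‖ ∂haarAddCircle)
        = fun m => ‖fourierCoeff u m‖ * ∫ x : Torus, ‖P x‖ ∂haarAddCircle := by
      funext m
      rw [← integral_const_mul]
      refine integral_congr_ae (Filter.Eventually.of_forall fun x => ?_)
      show ‖(fourierCoeff u m • fourier m x) * P x‖ = ‖fourierCoeff u m‖ * ‖P x‖
      rw [norm_mul, norm_smul]
      have : ‖fourier m x‖ = 1 := Circle.norm_coe _
      rw [this, mul_one]
    rw [h4]
    exact hsu.mul_right _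

lemma fourierCoeff_mul_expand {v w : Torus → ℂ} (hv : Continuous v) (hw : Continuous w)
    (hsv : Summable fun n => ‖fourierCoeff v n‖) (n : ℤ) :
    fourierCoeff (fun x => v x * w x) n
      = ∑' k : ℤ, fourierCoeff v k * fourierCoeff w (n - k) := by
  have hP : Continuous fun x : Torus => fourier (-n) x * w x :=
    (map_continuous (fourier (-n))).mul hw
  have h1 := hasSum_pairing hv hP hsv
  have h2 : ∀ m : ℤ, fourierCoeff (fun x : Torus => fourier (-n) x * w x) (-m)
      = fourierCoeff w (n - m) := by
    intro m
    simp only [fourierCoeff, smul_eq_mul, neg_neg]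
    refine integral_congr_ae (Filter.Eventually.of_forall fun x => ?_)
    show fourier m x * (fourier (-n) x * w x) = fourier (-(n - m)) x * w x
    rw [← mul_assoc, ← fourier_add, show m + -n = -(n - m) by ring]
  have h3 : fourierCoeff (fun x => v x * w x) n
      = ∫ x : Torus, v x * (fourier (-n) x * w x) ∂haarAddCircle := by
    simp only [fourierCoeff, smul_eq_mul]
    exact integral_congr_ae (Filter.Eventually.of_forall fun x => by ring)
  rw [h3, ← h1.tsum_eq]
  exact tsum_congr fun m => by rw [h2 m]

lemma hasSum_master {u v w P : Torus → ℂ} {σ : ℤ → ℂ}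
    (hu : Continuous u) (hv : Continuous v) (hw : Continuous w) (hP : Continuous P)
    (hsu : Summable fun n => ‖fourierCoeff u n‖)
    (hsv : Summable fun n => ‖fourierCoeff v n‖)
    (hσ : ∀ n, ‖σ n‖ ≤ 1)
    (hPF : ∀ n : ℤ, fourierCoeff P n = σ n * fourierCoeff (fun x => v x * w x) n) :
    HasSum (fun p : ℤ × ℤ =>
        σ (-p.1) * (fourierCoeff u p.1 * (fourierCoeff v p.2 * fourierCoeff w (-p.1 - p.2))))
      (∫ x : Torus, u x * P x ∂haarAddCircle) := by
  set C := ∫ x : Torus, ‖w x‖ ∂haarAddCircle with hC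
  have hC0 : 0 ≤ C := integral_nonneg fun x => norm_nonneg _
  have hsum : Summable (fun p : ℤ × ℤ =>
      σ (-p.1) * (fourierCoeff u p.1 * (fourierCoeff v p.2 * fourierCoeff w (-p.1 - p.2)))) := by
    refine Summable.of_norm_bounded
      (g := fun p : ℤ × ℤ => ‖fourierCoeff u p.1‖ * (‖fourierCoeff v p.2‖ * C)) ?_ ?_
    · exact hsu.mul_of_nonneg (hsv.mul_right C) (fun _ => norm_nonneg _)
        (fun k => mul_nonneg (norm_nonneg _) hC0)
    · intro p
      rw [norm_mul, norm_mul, norm_mul]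
      calc ‖σ (-p.1)‖ * (‖fourierCoeff u p.1‖ * (‖fourierCoeff v p.2‖ * ‖fourierCoeff w (-p.1 - p.2)‖))
          ≤ 1 * (‖fourierCoeff u p.1‖ * (‖fourierCoeff v p.2‖ * C)) := by
            refine mul_le_mul (hσ _) ?_ (by positivity) zero_le_one
            refine mul_le_mul_of_nonneg_left ?_ (norm_nonneg _)
            exact mul_le_mul_of_nonneg_left (norm_fc_le _) (norm_nonneg _)
        _ = ‖fourierCoeff u p.1‖ * (‖fourierCoeff v p.2‖ * C) := one_mul _
  have hval : (∑' p : ℤ × ℤ,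
      σ (-p.1) * (fourierCoeff u p.1 * (fourierCoeff v p.2 * fourierCoeff w (-p.1 - p.2))))
      = ∫ x : Torus, u x * P x ∂haarAddCircle := by
    rw [Summable.tsum_prod hsum]
    have hp := hasSum_pairing hu hP hsu
    rw [← hp.tsum_eq]
    refine tsum_congr fun m => ?_
    rw [hPF (-m), fourierCoeff_mul_expand hv hw hsv (-m), ← tsum_mul_left, ← tsum_mul_left]
    refine tsum_congr fun k => ?_
    rw [show -m - k = (-m : ℤ) - k by ring]
    ring
  exact hval ▸ hsum.hasSum

lemma hasSum_tri {u v w : Torus → ℂ}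
    (hu : Continuous u) (hv : Continuous v) (hw : Continuous w)
    (hsu : Summable fun n => ‖fourierCoeff u n‖)
    (hsv : Summable fun n => ‖fourierCoeff v n‖) :
    HasSum (fun p : ℤ × ℤ =>
        fourierCoeff u p.1 * (fourierCoeff v p.2 * fourierCoeff w (-p.1 - p.2)))
      (∫ x : Torus, u x * (v x * w x) ∂haarAddCircle) := by
  have := hasSum_master (σ := fun _ => 1) hu hv hw (hv.mul hw) hsu hsv
    (fun _ => by norm_num) (fun n => (one_mul _).symm)
  simpa using this

lemma symH_norm_le (n : ℤ) : ‖symH n‖ ≤ 1 := by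
  have : n.sign = -1 ∨ n.sign = 0 ∨ n.sign = 1 := by
    rcases n with (_ | k) | k
    · right; left; rfl
    · right; right; rfl
    · left; rfl
  rcases this with h | h | h <;> simp [symH, h]

lemma symH_neg (n : ℤ) : symH (-n) = -symH n := by
  unfold symH
  rw [Int.sign_neg n]
  push_cast
  ring

/-- reindexing `(a, b) ↦ (b, c)` with `c = -a-b`. -/
def e1 : ℤ × ℤ ≃ ℤ × ℤ where
  toFun p := (p.2, -p.1 - p.2)
  invFun q := (-q.1 - q.2, q.1)
  left_inv p := by
    obtain ⟨a, b⟩ := p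
    exact Prod.ext (by show -b - (-a - b) = a; ring) rfl
  right_inv q := by
    obtain ⟨x, y⟩ := q
    exact Prod.ext rfl (by show -(-x - y) - x = y; ring)

lemma hasSum_congr_pt {f g : ℤ × ℤ → ℂ} {a : ℂ} (h : HasSum f a) (hfg : ∀ p, f p = g p) :
    HasSum g a := (funext hfg : f = g) ▸ h

lemma norm_symDx (n : ℤ) : ‖symDx n‖ = |(n : ℝ)| := by
  unfold symDx
  rw [norm_mul, Complex.norm_I, one_mul]
  rw [show ((n : ℤ) : ℂ) = ((n : ℝ) : ℂ) by push_cast; ring, Complex.norm_real, Real.norm_eq_abs]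

lemma norm_symDx_pow (n : ℤ) (k : ℕ) : ‖symDx n ^ k‖ = |(n : ℝ)| ^ k := by
  rw [norm_pow, norm_symDx]

lemma summable_fc_symbol {f φ : Torus → ℝ} (hfs : SmoothFC f) (k : ℕ) {σ : ℤ → ℂ}
    (hφ : ∀ n, FC φ n = σ n * FC f n) (hσ : ∀ n, ‖σ n‖ ≤ |(n : ℝ)| ^ k) :
    Summable fun n => ‖FC φ n‖ := by
  refine Summable.of_nonneg_of_le (fun _ => norm_nonneg _) (fun n => ?_) (hfs k)
  rw [hφ n, norm_mul]
  exact mul_le_mul_of_nonneg_right (hσ n) (norm_nonneg _)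

lemma hasSum_tri_real {u v w : Torus → ℝ}
    (hu : Continuous u) (hv : Continuous v) (hw : Continuous w)
    (hsu : Summable fun n => ‖FC u n‖) (hsv : Summable fun n => ‖FC v n‖) :
    HasSum (fun p : ℤ × ℤ => FC u p.1 * (FC v p.2 * FC w (-p.1 - p.2)))
      (∫ x : Torus, (u x : ℂ) * ((v x : ℂ) * (w x : ℂ)) ∂haarAddCircle) :=
  hasSum_tri (Complex.continuous_ofReal.comp hu) (Complex.continuous_ofReal.comp hv)
    (Complex.continuous_ofReal.comp hw) hsu hsv

lemma hasSum_master_real {u v w P : Torus → ℝ} {σ : ℤ → ℂ}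
    (hu : Continuous u) (hv : Continuous v) (hw : Continuous w) (hP : Continuous P)
    (hsu : Summable fun n => ‖FC u n‖) (hsv : Summable fun n => ‖FC v n‖)
    (hσ : ∀ n, ‖σ n‖ ≤ 1)
    (hPF : ∀ n : ℤ, FC P n = σ n * FC (fun x => v x * w x) n) :
    HasSum (fun p : ℤ × ℤ => σ (-p.1) * (FC u p.1 * (FC v p.2 * FC w (-p.1 - p.2))))
      (∫ x : Torus, (u x : ℂ) * (P x : ℂ) ∂haarAddCircle) := by
  refine hasSum_master (Complex.continuous_ofReal.comp hu) (Complex.continuous_ofReal.comp hv)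
    (Complex.continuous_ofReal.comp hw) (Complex.continuous_ofReal.comp hP) hsu hsv hσ
    (fun n => ?_)
  rw [show (fourierCoeff (fun x : Torus => ((P x : ℝ) : ℂ)) n) = FC P n from rfl, hPF n]
  congr 1
  exact congrArg (fun F : Torus → ℂ => fourierCoeff F n)
    (funext fun x => by push_cast; ring)

lemma inn3_complex (u v w : Torus → ℝ) :
    ((inn3 u v w : ℝ) : ℂ)
      = ∫ x : Torus, (u x : ℂ) * ((v x : ℂ) * (w x : ℂ)) ∂haarAddCircle := by
  unfold inn3
  rw [show ((∫ x : Torus, u x * v x * w x ∂haarAddCircle : ℝ) : ℂ)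
      = ∫ x : Torus, ((u x * v x * w x : ℝ) : ℂ) ∂haarAddCircle from (integral_ofReal).symm]
  refine integral_congr_ae (Filter.Eventually.of_forall fun x => ?_)
  push_cast
  ring

end Statement5Aux

/-- trilinear integration by parts identity for `H∂ₓ⁴`. -/
theorem statement5 (f g h f1 f2 f3 f4 h1 h2 h4 Hf4 Hg Hg1 Hg4 Hh4 Hhf4 Hfh4 : Torus → ℝ)
    (hfc : Continuous f) (hfs : SmoothFC f)
    (hgc : Continuous g) (hgs : SmoothFC g)
    (hhc : Continuous h) (hhs : SmoothFC h)
    (hf1c : Continuous f1) (hf1 : HasSymbol symDx f f1)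
    (hf2c : Continuous f2) (hf2 : HasSymbol symDx f1 f2)
    (hf3c : Continuous f3) (hf3 : HasSymbol symDx f2 f3)
    (hf4c : Continuous f4) (hf4 : HasSymbol symDx f3 f4)
    (hh1c : Continuous h1) (hh1 : HasSymbol symDx h h1)
    (hh2c : Continuous h2) (hh2 : HasSymbol symDx h1 h2)
    (hh4c : Continuous h4) (hh4 : HasSymbol (fun n => symDx n ^ 4) h h4)
    (hHf4c : Continuous Hf4) (hHf4 : HasSymbol symH f4 Hf4)
    (hHgc : Continuous Hg) (hHg : HasSymbol symH g Hg)
    (hHg1c : Continuous Hg1) (hHg1 : HasSymbol (fun n => symH n * symDx n) g Hg1)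
    (hHg4c : Continuous Hg4) (hHg4 : HasSymbol (fun n => symH n * symDx n ^ 4) g Hg4)
    (hHh4c : Continuous Hh4) (hHh4 : HasSymbol symH h4 Hh4)
    (hHhf4c : Continuous Hhf4) (hHhf4 : HasSymbol symH (fun x => h x * f4 x) Hhf4)
    (hHfh4c : Continuous Hfh4) (hHfh4 : HasSymbol symH (fun x => f x * h4 x) Hfh4) :
    inn3 Hf4 g h + inn3 f Hg4 h + inn3 f g Hh4 =
      -(inn (fun x => Hhf4 x - h x * Hf4 x) g)
        - inn (fun x => Hfh4 x - f x * Hh4 x) g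
        + 4 * inn3 f3 Hg h1 - 4 * inn3 f1 Hg1 h2 + 2 * inn3 f2 Hg h2 := by
  classical
  open Statement5Aux in
  -- clean symbol formulas
  have hF1 : ∀ n, FC f1 n = symDx n * FC f n := fun n => hf1 n
  have hF2 : ∀ n, FC f2 n = symDx n ^ 2 * FC f n := fun n => by
    rw [hf2 n, hF1 n]; ring
  have hF3 : ∀ n, FC f3 n = symDx n ^ 3 * FC f n := fun n => by
    rw [hf3 n, hF2 n]; ring
  have hF4 : ∀ n, FC f4 n = symDx n ^ 4 * FC f n := fun n => by
    rw [hf4 n, hF3 n]; ring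
  have hHF4 : ∀ n, FC Hf4 n = symH n * (symDx n ^ 4 * FC f n) := fun n => by
    rw [hHf4 n, hF4 n]
  have hH1' : ∀ n, FC h1 n = symDx n * FC h n := fun n => hh1 n
  have hH2' : ∀ n, FC h2 n = symDx n ^ 2 * FC h n := fun n => by
    rw [hh2 n, hH1' n]; ring
  have hH4' : ∀ n, FC h4 n = symDx n ^ 4 * FC h n := fun n => by
    have := hh4 n; simpa [symDx] using this
  have hHH4 : ∀ n, FC Hh4 n = symH n * (symDx n ^ 4 * FC h n) := fun n => by
    rw [hHh4 n, hH4' n]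
  have hHG : ∀ n, FC Hg n = symH n * FC g n := fun n => hHg n
  have hHG1 : ∀ n, FC Hg1 n = (symH n * symDx n) * FC g n := fun n => hHg1 n
  have hHG4 : ∀ n, FC Hg4 n = (symH n * symDx n ^ 4) * FC g n := fun n => hHg4 n
  -- summability facts
  have sF0 : Summable fun n => ‖FC f n‖ :=
    summable_fc_symbol hfs 0 (σ := fun _ => (1 : ℂ)) (fun n => (one_mul _).symm)
      (fun n => by simp)
  have sG0 : Summable fun n => ‖FC g n‖ :=
    summable_fc_symbol hgs 0 (σ := fun _ => (1 : ℂ)) (fun n => (one_mul _).symm)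
      (fun n => by simp)
  have sH0 : Summable fun n => ‖FC h n‖ :=
    summable_fc_symbol hhs 0 (σ := fun _ => (1 : ℂ)) (fun n => (one_mul _).symm)
      (fun n => by simp)
  have sHf4 : Summable fun n => ‖FC Hf4 n‖ :=
    summable_fc_symbol hfs 4 (σ := fun n => symH n * symDx n ^ 4)
      (fun n => by rw [hHF4 n]; ring) (fun n => by
        rw [norm_mul, norm_symDx_pow]
        exact mul_le_of_le_one_left (by positivity) (symH_norm_le n))
  have sHg4 : Summable fun n => ‖FC Hg4 n‖ :=
    summable_fc_symbol hgs 4 (σ := fun n => symH n * symDx n ^ 4)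
      (fun n => hHG4 n) (fun n => by
        rw [norm_mul, norm_symDx_pow]
        exact mul_le_of_le_one_left (by positivity) (symH_norm_le n))
  have sHg : Summable fun n => ‖FC Hg n‖ :=
    summable_fc_symbol hgs 0 (σ := symH) (fun n => hHG n)
      (fun n => by simpa using symH_norm_le n)
  have sHg1 : Summable fun n => ‖FC Hg1 n‖ :=
    summable_fc_symbol hgs 1 (σ := fun n => symH n * symDx n)
      (fun n => hHG1 n) (fun n => by
        rw [norm_mul, norm_symDx]
        simpa using mul_le_of_le_one_left (abs_nonneg _) (symH_norm_le n))
  have sF1 : Summable fun n => ‖FC f1 n‖ :=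
    summable_fc_symbol hfs 1 (σ := symDx) (fun n => hF1 n)
      (fun n => by simpa using (norm_symDx n).le)
  have sF2 : Summable fun n => ‖FC f2 n‖ :=
    summable_fc_symbol hfs 2 (σ := fun n => symDx n ^ 2) (fun n => hF2 n)
      (fun n => (norm_symDx_pow n 2).le)
  have sF3 : Summable fun n => ‖FC f3 n‖ :=
    summable_fc_symbol hfs 3 (σ := fun n => symDx n ^ 3) (fun n => hF3 n)
      (fun n => (norm_symDx_pow n 3).le)
  -- the ten HasSum expansions
  have H1 := hasSum_tri_real hHf4c hgc hhc sHf4 sG0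
  have H2 := hasSum_tri_real hfc hHg4c hhc sF0 sHg4
  have H3 := hasSum_tri_real hfc hgc hHh4c sF0 sG0
  have H4 := hasSum_master_real (σ := symH) hgc hhc hf4c hHhf4c sG0 sH0 symH_norm_le
    (fun n => hHhf4 n)
  have H4' := e1.hasSum_iff.mpr H4
  have H5 := hasSum_tri_real hgc hhc hHf4c sG0 sH0
  have H5' := e1.hasSum_iff.mpr H5
  have H6 := hasSum_master_real (σ := symH) hgc hfc hh4c hHfh4c sG0 sF0 symH_norm_le
    (fun n => hHfh4 n)
  have H6' := (Equiv.prodComm ℤ ℤ).hasSum_iff.mpr H6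
  have H7 := hasSum_tri_real hgc hfc hHh4c sG0 sF0
  have H7' := (Equiv.prodComm ℤ ℤ).hasSum_iff.mpr H7
  have H8 := hasSum_tri_real hf3c hHgc hh1c sF3 sHg
  have H9 := hasSum_tri_real hf1c hHg1c hh2c sF1 sHg1
  have H10 := hasSum_tri_real hf2c hHgc hh2c sF2 sHg
  -- combine
  have hL := (H1.add H2).add H3
  have hR := (((((H4'.sub H5').neg).sub (H6'.sub H7')).add (H8.mul_left 4)).sub
      (H9.mul_left 4)).add (H10.mul_left 2)
  have hSC := hL.unique (hasSum_congr_pt hR ?hkey)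
  case hkey =>
    intro p
    obtain ⟨a, b⟩ := p
    simp only [e1, Equiv.coe_fn_mk, Function.comp_apply, Equiv.prodComm_apply,
      Prod.swap_prod_mk, Pi.sub_apply, Pi.add_apply, Pi.neg_apply]
    rw [show (-b - (-a - b) : ℤ) = a by ring, show (-b - a : ℤ) = -a - b by ring]
    rw [symH_neg b]
    rw [hHF4 a, hHG4 b, hHH4 (-a - b), hF4 a, hH4' (-a - b), hHG b, hHG1 b,
      hF3 a, hF1 a, hF2 a, hH1' (-a - b), hH2' (-a - b)]
    simp only [symDx]
    push_cast
    ring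
  -- translate back to real integrals
  have ig : Continuous fun x : Torus => (g x : ℂ) := Complex.continuous_ofReal.comp hgc
  have ih : Continuous fun x : Torus => (h x : ℂ) := Complex.continuous_ofReal.comp hhc
  have iff' : Continuous fun x : Torus => (f x : ℂ) := Complex.continuous_ofReal.comp hfc
  have iHhf4 : Continuous fun x : Torus => (Hhf4 x : ℂ) := Complex.continuous_ofReal.comp hHhf4c
  have iHfh4 : Continuous fun x : Torus => (Hfh4 x : ℂ) := Complex.continuous_ofReal.comp hHfh4c
  have iHf4 : Continuous fun x : Torus => (Hf4 x : ℂ) := Complex.continuous_ofReal.comp hHf4c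
  have iHh4 : Continuous fun x : Torus => (Hh4 x : ℂ) := Complex.continuous_ofReal.comp hHh4c
  have c4 : ((inn (fun x => Hhf4 x - h x * Hf4 x) g : ℝ) : ℂ)
      = (∫ x : Torus, (g x : ℂ) * (Hhf4 x : ℂ) ∂haarAddCircle)
        - ∫ x : Torus, (g x : ℂ) * ((h x : ℂ) * (Hf4 x : ℂ)) ∂haarAddCircle := by
    unfold inn
    rw [show ((∫ x : Torus, (Hhf4 x - h x * Hf4 x) * g x ∂haarAddCircle : ℝ) : ℂ)
        = ∫ x : Torus, (((Hhf4 x - h x * Hf4 x) * g x : ℝ) : ℂ) ∂haarAddCircle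
        from (integral_ofReal).symm]
    rw [← integral_sub (cont_integrable (ig.mul iHhf4) : Integrable (fun x : Torus => (g x : ℂ) * (Hhf4 x : ℂ)) haarAddCircle)
      (cont_integrable (ig.mul ((ih.mul iHf4))) : Integrable (fun x : Torus => (g x : ℂ) * ((h x : ℂ) * (Hf4 x : ℂ))) haarAddCircle)]
    refine integral_congr_ae (Filter.Eventually.of_forall fun x => ?_)
    push_cast
    ring
  have c6 : ((inn (fun x => Hfh4 x - f x * Hh4 x) g : ℝ) : ℂ)
      = (∫ x : Torus, (g x : ℂ) * (Hfh4 x : ℂ) ∂haarAddCircle)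
        - ∫ x : Torus, (g x : ℂ) * ((f x : ℂ) * (Hh4 x : ℂ)) ∂haarAddCircle := by
    unfold inn
    rw [show ((∫ x : Torus, (Hfh4 x - f x * Hh4 x) * g x ∂haarAddCircle : ℝ) : ℂ)
        = ∫ x : Torus, (((Hfh4 x - f x * Hh4 x) * g x : ℝ) : ℂ) ∂haarAddCircle
        from (integral_ofReal).symm]
    rw [← integral_sub (cont_integrable (ig.mul iHfh4) : Integrable (fun x : Torus => (g x : ℂ) * (Hfh4 x : ℂ)) haarAddCircle)
      (cont_integrable (ig.mul ((iff'.mul iHh4))) : Integrable (fun x : Torus => (g x : ℂ) * ((f x : ℂ) * (Hh4 x : ℂ))) haarAddCircle)]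
    refine integral_congr_ae (Filter.Eventually.of_forall fun x => ?_)
    push_cast
    ring
  rw [← @Complex.ofReal_inj]
  push_cast
  rw [inn3_complex Hf4 g h, inn3_complex f Hg4 h, inn3_complex f g Hh4,
    inn3_complex f3 Hg h1, inn3_complex f1 Hg1 h2, inn3_complex f2 Hg h2, c4, c6]
  linear_combination hSC

end
end

section
/- Let s ≥ 0, s₀ > 5/2. There exists C > 0 such that for all u ∈ H^{s₀}(𝕋) and w ∈ H^{s+2}(𝕋): |⟨u D^s∂_x²w, D^s w⟩ + ⟨u, (D^s∂_x w)²⟩| ≤ C‖u‖_{H^{s₀}}‖w‖_{H^s}², where ⟨·,·⟩ is the L² inner product and D = F^{-1}|ξ|F. -/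
open MeasureTheory Real Complex AddCircle
open scoped BigOperators ENNReal

noncomputable section

namespace S6

open scoped ComplexConjugate

lemma fourier_norm_one (n : ℤ) (x : Torus) : ‖(fourier n x : ℂ)‖ = 1 := by
  rw [fourier_apply, Circle.norm_coe]

lemma FC_neg (f : Torus → ℝ) (n : ℤ) : FC f (-n) = conj (FC f n) := by
  unfold FC fourierCoeff
  rw [← integral_conj]
  refine integral_congr_ae (Filter.Eventually.of_forall fun x => ?_)
  simp only [smul_eq_mul, map_mul, Complex.conj_ofReal, neg_neg, fourier_neg, Complex.conj_conj]

lemma norm_FC_neg (f : Torus → ℝ) (n : ℤ) : ‖FC f (-n)‖ = ‖FC f n‖ := by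
  rw [FC_neg]; exact RCLike.norm_conj _

lemma fourierCoeff_fourier_mul (m n : ℤ) (G : Torus → ℂ) :
    fourierCoeff (fun x => fourier m x * G x) n = fourierCoeff G (n - m) := by
  unfold fourierCoeff
  congr 1; funext x
  rw [smul_eq_mul, smul_eq_mul, ← mul_assoc, ← fourier_add]
  congr 2
  ring_nf

lemma parseval (F G : Torus → ℂ) (hF : MemLp F 2 (haarAddCircle : Measure Torus))
    (hG : MemLp G 2 (haarAddCircle : Measure Torus)) :
    ∫ x, conj (F x) * G x ∂(haarAddCircle : Measure Torus)
      = ∑' n : ℤ, conj (fourierCoeff F n) * fourierCoeff G n := by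
  have h0 : ∀ (H : Torus → ℂ) (hH : MemLp H 2 (haarAddCircle : Measure Torus)) (n : ℤ),
      fourierCoeff (hH.toLp H : Torus → ℂ) n = fourierCoeff H n := by
    intro H hH n
    apply integral_congr_ae
    filter_upwards [hH.coeFn_toLp] with x hx
    rw [hx]
  have h1 : (inner ℂ (hF.toLp F) (hG.toLp G) : ℂ)
      = ∫ x, conj (F x) * G x ∂(haarAddCircle : Measure Torus) := by
    rw [MeasureTheory.L2.inner_def]
    apply integral_congr_ae
    filter_upwards [hF.coeFn_toLp, hG.coeFn_toLp] with x hx hy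
    rw [RCLike.inner_apply', hx, hy]
  rw [← h1, ← fourierBasis.repr.inner_map_map (hF.toLp F) (hG.toLp G), lp.inner_eq_tsum]
  congr 1; funext n
  rw [RCLike.inner_apply', fourierBasis_repr, fourierBasis_repr, h0 F hF, h0 G hG]

/-- Cauchy–Schwarz summability. -/
lemma summable_mul_sq {f g : ℤ → ℝ} (hf0 : ∀ n, 0 ≤ f n) (hg0 : ∀ n, 0 ≤ g n)
    (hf : Summable (fun n => f n ^ 2)) (hg : Summable (fun n => g n ^ 2)) :
    Summable (fun n => f n * g n) := by
  apply Summable.of_nonneg_of_le (fun n => mul_nonneg (hf0 n) (hg0 n))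
    (fun n => ?_) ((hf.add hg).div_const 2)
  nlinarith [sq_nonneg (f n - g n)]

/-- Cauchy–Schwarz for tsum over ℤ with nonnegative terms. -/
lemma tsum_cs (f g : ℤ → ℝ) (hf0 : ∀ n, 0 ≤ f n) (hg0 : ∀ n, 0 ≤ g n)
    (hf : Summable (fun n => f n ^ 2)) (hg : Summable (fun n => g n ^ 2)) :
    ∑' n, f n * g n ≤ Real.sqrt (∑' n, f n ^ 2) * Real.sqrt (∑' n, g n ^ 2) := by
  refine Summable.tsum_le_of_sum_le (summable_mul_sq hf0 hg0 hf hg) fun s => ?_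
  refine (Real.sum_mul_le_sqrt_mul_sqrt s f g).trans ?_
  have h2 : (∑ n ∈ s, f n ^ 2) ≤ ∑' n, f n ^ 2 :=
    Summable.sum_le_tsum s (fun n _ => sq_nonneg _) hf
  have h3 : (∑ n ∈ s, g n ^ 2) ≤ ∑' n, g n ^ 2 :=
    Summable.sum_le_tsum s (fun n _ => sq_nonneg _) hg
  exact mul_le_mul (Real.sqrt_le_sqrt h2) (Real.sqrt_le_sqrt h3)
    (Real.sqrt_nonneg _) (Real.sqrt_nonneg _)

/-- Summability of `(1+n²)^t` for `t < -1/2`. -/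
lemma summable_rpow_int {t : ℝ} (ht : t < -(1/2)) :
    Summable (fun n : ℤ => (1 + (n : ℝ) ^ 2) ^ t) := by
  have h1 : Summable (fun n : ℤ => |(n : ℝ)| ^ (2 * t) + if n = 0 then (1:ℝ) else 0) := by
    apply Summable.add
    · have := Real.summable_abs_int_rpow (b := -(2*t)) (by linarith)
      simpa using this
    · apply summable_of_ne_finset_zero (s := {0})
      intro n hn
      simp only [Finset.mem_singleton] at hn
      simp [hn]
  apply Summable.of_nonneg_of_le (fun n => Real.rpow_nonneg (by positivity) _) (fun n => ?_) h1
  rcases eq_or_ne n 0 with h | h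
  · subst h
    simp [Real.one_rpow]
    exact Real.rpow_nonneg le_rfl _
  · have hn1 : (1:ℝ) ≤ (n:ℝ)^2 := by
      have h4 : (1:ℝ) ≤ |(n:ℝ)| := by
        rw [← Int.cast_abs]
        exact_mod_cast Int.one_le_abs (by exact_mod_cast h)
      rw [← _root_.sq_abs]
      nlinarith
    have h2 : (1 + (n:ℝ)^2) ^ t ≤ ((n:ℝ)^2) ^ t := by
      apply Real.rpow_le_rpow_of_nonpos (by linarith) (by linarith) (by linarith)
    have h3 : (((n:ℝ)^2 : ℝ)) ^ t = |(n:ℝ)| ^ (2*t) := by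
      rw [← _root_.sq_abs, ← Real.rpow_natCast |(n:ℝ)| 2, ← Real.rpow_mul (abs_nonneg _)]
      norm_num
    rw [h3] at h2
    exact h2.trans (le_add_of_nonneg_right (by positivity))

lemma cont_memℒp (f : Torus → ℝ) (hf : Continuous f) :
    MemLp (fun x => (f x : ℂ)) 2 (haarAddCircle : Measure Torus) := by
  have hc : Continuous (fun x : Torus => (f x : ℂ)) := Complex.continuous_ofReal.comp hf
  obtain ⟨C, hC⟩ := (isCompact_univ (X := Torus)).exists_bound_of_continuousOn hc.continuousOn
  exact MemLp.of_bound hc.aestronglyMeasurable C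
    (Filter.Eventually.of_forall fun x => hC x (Set.mem_univ x))

/-- Key expansion of the trilinear form via Fourier coefficients. -/
lemma expand (u f g : Torus → ℝ) (hu : Continuous u)
    (hSu : Summable (fun m : ℤ => ‖FC u m‖))
    (hf : MemLp (fun x => (f x : ℂ)) 2 (haarAddCircle : Measure Torus)) (hg : Continuous g) :
    (((∫ x : Torus, u x * f x * g x ∂haarAddCircle : ℝ)) : ℂ)
        = ∑' m : ℤ, FC u m * ∑' n : ℤ, FC f (-n - m) * FC g n
    ∧ Summable (fun m : ℤ => FC u m * ∑' n : ℤ, FC f (-n - m) * FC g n) := by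
  set μ : Measure Torus := haarAddCircle with hμ
  have hgC : Continuous (fun x : Torus => (g x : ℂ)) := Complex.continuous_ofReal.comp hg
  have hgm : MemLp (fun x => (g x : ℂ)) 2 μ := cont_memℒp g hg
  set h : Torus → ℂ := fun x => (f x : ℂ) * (g x : ℂ) with hh
  have hInt : Integrable h μ := by
    have h1 : Integrable (fun x => (f x : ℂ)) μ := hf.integrable one_le_two
    obtain ⟨C, hC⟩ := (isCompact_univ (X := Torus)).exists_bound_of_continuousOn hgC.continuousOn
    have := Integrable.bdd_mul h1 hgC.aestronglyMeasurable (c := C) (Filter.Eventually.of_forall fun x => hC x (Set.mem_univ x))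
    exact this.congr (Filter.Eventually.of_forall fun x => by rw [hh]; ring)
  -- the Fourier series of u converges pointwise
  set U : C(Torus, ℂ) := ⟨fun x => (u x : ℂ), Complex.continuous_ofReal.comp hu⟩ with hU
  have hFCU : ∀ m : ℤ, fourierCoeff (U : Torus → ℂ) m = FC u m := fun m => rfl
  have hSU : Summable (fun m : ℤ => fourierCoeff (U : Torus → ℂ) m) := by
    apply Summable.of_norm
    simpa only [hFCU] using hSu
  have hpt : ∀ x : Torus, HasSum (fun m : ℤ => FC u m * fourier m x * h x) ((u x : ℂ) * h x) := by
    intro x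
    have h1 := has_pointwise_sum_fourier_series_of_summable hSU x
    have h2 := h1.mul_right (h x)
    simp only [hFCU, smul_eq_mul] at h2
    exact h2
  -- interchange sum and integral
  have hmeas : ∀ m : ℤ, AEStronglyMeasurable (fun x => FC u m * fourier m x * h x) μ := by
    intro m
    exact (((continuous_const.mul (map_continuous (fourier m))).aestronglyMeasurable).mul
      (hf.aestronglyMeasurable.mul hgC.aestronglyMeasurable))
  have hB : ∫⁻ x, ‖h x‖₊ ∂μ < ⊤ := hInt.2
  have hlin : ∀ m : ℤ, ∫⁻ x, ‖FC u m * fourier m x * h x‖₊ ∂μ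
      = (‖FC u m‖₊ : ℝ≥0∞) * ∫⁻ x, ‖h x‖₊ ∂μ := by
    intro m
    rw [← lintegral_const_mul' _ _ ENNReal.coe_ne_top]
    congr 1; funext x
    rw [nnnorm_mul, nnnorm_mul]
    have : ‖fourier m x‖₊ = 1 := by
      ext; exact fourier_norm_one m x
    rw [this, mul_one]
    push_cast
    ring
  have hSnn : Summable (fun m : ℤ => ‖FC u m‖₊) := by
    rw [← NNReal.summable_coe]
    exact hSu
  have hfin : (∑' m : ℤ, ∫⁻ x, ‖FC u m * fourier m x * h x‖₊ ∂μ) ≠ ⊤ := by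
    simp only [hlin]
    rw [ENNReal.tsum_mul_right]
    exact ENNReal.mul_ne_top (ENNReal.tsum_coe_ne_top_iff_summable.2 hSnn) hB.ne
  have hswap : ∫ x, ((u x : ℂ) * h x) ∂μ
      = ∑' m : ℤ, ∫ x, FC u m * fourier m x * h x ∂μ := by
    rw [← integral_tsum hmeas hfin]
    apply integral_congr_ae
    exact Filter.Eventually.of_forall fun x => ((hpt x).tsum_eq).symm
  -- identify each term as FC u m * I m
  set I : ℤ → ℂ := fun m => ∫ x, fourier m x * h x ∂μ with hI
  have hIm : ∀ m : ℤ, ∫ x, FC u m * fourier m x * h x ∂μ = FC u m * I m := by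
    intro m
    rw [hI]
    simp only [mul_assoc]
    exact integral_const_mul (FC u m) _
  -- Parseval for each I m
  have hIv : ∀ m : ℤ, I m = ∑' n : ℤ, FC f (-n - m) * FC g n := by
    intro m
    set F : Torus → ℂ := fun x => fourier (-m) x * (f x : ℂ) with hF
    have hFm : MemLp F 2 μ := by
      refine MemLp.of_le (f := F) hf ?_ ?_
      · exact (map_continuous (fourier (-m))).aestronglyMeasurable.mul hf.aestronglyMeasurable
      · refine Filter.Eventually.of_forall fun x => ?_
        show ‖fourier (-m) x * ((f x : ℂ))‖ ≤ ‖((f x : ℂ))‖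
        rw [norm_mul, fourier_norm_one, one_mul]
    have hpar := parseval F (fun x => (g x : ℂ)) hFm hgm
    have hL : ∫ x, conj (F x) * (g x : ℂ) ∂μ = I m := by
      apply integral_congr_ae
      apply Filter.Eventually.of_forall fun x => ?_
      rw [hF]
      simp only [map_mul, Complex.conj_ofReal]
      rw [fourier_neg, Complex.conj_conj]
      rw [hh]; ring
    have hFn : ∀ n : ℤ, conj (fourierCoeff F n) = FC f (-n - m) := by
      intro n
      rw [hF]
      rw [fourierCoeff_fourier_mul (-m) n (fun x => (f x : ℂ))]
      have : n - -m = n + m := by ring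
      rw [this]
      show conj (FC f (n + m)) = FC f (-n - m)
      rw [← FC_neg]
      congr 1
      ring
    rw [← hL, hpar]
    congr 1; funext n
    rw [hFn n]
    rfl
  -- summability of m ↦ FC u m * I m
  have hIbd : ∀ m : ℤ, ‖I m‖ ≤ ∫ x, ‖h x‖ ∂μ := by
    intro m
    refine (norm_integral_le_integral_norm _).trans (le_of_eq ?_)
    apply integral_congr_ae
    apply Filter.Eventually.of_forall fun x => ?_
    show ‖fourier m x * h x‖ = ‖h x‖
    rw [norm_mul, fourier_norm_one, one_mul]
  have hSum : Summable (fun m : ℤ => FC u m * I m) := by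
    apply Summable.of_norm
    apply Summable.of_nonneg_of_le (fun m => norm_nonneg _) (fun m => ?_)
      (hSu.mul_right (∫ x, ‖h x‖ ∂μ))
    rw [norm_mul]
    exact mul_le_mul_of_nonneg_left (hIbd m) (norm_nonneg _)
  constructor
  · have hcast : (((∫ x : Torus, u x * f x * g x ∂haarAddCircle : ℝ)) : ℂ)
        = ∫ x, ((u x : ℂ) * h x) ∂μ := by
      have h5 : (((∫ x : Torus, u x * f x * g x ∂haarAddCircle : ℝ)) : ℂ)
          = ∫ x : Torus, ((u x * f x * g x : ℝ) : ℂ) ∂haarAddCircle := integral_ofReal.symm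
      rw [h5]
      apply integral_congr_ae
      apply Filter.Eventually.of_forall fun x => ?_
      rw [hh]
      push_cast
      ring
    rw [hcast, hswap]
    apply tsum_congr
    intro m
    rw [hIm m, hIv m]
  · have := hSum
    apply Summable.congr this
    intro m
    rw [hIv m]


/-- The central algebraic identity after symmetrization. -/
lemma key_algebra (s : ℝ) (w : Torus → ℝ) (A B C : ℤ → ℂ)
    (hA : ∀ k, A k = symD s k * symDx k ^ 2 * FC w k)
    (hB : ∀ k, B k = symD s k * FC w k)
    (hC : ∀ k, C k = symD s k * symDx k * FC w k) (m n : ℤ) :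
    (A (-n - m) * B n + C (-n - m) * C n) + (A n * B (-m - n) + C n * C (-m - n))
      = Complex.I ^ 2 * (m : ℂ) ^ 2
        * (symD s (n + m) * symD s n * FC w (-(n + m)) * FC w n) := by
  have e1 : (-n - m : ℤ) = -(n + m) := by ring
  have e2 : (-m - n : ℤ) = -(n + m) := by ring
  have hsymD_even : symD s (-(n + m)) = symD s (n + m) := by
    unfold symD
    congr 1
    push_cast
    rw [abs_neg]
  rw [e1, e2]
  simp only [hA, hB, hC, hsymD_even]
  unfold symD symDx
  push_cast
  ring

end S6

set_option maxHeartbeats 1000000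

/-- `|⟨u D^s∂ₓ²w, D^s w⟩ + ⟨u, (D^s∂ₓ w)²⟩| ≤ C‖u‖_{H^{s₀}}‖w‖_{H^s}²`. -/
theorem statement6 (s s₀ : ℝ) (hs : 0 ≤ s) (hs₀ : 5 / 2 < s₀) :
    ∃ C > (0 : ℝ), ∀ u w a b c : Torus → ℝ,
      Continuous u → MemHs s₀ u →
      Continuous w → MemHs (s + 2) w →
      MemLp a 2 haarAddCircle → HasSymbol (fun n => symD s n * symDx n ^ 2) w a →
      Continuous b → HasSymbol (symD s) w b →
      Continuous c → HasSymbol (fun n => symD s n * symDx n) w c →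
      |inn3 u a b + inn3 u c c| ≤ C * HsNorm s₀ u * HsNorm s w ^ 2 := by
  have hA2 : Summable (fun m : ℤ => (1 + (m : ℝ) ^ 2) ^ (2 - s₀)) :=
    S6.summable_rpow_int (by linarith)
  set A : ℝ := Real.sqrt (∑' m : ℤ, (1 + (m : ℝ) ^ 2) ^ (2 - s₀)) with hA
  have hAnn : 0 ≤ A := Real.sqrt_nonneg _
  refine ⟨A / 2 + 1, by positivity, ?_⟩
  intro u w a b c hu huH hw hwH ha hsa hb hsb hc hsc
  -- basic facts
  have hb1 : ∀ n : ℤ, (1 : ℝ) ≤ 1 + (n : ℝ) ^ 2 := fun n => by nlinarith [sq_nonneg ((n : ℝ))]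
  set v : ℤ → ℝ := fun n => |(n : ℝ)| ^ s * ‖FC w n‖ with hv
  have hv0 : ∀ n, 0 ≤ v n :=
    fun n => mul_nonneg (Real.rpow_nonneg (abs_nonneg _) _) (norm_nonneg _)
  have hsymn : ∀ n : ℤ, ‖symD s n‖ = |(n : ℝ)| ^ s := by
    intro n
    unfold symD
    rw [Complex.norm_real, Real.norm_eq_abs, _root_.abs_of_nonneg (Real.rpow_nonneg (abs_nonneg _) _)]
  have hdxn : ∀ n : ℤ, ‖symDx n‖ = |(n : ℝ)| := by
    intro n
    unfold symDx
    rw [norm_mul, Complex.norm_I, one_mul]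
    have : ((n : ℤ) : ℂ) = (((n : ℝ)) : ℂ) := by push_cast; rfl
    rw [this, Complex.norm_real, Real.norm_eq_abs]
  -- norms of the coefficients of a, b, c
  have hNa : ∀ n : ℤ, ‖FC a n‖ = (n : ℝ) ^ 2 * v n := by
    intro n
    rw [hsa n, norm_mul, norm_mul, norm_pow, hsymn, hdxn, hv]
    simp only [_root_.sq_abs]
    ring
  have hNb : ∀ n : ℤ, ‖FC b n‖ = v n := by
    intro n
    rw [hsb n, norm_mul, hsymn, hv]
  have hNc : ∀ n : ℤ, ‖FC c n‖ = |(n : ℝ)| * v n := by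
    intro n
    rw [hsc n, norm_mul, norm_mul, hsymn, hdxn, hv]
    ring
  -- the master comparison: ((1+n²) v n)² is summable
  have hvsq : ∀ n : ℤ, v n ^ 2 ≤ (1 + (n : ℝ) ^ 2) ^ s * ‖FC w n‖ ^ 2 := by
    intro n
    rw [hv]
    simp only [mul_pow]
    apply mul_le_mul_of_nonneg_right _ (sq_nonneg _)
    have h1 : (|(n : ℝ)| ^ s) ^ 2 = ((n : ℝ) ^ 2) ^ s := by
      rw [← Real.rpow_natCast (|(n : ℝ)| ^ s) 2, ← Real.rpow_mul (abs_nonneg _),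
        ← _root_.sq_abs ((n : ℝ)), ← Real.rpow_natCast |(n : ℝ)| 2,
        ← Real.rpow_mul (abs_nonneg _)]
      norm_num
      ring_nf
    rw [h1]
    exact Real.rpow_le_rpow (sq_nonneg _) (by nlinarith [sq_nonneg ((n : ℝ))]) hs
  have hsplit : ∀ n : ℤ, (1 + (n : ℝ) ^ 2) ^ (s + 2)
      = (1 + (n : ℝ) ^ 2) ^ s * (1 + (n : ℝ) ^ 2) ^ 2 := by
    intro n
    rw [Real.rpow_add (by positivity)]
    congr 1
    rw [← Real.rpow_natCast (1 + (n : ℝ) ^ 2) 2]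
    norm_num
  have hkey : ∀ n : ℤ, ((1 + (n : ℝ) ^ 2) * v n) ^ 2
      ≤ (1 + (n : ℝ) ^ 2) ^ (s + 2) * ‖FC w n‖ ^ 2 := by
    intro n
    rw [hsplit n, mul_pow]
    calc (1 + (n : ℝ) ^ 2) ^ 2 * v n ^ 2
        ≤ (1 + (n : ℝ) ^ 2) ^ 2 * ((1 + (n : ℝ) ^ 2) ^ s * ‖FC w n‖ ^ 2) :=
          mul_le_mul_of_nonneg_left (hvsq n) (by positivity)
      _ = (1 + (n : ℝ) ^ 2) ^ s * (1 + (n : ℝ) ^ 2) ^ 2 * ‖FC w n‖ ^ 2 := by ring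
  have SW2 : Summable (fun n : ℤ => ((1 + (n : ℝ) ^ 2) * v n) ^ 2) :=
    Summable.of_nonneg_of_le (fun n => sq_nonneg _) hkey hwH
  have hvle : ∀ n : ℤ, v n ≤ (1 + (n : ℝ) ^ 2) * v n :=
    fun n => le_mul_of_one_le_left (hv0 n) (hb1 n)
  have Sv2 : Summable (fun n : ℤ => v n ^ 2) := by
    apply Summable.of_nonneg_of_le (fun n => sq_nonneg _) (fun n => ?_) SW2
    have := hv0 n
    nlinarith [hvle n, hb1 n]
  have Sa2 : Summable (fun n : ℤ => ‖FC a n‖ ^ 2) := by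
    apply Summable.of_nonneg_of_le (fun n => sq_nonneg _) (fun n => ?_) SW2
    rw [hNa n]
    have h1 : (n : ℝ) ^ 2 * v n ≤ (1 + (n : ℝ) ^ 2) * v n :=
      mul_le_mul_of_nonneg_right (by nlinarith [sq_nonneg ((n : ℝ))]) (hv0 n)
    have h2 : 0 ≤ (n : ℝ) ^ 2 * v n := mul_nonneg (sq_nonneg _) (hv0 n)
    nlinarith
  have Sb2 : Summable (fun n : ℤ => ‖FC b n‖ ^ 2) := by
    apply Summable.of_nonneg_of_le (fun n => sq_nonneg _) (fun n => ?_) SW2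
    rw [hNb n]
    have := hv0 n
    nlinarith [hvle n, hb1 n]
  have Sc2 : Summable (fun n : ℤ => ‖FC c n‖ ^ 2) := by
    apply Summable.of_nonneg_of_le (fun n => sq_nonneg _) (fun n => ?_) SW2
    rw [hNc n]
    have h0 : |(n : ℝ)| ≤ 1 + (n : ℝ) ^ 2 := by nlinarith [_root_.sq_abs ((n : ℝ)), abs_nonneg ((n : ℝ)), sq_nonneg (|(n : ℝ)| - 1)]
    have h1 : |(n : ℝ)| * v n ≤ (1 + (n : ℝ) ^ 2) * v n :=
      mul_le_mul_of_nonneg_right h0 (hv0 n)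
    have h2 : 0 ≤ |(n : ℝ)| * v n := mul_nonneg (abs_nonneg _) (hv0 n)
    nlinarith
  set V : ℝ := ∑' n : ℤ, v n ^ 2 with hV
  have hVnn : 0 ≤ V := tsum_nonneg fun n => sq_nonneg _
  have Ss : Summable (fun n : ℤ => (1 + (n : ℝ) ^ 2) ^ s * ‖FC w n‖ ^ 2) := by
    apply Summable.of_nonneg_of_le (fun n => by positivity) (fun n => ?_) hwH
    exact mul_le_mul_of_nonneg_right
      (Real.rpow_le_rpow_of_exponent_le (hb1 n) (by linarith)) (sq_nonneg _)
  have hVle : V ≤ HsNorm s w ^ 2 := by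
    have h1 : HsNorm s w ^ 2 = ∑' n : ℤ, (1 + (n : ℝ) ^ 2) ^ s * ‖FC w n‖ ^ 2 := by
      rw [HsNorm, Real.sq_sqrt (tsum_nonneg fun n => by positivity)]
    rw [h1, hV]
    exact Summable.tsum_le_tsum hvsq Sv2 Ss
  -- u-side: Cauchy–Schwarz
  have hfm_sq : ∀ m : ℤ, ((1 + (m : ℝ) ^ 2) ^ (s₀ / 2) * ‖FC u m‖) ^ 2
      = (1 + (m : ℝ) ^ 2) ^ s₀ * ‖FC u m‖ ^ 2 := by
    intro m
    rw [mul_pow]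
    congr 1
    rw [← Real.rpow_natCast ((1 + (m : ℝ) ^ 2) ^ (s₀ / 2)) 2,
      ← Real.rpow_mul (by positivity)]
    norm_num
  have hgm_sq : ∀ m : ℤ, ((1 + (m : ℝ) ^ 2) ^ (1 - s₀ / 2)) ^ 2
      = (1 + (m : ℝ) ^ 2) ^ (2 - s₀) := by
    intro m
    rw [← Real.rpow_natCast ((1 + (m : ℝ) ^ 2) ^ (1 - s₀ / 2)) 2,
      ← Real.rpow_mul (by positivity)]
    norm_num
    ring_nf
  have hSf2 : Summable (fun m : ℤ => ((1 + (m : ℝ) ^ 2) ^ (s₀ / 2) * ‖FC u m‖) ^ 2) := by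
    apply Summable.congr huH
    intro m
    rw [hfm_sq m]
  have hSg2 : Summable (fun m : ℤ => ((1 + (m : ℝ) ^ 2) ^ (1 - s₀ / 2)) ^ 2) := by
    apply Summable.congr hA2
    intro m
    rw [hgm_sq m]
  have hfg : ∀ m : ℤ, (1 + (m : ℝ) ^ 2) ^ (s₀ / 2) * ‖FC u m‖ * (1 + (m : ℝ) ^ 2) ^ (1 - s₀ / 2)
      = (1 + (m : ℝ) ^ 2) * ‖FC u m‖ := by
    intro m
    have h1 : (1 + (m : ℝ) ^ 2) ^ (s₀ / 2) * (1 + (m : ℝ) ^ 2) ^ (1 - s₀ / 2)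
        = (1 + (m : ℝ) ^ 2) := by
      rw [← Real.rpow_add (by positivity)]
      norm_num
    calc (1 + (m : ℝ) ^ 2) ^ (s₀ / 2) * ‖FC u m‖ * (1 + (m : ℝ) ^ 2) ^ (1 - s₀ / 2)
        = (1 + (m : ℝ) ^ 2) ^ (s₀ / 2) * (1 + (m : ℝ) ^ 2) ^ (1 - s₀ / 2) * ‖FC u m‖ := by ring
      _ = (1 + (m : ℝ) ^ 2) * ‖FC u m‖ := by rw [h1]
  have hSU : Summable (fun m : ℤ => (1 + (m : ℝ) ^ 2) * ‖FC u m‖) := by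
    have h2 := S6.summable_mul_sq (f := fun m : ℤ => (1 + (m : ℝ) ^ 2) ^ (s₀ / 2) * ‖FC u m‖)
      (g := fun m : ℤ => (1 + (m : ℝ) ^ 2) ^ (1 - s₀ / 2))
      (fun m => by positivity) (fun m => by positivity) hSf2 hSg2
    apply Summable.congr h2
    intro m
    exact hfg m
  have hUb : ∑' m : ℤ, (1 + (m : ℝ) ^ 2) * ‖FC u m‖ ≤ HsNorm s₀ u * A := by
    have h2 := S6.tsum_cs (fun m : ℤ => (1 + (m : ℝ) ^ 2) ^ (s₀ / 2) * ‖FC u m‖)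
      (fun m : ℤ => (1 + (m : ℝ) ^ 2) ^ (1 - s₀ / 2))
      (fun m => by positivity) (fun m => by positivity) hSf2 hSg2
    have h3 : ∑' m : ℤ, (1 + (m : ℝ) ^ 2) ^ (s₀ / 2) * ‖FC u m‖ * (1 + (m : ℝ) ^ 2) ^ (1 - s₀ / 2)
        = ∑' m : ℤ, (1 + (m : ℝ) ^ 2) * ‖FC u m‖ := tsum_congr hfg
    have h4 : ∑' m : ℤ, ((1 + (m : ℝ) ^ 2) ^ (s₀ / 2) * ‖FC u m‖) ^ 2
        = ∑' m : ℤ, (1 + (m : ℝ) ^ 2) ^ s₀ * ‖FC u m‖ ^ 2 := tsum_congr hfm_sq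
    have h5 : ∑' m : ℤ, ((1 + (m : ℝ) ^ 2) ^ (1 - s₀ / 2)) ^ 2
        = ∑' m : ℤ, (1 + (m : ℝ) ^ 2) ^ (2 - s₀) := tsum_congr hgm_sq
    rw [h3, h4, h5] at h2
    exact h2
  have hSu1 : Summable (fun m : ℤ => ‖FC u m‖) := by
    apply Summable.of_nonneg_of_le (fun m => norm_nonneg _) (fun m => ?_) hSU
    exact le_mul_of_one_le_left (norm_nonneg _) (hb1 m)
  -- expansion of the two trilinear forms
  have hma : MemLp (fun x => (a x : ℂ)) 2 haarAddCircle := ha.ofReal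
  have hmc : MemLp (fun x => (c x : ℂ)) 2 haarAddCircle := S6.cont_memℒp c hc
  obtain ⟨hexp1, hsum1⟩ := S6.expand u a b hu hSu1 hma hb
  obtain ⟨hexp2, hsum2⟩ := S6.expand u c c hu hSu1 hmc hc
  set Jab : ℤ → ℂ := fun m => ∑' n : ℤ, FC a (-n - m) * FC b n with hJab
  set Jcc : ℤ → ℂ := fun m => ∑' n : ℤ, FC c (-n - m) * FC c n with hJcc
  have hT : ((inn3 u a b + inn3 u c c : ℝ) : ℂ) = ∑' m : ℤ, FC u m * (Jab m + Jcc m) := by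
    push_cast
    rw [inn3, inn3, hexp1, hexp2, ← Summable.tsum_add hsum1 hsum2]
    apply tsum_congr
    intro m
    ring
  -- shift-summability helpers
  have hshift1 : ∀ (m : ℤ) (F : ℤ → ℝ), Summable F → Summable (fun n : ℤ => F (-n - m)) := by
    intro m F hF
    exact hF.comp_injective (fun x y hxy => by omega)
  have hshift2 : ∀ (m : ℤ) (F : ℤ → ℝ), Summable F → Summable (fun n : ℤ => F (n + m)) := by
    intro m F hF
    exact hF.comp_injective (fun x y hxy => by omega)
  have hVshift : ∀ m : ℤ, ∑' n : ℤ, v (n + m) ^ 2 = V := by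
    intro m
    rw [hV]
    have := (Equiv.addRight m).tsum_eq (fun n : ℤ => v n ^ 2)
    simpa [Equiv.coe_addRight] using this
  -- the per-mode bound
  have hJb : ∀ m : ℤ, ‖Jab m + Jcc m‖ ≤ (m : ℝ) ^ 2 / 2 * V := by
    intro m
    have SAab : Summable (fun n : ℤ => FC a (-n - m) * FC b n) := by
      apply Summable.of_norm
      apply Summable.of_nonneg_of_le (fun n => norm_nonneg _) (fun n => ?_)
        (((hshift1 m _ Sa2).add Sb2).div_const 2)
      rw [norm_mul]
      nlinarith [sq_nonneg (‖FC a (-n - m)‖ - ‖FC b n‖)]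
    have SAcc : Summable (fun n : ℤ => FC c (-n - m) * FC c n) := by
      apply Summable.of_norm
      apply Summable.of_nonneg_of_le (fun n => norm_nonneg _) (fun n => ?_)
        (((hshift1 m _ Sc2).add Sc2).div_const 2)
      rw [norm_mul]
      nlinarith [sq_nonneg (‖FC c (-n - m)‖ - ‖FC c n‖)]
    set t : ℤ → ℂ := fun n => FC a (-n - m) * FC b n + FC c (-n - m) * FC c n with htd
    have hSt : Summable t := SAab.add SAcc
    have hJt : Jab m + Jcc m = ∑' n : ℤ, t n := (Summable.tsum_add SAab SAcc).symm
    have hflip : ∑' n : ℤ, t (-m - n) = ∑' n : ℤ, t n := by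
      have h6 := (Equiv.subLeft (-m)).tsum_eq t
      simpa [Equiv.subLeft_apply] using h6
    have hSt' : Summable (fun n : ℤ => t (-m - n)) := by
      have h6 := (Equiv.subLeft (-m)).summable_iff.mpr hSt
      exact h6
    have h2J : (Jab m + Jcc m) + (Jab m + Jcc m) = ∑' n : ℤ, (t n + t (-m - n)) :=
      calc (Jab m + Jcc m) + (Jab m + Jcc m)
          = (∑' n : ℤ, t n) + ∑' n : ℤ, t (-m - n) := by rw [hJt, hflip]
        _ = ∑' n : ℤ, (t n + t (-m - n)) := (Summable.tsum_add hSt hSt').symm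
    have halg : ∀ n : ℤ, t n + t (-m - n)
        = Complex.I ^ 2 * (m : ℂ) ^ 2
          * (symD s (n + m) * symD s n * FC w (-(n + m)) * FC w n) := by
      intro n
      have e0 : (-(-m - n) - m : ℤ) = n := by ring
      rw [htd]
      simp only
      rw [e0]
      exact S6.key_algebra s w (FC a) (FC b) (FC c) hsa hsb hsc m n
    have hnormterm : ∀ n : ℤ,
        ‖Complex.I ^ 2 * (m : ℂ) ^ 2
          * (symD s (n + m) * symD s n * FC w (-(n + m)) * FC w n)‖
        = (m : ℝ) ^ 2 * (v (n + m) * v n) := by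
      intro n
      have hmc2 : ((m : ℤ) : ℂ) = (((m : ℝ)) : ℂ) := by push_cast; rfl
      rw [norm_mul, norm_mul, norm_pow, norm_pow, Complex.norm_I, one_pow, one_mul,
        norm_mul, norm_mul, norm_mul, hsymn, hsymn, S6.norm_FC_neg w (n + m),
        hmc2, Complex.norm_real, Real.norm_eq_abs, _root_.sq_abs, hv]
      simp only
      push_cast
      ring
    have hsumnorm : Summable (fun n : ℤ => v (n + m) * v n) :=
      S6.summable_mul_sq (fun n => hv0 _) hv0 (hshift2 m _ Sv2) Sv2
    have hb2 : ∑' n : ℤ, v (n + m) * v n ≤ V := by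
      have hg : Summable (fun n : ℤ => (v (n + m) ^ 2 + v n ^ 2) / 2) :=
        ((hshift2 m _ Sv2).add Sv2).div_const 2
      refine (Summable.tsum_le_tsum (fun n => ?_) hsumnorm hg).trans ?_
      · nlinarith [sq_nonneg (v (n + m) - v n)]
      · rw [tsum_div_const, Summable.tsum_add (hshift2 m _ Sv2) Sv2, hVshift m]
        rw [← hV]
        linarith
    have hbound : ‖(Jab m + Jcc m) + (Jab m + Jcc m)‖ ≤ (m : ℝ) ^ 2 * V := by
      rw [h2J]
      have hsn : Summable (fun n : ℤ => ‖t n + t (-m - n)‖) := by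
        apply Summable.congr (hsumnorm.mul_left ((m : ℝ) ^ 2))
        intro n
        rw [halg n, hnormterm n]
      refine (norm_tsum_le_tsum_norm hsn).trans ?_
      have h7 : ∑' n : ℤ, ‖t n + t (-m - n)‖ = (m : ℝ) ^ 2 * ∑' n : ℤ, v (n + m) * v n := by
        rw [← tsum_mul_left]
        exact tsum_congr fun n => by rw [halg n, hnormterm n]
      rw [h7]
      exact mul_le_mul_of_nonneg_left hb2 (sq_nonneg _)
    have h22 : (Jab m + Jcc m) + (Jab m + Jcc m) = (2 : ℂ) * (Jab m + Jcc m) := by ring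
    rw [h22, norm_mul] at hbound
    have h23 : ‖(2 : ℂ)‖ = 2 := by norm_num
    rw [h23] at hbound
    linarith
  -- final assembly
  have hterm : ∀ m : ℤ, ‖FC u m * (Jab m + Jcc m)‖
      ≤ ((1 + (m : ℝ) ^ 2) * ‖FC u m‖) * (V / 2) := by
    intro m
    rw [norm_mul]
    have h1 : ‖FC u m‖ * ‖Jab m + Jcc m‖ ≤ ‖FC u m‖ * ((m : ℝ) ^ 2 / 2 * V) :=
      mul_le_mul_of_nonneg_left (hJb m) (norm_nonneg _)
    refine h1.trans ?_
    have h2 : (m : ℝ) ^ 2 ≤ 1 + (m : ℝ) ^ 2 := by nlinarith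
    nlinarith [norm_nonneg (FC u m), hVnn]
  have hSrhs : Summable (fun m : ℤ => ((1 + (m : ℝ) ^ 2) * ‖FC u m‖) * (V / 2)) :=
    hSU.mul_right _
  have hnormsum : ‖∑' m : ℤ, FC u m * (Jab m + Jcc m)‖
      ≤ ∑' m : ℤ, ((1 + (m : ℝ) ^ 2) * ‖FC u m‖) * (V / 2) := by
    have hsn : Summable (fun m : ℤ => ‖FC u m * (Jab m + Jcc m)‖) :=
      Summable.of_nonneg_of_le (fun m => norm_nonneg _) hterm hSrhs
    exact (norm_tsum_le_tsum_norm hsn).trans (Summable.tsum_le_tsum hterm hsn hSrhs)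
  rw [tsum_mul_right] at hnormsum
  have habs : |inn3 u a b + inn3 u c c| = ‖((inn3 u a b + inn3 u c c : ℝ) : ℂ)‖ := by
    rw [Complex.norm_real, Real.norm_eq_abs]
  rw [habs, hT]
  have hUnn : 0 ≤ HsNorm s₀ u := Real.sqrt_nonneg _
  have hWnn : 0 ≤ HsNorm s w ^ 2 := sq_nonneg _
  have hSUnn : 0 ≤ ∑' m : ℤ, (1 + (m : ℝ) ^ 2) * ‖FC u m‖ :=
    tsum_nonneg fun m => mul_nonneg (by positivity) (norm_nonneg _)
  have final : (∑' m : ℤ, (1 + (m : ℝ) ^ 2) * ‖FC u m‖) * (V / 2)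
      ≤ (A / 2 + 1) * HsNorm s₀ u * HsNorm s w ^ 2 := by
    have h8 : (∑' m : ℤ, (1 + (m : ℝ) ^ 2) * ‖FC u m‖) * V
        ≤ (HsNorm s₀ u * A) * (HsNorm s w ^ 2) :=
      mul_le_mul hUb hVle hVnn (mul_nonneg hUnn hAnn)
    nlinarith [mul_nonneg (mul_nonneg hUnn hWnn) hAnn, mul_nonneg hUnn hWnn]
  linarith [hnormsum, final]


end
end

section
/- Let s ≥ 0, s₀ > 7/2. There exists C > 0 such that for all u ∈ H^{s₀}(𝕋) and w ∈ H^{s+3}(𝕋): |⟨u D^s∂_x³w, D^s w⟩ − (3/2)⟨∂_x u, (D^s∂_x w)²⟩| ≤ C‖u‖_{H^{s₀}}‖w‖_{H^s}². -/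
open MeasureTheory Real Complex AddCircle
open scoped BigOperators ENNReal

noncomputable section

section Aux

open scoped ComplexConjugate

/-- Cauchy-Schwarz: summability of products. -/
lemma summable_mul_of_sq {f g : ℤ → ℝ} (hf : Summable (fun n => f n ^ 2))
    (hg : Summable (fun n => g n ^ 2)) : Summable (fun n => f n * g n) := by
  have h : ∀ n, |f n * g n| ≤ (f n ^ 2 + g n ^ 2) / 2 := by
    intro n
    rw [abs_mul]
    nlinarith [abs_nonneg (f n), abs_nonneg (g n), _root_.sq_abs (f n), _root_.sq_abs (g n),
      sq_nonneg (|f n| - |g n|)]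
  exact Summable.of_abs (Summable.of_nonneg_of_le (fun n => abs_nonneg _) h
    (((hf.add hg).div_const 2)))

/-- Cauchy-Schwarz for tsums. -/
lemma tsum_mul_le_sqrt_mul_sqrt {f g : ℤ → ℝ}
    (hf : Summable (fun n => f n ^ 2)) (hg : Summable (fun n => g n ^ 2)) :
    ∑' n, f n * g n ≤ Real.sqrt (∑' n, f n ^ 2) * Real.sqrt (∑' n, g n ^ 2) := by
  refine Summable.tsum_le_of_sum_le (summable_mul_of_sq hf hg) (fun s => ?_)
  calc ∑ n ∈ s, f n * g n
      ≤ Real.sqrt (∑ n ∈ s, f n ^ 2) * Real.sqrt (∑ n ∈ s, g n ^ 2) :=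
        Real.sum_mul_le_sqrt_mul_sqrt s f g
    _ ≤ Real.sqrt (∑' n, f n ^ 2) * Real.sqrt (∑' n, g n ^ 2) := by
        apply mul_le_mul
        · exact Real.sqrt_le_sqrt (Summable.sum_le_tsum s (fun n _ => sq_nonneg _) hf)
        · exact Real.sqrt_le_sqrt (Summable.sum_le_tsum s (fun n _ => sq_nonneg _) hg)
        · positivity
        · positivity

/-- Fourier coefficients of real functions: reality condition. -/
lemma FC_neg (f : Torus → ℝ) (n : ℤ) : FC f (-n) = conj (FC f n) := by
  rw [FC, FC, fourierCoeff, fourierCoeff, ← integral_conj]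
  congr 1
  ext x
  simp only [smul_eq_mul, map_mul, Complex.conj_ofReal, ← fourier_neg, neg_neg]

/-- Parseval for complex L² functions. -/
lemma parseval_cplx {F G : Torus → ℂ} (hF : MemLp F 2 haarAddCircle)
    (hG : MemLp G 2 haarAddCircle) :
    ∫ x : Torus, conj (F x) * G x ∂haarAddCircle
      = ∑' n : ℤ, conj (fourierCoeff F n) * fourierCoeff G n := by
  have h1 : ∀ n : ℤ, fourierCoeff (hF.toLp F : Torus → ℂ) n = fourierCoeff F n := by
    intro n
    apply integral_congr_ae
    filter_upwards [hF.coeFn_toLp] with x hx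
    rw [hx]
  have h2 : ∀ n : ℤ, fourierCoeff (hG.toLp G : Torus → ℂ) n = fourierCoeff G n := by
    intro n
    apply integral_congr_ae
    filter_upwards [hG.coeFn_toLp] with x hx
    rw [hx]
  have key := fourierBasis.tsum_inner_mul_inner (hF.toLp F) (hG.toLp G)
  have hL : (inner ℂ (hF.toLp F) (hG.toLp G) : ℂ)
      = ∫ x : Torus, conj (F x) * G x ∂haarAddCircle := by
    rw [MeasureTheory.L2.inner_def]
    apply integral_congr_ae
    filter_upwards [hF.coeFn_toLp, hG.coeFn_toLp] with x hx hy
    rw [hx, hy, RCLike.inner_apply, mul_comm]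
  rw [← hL, ← key]
  apply tsum_congr
  intro n
  have e1 : (inner ℂ (fourierBasis n) (hG.toLp G) : ℂ) = fourierCoeff G n := by
    rw [← fourierBasis.repr_apply_apply, fourierBasis_repr, h2]
  have e2 : (inner ℂ (fourierBasis n) (hF.toLp F) : ℂ) = fourierCoeff F n := by
    rw [← fourierBasis.repr_apply_apply, fourierBasis_repr, h1]
  rw [← e1, ← e2, ← inner_conj_symm]

end Aux
section Aux2
open scoped ComplexConjugate

lemma norm_fourier_apply (n : ℤ) (x : Torus) : ‖fourier n x‖ = 1 := by
  simp [fourier_apply, Circle.norm_coe]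

/-- Expansion: if `f` has summable Fourier coefficients, we can expand it inside an integral. -/
lemma expand (f : Torus → ℝ) (hfc : Continuous f) (hsum : Summable (fun k => ‖FC f k‖))
    (φ : Torus → ℂ) (hφ : Integrable φ haarAddCircle) :
    ∫ x : Torus, (f x : ℂ) * φ x ∂haarAddCircle
      = ∑' k : ℤ, FC f k * ∫ x : Torus, fourier k x * φ x ∂haarAddCircle := by
  set fC : C(Torus, ℂ) := ⟨fun x => (f x : ℂ), by continuity⟩ with hfC
  have hsummable : Summable (fourierCoeff (⇑fC)) := Summable.of_norm hsum
  have hps : ∀ x : Torus, HasSum (fun k : ℤ => FC f k * (fourier k x * φ x))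
      ((f x : ℂ) * φ x) := by
    intro x
    have h1 := (has_pointwise_sum_fourier_series_of_summable hsummable x).mul_right (φ x)
    simp only [smul_eq_mul, mul_assoc] at h1
    exact h1
  have hpt : (fun x : Torus => (f x : ℂ) * φ x)
      = fun x => ∑' k : ℤ, FC f k * (fourier k x * φ x) := by
    ext x; exact (hps x).tsum_eq.symm
  rw [hpt]
  rw [MeasureTheory.integral_tsum (f := fun (k : ℤ) (x : Torus) => FC f k * (fourier k x * φ x))
    (fun k => ((((fourier k).continuous.aestronglyMeasurable).mul hφ.1).const_mul _)) ?_]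
  · exact tsum_congr (fun k => integral_const_mul _ _)
  · have hlin : ∀ k : ℤ, ∫⁻ x, ‖FC f k * (fourier k x * φ x)‖ₑ ∂haarAddCircle
        = ‖FC f k‖ₑ * ∫⁻ x, ‖φ x‖ₑ ∂haarAddCircle := by
      intro k
      rw [← lintegral_const_mul' _ _ enorm_ne_top]
      apply lintegral_congr
      intro x
      rw [enorm_mul, enorm_mul, show ‖fourier k x‖ₑ = 1 from by
        rw [← ofReal_norm_eq_enorm, norm_fourier_apply, ENNReal.ofReal_one], one_mul]
    simp_rw [hlin]
    rw [ENNReal.tsum_mul_right]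
    apply ENNReal.mul_ne_top
    · have := ENNReal.tsum_coe_ne_top_iff_summable.mpr
        (NNReal.summable_coe.mp (by simpa using hsum) : Summable fun k => ‖FC f k‖₊)
      exact this
    · exact hφ.2.ne

end Aux2
section Aux3
open scoped ComplexConjugate

/-- Continuous functions on the torus are in L^p. -/
lemma cont_memLp (F : Torus → ℂ) (hF : Continuous F) (p : ℝ≥0∞) :
    MemLp F p haarAddCircle := by
  obtain ⟨C, hC⟩ := isCompact_univ.exists_bound_of_continuousOn (hF.continuousOn (s := Set.univ))
  exact (memLp_top_of_bound hF.aestronglyMeasurable C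
    (Filter.Eventually.of_forall (fun x => hC x trivial))).mono_exponent le_top

lemma innerSumFC (g h : Torus → ℝ) (hg : Continuous g) (hh : MemLp h 2 haarAddCircle) (k : ℤ) :
    ∫ x : Torus, fourier k x * (g x : ℂ) * (h x : ℂ) ∂haarAddCircle
      = ∑' n : ℤ, conj (FC g (n + k)) * FC h n := by
  set F : Torus → ℂ := fun x => fourier (-k) x * (g x : ℂ) with hFdef
  have hFcont : Continuous F := (map_continuous (fourier (-k))).mul (by continuity)
  have hFL : MemLp F 2 haarAddCircle := cont_memLp F hFcont 2
  have key := parseval_cplx hFL (hh.ofReal (K := ℂ))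
  have h1 : ∀ x, conj (F x) = fourier k x * (g x : ℂ) := by
    intro x
    simp only [hFdef, map_mul, Complex.conj_ofReal, ← fourier_neg, neg_neg]
  have h2 : ∀ n : ℤ, fourierCoeff F n = FC g (n + k) := by
    intro n
    rw [fourierCoeff, FC, fourierCoeff]
    congr 1
    ext x
    rw [smul_eq_mul, smul_eq_mul, show (-(n + k) : ℤ) = -n + -k from by ring, fourier_add]
    ring
  calc ∫ x : Torus, fourier k x * (g x : ℂ) * (h x : ℂ) ∂haarAddCircle
      = ∫ x : Torus, conj (F x) * (h x : ℂ) ∂haarAddCircle := by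
        apply integral_congr_ae
        filter_upwards with x
        rw [h1]
    _ = ∑' n : ℤ, conj (fourierCoeff F n) * fourierCoeff (fun x : Torus => (h x : ℂ)) n := key
    _ = ∑' n : ℤ, conj (FC g (n + k)) * FC h n := by
        apply tsum_congr; intro n; rw [h2]; rfl

/-- The trilinear integral as a double Fourier sum. -/
lemma inn3_eq (f g h : Torus → ℝ) (hf : Continuous f) (hfs : Summable fun k => ‖FC f k‖)
    (hg : Continuous g) (hh : MemLp h 2 haarAddCircle) :
    ((inn3 f h g : ℝ) : ℂ) = ∑' k : ℤ, FC f k * ∑' n : ℤ, conj (FC g (n + k)) * FC h n := by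
  have hgc : Continuous fun x : Torus => (g x : ℂ) := by continuity
  have hint : Integrable (fun x : Torus => (g x : ℂ) * (h x : ℂ)) haarAddCircle := by
    obtain ⟨C, hC⟩ := isCompact_univ.exists_bound_of_continuousOn (hgc.continuousOn (s := Set.univ))
    apply Integrable.bdd_mul (c := C) ((hh.integrable one_le_two).ofReal) hgc.aestronglyMeasurable
    exact Filter.Eventually.of_forall (fun x => hC x trivial)
  calc ((inn3 f h g : ℝ) : ℂ)
      = ∫ x : Torus, ((f x * h x * g x : ℝ) : ℂ) ∂haarAddCircle := by
        rw [inn3]; exact integral_ofReal.symm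
    _ = ∫ x : Torus, (f x : ℂ) * ((g x : ℂ) * (h x : ℂ)) ∂haarAddCircle := by
        apply integral_congr_ae
        filter_upwards with x
        push_cast
        ring
    _ = ∑' k : ℤ, FC f k * ∫ x : Torus, fourier k x * ((g x : ℂ) * (h x : ℂ))
          ∂haarAddCircle := expand f hf hfs _ hint
    _ = ∑' k : ℤ, FC f k * ∑' n : ℤ, conj (FC g (n + k)) * FC h n := by
        apply tsum_congr; intro k
        congr 1
        rw [← innerSumFC g h hg hh k]
        apply integral_congr_ae
        filter_upwards with x
        ring

end Aux3
section Aux4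
open scoped ComplexConjugate

lemma rpow_sq_comm (x : ℝ) (hx : 0 ≤ x) (t : ℝ) : (x ^ t) ^ (2 : ℕ) = (x ^ (2 : ℕ)) ^ t := by
  rw [← Real.rpow_natCast (x ^ t) 2, ← Real.rpow_natCast x 2, ← Real.rpow_mul hx,
    ← Real.rpow_mul hx, mul_comm]

lemma gauss_pos (k : ℤ) : (0 : ℝ) < 1 + (k : ℝ) ^ 2 := by positivity

lemma one_le_gauss (k : ℤ) : (1 : ℝ) ≤ 1 + (k : ℝ) ^ 2 := by nlinarith [sq_nonneg ((k : ℝ))]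

/-- `∑ (1+k²)^r` converges for `r < -1/2`. -/
lemma summable_gauss_rpow {r : ℝ} (hr : r < -(1/2)) :
    Summable (fun k : ℤ => (1 + (k : ℝ) ^ 2) ^ r) := by
  have hp : (1 : ℝ) < -(2 * r) := by linarith
  have hbase : Summable (fun k : ℤ => 1 / |(k : ℝ)| ^ (-(2 * r))) := by
    have := (Real.summable_one_div_int_add_rpow 0 (-(2 * r))).mpr hp
    simpa using this
  have hind : Summable (fun k : ℤ => if k = 0 then (1 : ℝ) else 0) := by
    apply summable_of_finite_support
    apply Set.Finite.subset (Set.finite_singleton (0 : ℤ))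
    intro k hk
    simp only [Function.mem_support, ne_eq, ite_eq_right_iff, Classical.not_imp] at hk
    exact Set.mem_singleton_iff.mpr hk.1
  refine Summable.of_nonneg_of_le (fun k => (Real.rpow_pos_of_pos (gauss_pos k) r).le) ?_
    (hbase.add hind)
  intro k
  by_cases hk : k = 0
  · subst hk
    simp only [if_pos rfl, Int.cast_zero, ne_eq, abs_zero]
    rw [Real.zero_rpow (by linarith : -(2*r) ≠ 0)]
    norm_num
  · have hk1 : (1 : ℝ) ≤ |(k : ℝ)| := by
      rw [← Int.cast_abs]
      exact_mod_cast Int.one_le_abs (by exact_mod_cast hk)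
    have h1 : (1 + (k : ℝ) ^ 2) ^ r ≤ ((k : ℝ) ^ 2) ^ r := by
      apply Real.rpow_le_rpow_of_nonpos (by positivity) (by nlinarith) (by linarith)
    have h2 : ((k : ℝ) ^ 2) ^ r = 1 / |(k : ℝ)| ^ (-(2 * r)) := by
      rw [show (k:ℝ)^2 = |(k:ℝ)|^(2:ℕ) from by rw [_root_.sq_abs], ← Real.rpow_natCast |(k:ℝ)| 2,
        ← Real.rpow_mul (abs_nonneg _), Real.rpow_neg (abs_nonneg _), one_div]
      norm_num
    rw [h2] at h1
    simp only [if_neg hk, add_zero]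
    exact h1

/-- `|k|^m ≤ (1+k²)^{3/2}` for `m ≤ 3`. -/
lemma abs_pow_le_gauss (k : ℤ) (m : ℕ) (hm : m ≤ 3) :
    |(k : ℝ)| ^ m ≤ (1 + (k : ℝ) ^ 2) ^ ((3 : ℝ) / 2) := by
  have h1 : |(k : ℝ)| ≤ (1 + (k : ℝ) ^ 2) ^ ((1 : ℝ) / 2) := by
    rw [← Real.sqrt_eq_rpow]
    rw [show |(k:ℝ)| = Real.sqrt ((k:ℝ)^2) from (Real.sqrt_sq_eq_abs _).symm]
    exact Real.sqrt_le_sqrt (by nlinarith [sq_nonneg ((k:ℝ))])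
  calc |(k : ℝ)| ^ m ≤ ((1 + (k : ℝ) ^ 2) ^ ((1 : ℝ) / 2)) ^ m :=
        pow_le_pow_left₀ (abs_nonneg _) h1 m
    _ = (1 + (k : ℝ) ^ 2) ^ ((1 : ℝ) / 2 * m) := by
        rw [← Real.rpow_natCast ((1 + (k : ℝ) ^ 2) ^ ((1:ℝ)/2)) m, ← Real.rpow_mul (gauss_pos k).le]
    _ ≤ (1 + (k : ℝ) ^ 2) ^ ((3 : ℝ) / 2) := by
        apply Real.rpow_le_rpow_of_exponent_le (one_le_gauss k)
        have : (m : ℝ) ≤ 3 := by exact_mod_cast hm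
        linarith

end Aux4
section Aux5
open scoped ComplexConjugate

/-- The key algebraic cancellation. -/
lemma key_alg (P Q W Vc N K : ℂ) :
    (Q * Vc) * (P * (Complex.I * N) ^ 3 * W)
      - 3 / 2 * (Complex.I * K) * ((Q * (-(Complex.I * (N + K))) * Vc) * (P * (Complex.I * N) * W))
      + ((P * W) * (Q * (Complex.I * (-(N + K))) ^ 3 * Vc)
      - 3 / 2 * (Complex.I * K) * ((P * (Complex.I * N) * W) * (Q * (Complex.I * (-(N + K))) * Vc)))
      = Complex.I * K ^ 3 * ((Q * P) * (Vc * W)) := by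
  linear_combination (-(P * Q * W * Vc * Complex.I * K ^ 3)) * Complex.I_sq

lemma rpow_pow_two (x : ℝ) (hx : 0 ≤ x) (t : ℝ) : (x ^ t) ^ (2 : ℕ) = x ^ (t * 2) := by
  rw [← Real.rpow_natCast (x ^ t) 2, ← Real.rpow_mul hx]
  norm_num

/-- Weighted summability of the Fourier coefficients of `u ∈ H^{s₀}`. -/
lemma FC_weight {s₀ : ℝ} (hs₀ : 7 / 2 < s₀) {u : Torus → ℝ} (hu : MemHs s₀ u) :
    Summable (fun k : ℤ => (1 + (k : ℝ) ^ 2) ^ ((3 : ℝ) / 2) * ‖FC u k‖) ∧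
    ∑' k : ℤ, (1 + (k : ℝ) ^ 2) ^ ((3 : ℝ) / 2) * ‖FC u k‖
      ≤ Real.sqrt (∑' k : ℤ, (1 + (k : ℝ) ^ 2) ^ (3 - s₀)) * HsNorm s₀ u := by
  set f : ℤ → ℝ := fun k => (1 + (k : ℝ) ^ 2) ^ ((3 - s₀) / 2) with hf
  set g : ℤ → ℝ := fun k => (1 + (k : ℝ) ^ 2) ^ (s₀ / 2) * ‖FC u k‖ with hg
  have hfg : ∀ k, f k * g k = (1 + (k : ℝ) ^ 2) ^ ((3 : ℝ) / 2) * ‖FC u k‖ := by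
    intro k
    rw [hf, hg, ← mul_assoc, ← Real.rpow_add (gauss_pos k)]
    norm_num
    left
    ring_nf
  have hf2 : Summable (fun k => f k ^ 2) := by
    have : ∀ k : ℤ, f k ^ 2 = (1 + (k : ℝ) ^ 2) ^ (3 - s₀) := by
      intro k
      rw [hf, rpow_pow_two _ (gauss_pos k).le]
      norm_num
    rw [funext this]
    exact summable_gauss_rpow (by linarith)
  have hg2 : Summable (fun k => g k ^ 2) := by
    have : ∀ k : ℤ, g k ^ 2 = (1 + (k : ℝ) ^ 2) ^ s₀ * ‖FC u k‖ ^ 2 := by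
      intro k
      rw [hg, mul_pow, rpow_pow_two _ (gauss_pos k).le]
      norm_num
    rw [funext this]
    exact hu
  constructor
  · rw [← funext hfg]; exact summable_mul_of_sq hf2 hg2
  · rw [← funext hfg]
    calc ∑' k, f k * g k ≤ Real.sqrt (∑' k, f k ^ 2) * Real.sqrt (∑' k, g k ^ 2) :=
          tsum_mul_le_sqrt_mul_sqrt hf2 hg2
      _ = Real.sqrt (∑' k : ℤ, (1 + (k : ℝ) ^ 2) ^ (3 - s₀)) * HsNorm s₀ u := by
          congr 1
          · congr 1
            apply tsum_congr; intro k
            rw [hf, rpow_pow_two _ (gauss_pos k).le]; norm_num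
          · rw [HsNorm]
            congr 1
            apply tsum_congr; intro k
            rw [hg, mul_pow, rpow_pow_two _ (gauss_pos k).le]; norm_num

/-- `MemHs` is monotone. -/
lemma MemHs_mono {t t' : ℝ} (h : t ≤ t') {w : Torus → ℝ} (hw : MemHs t' w) : MemHs t w := by
  apply Summable.of_nonneg_of_le
    (fun n => by positivity)
    (fun n => ?_) hw
  apply mul_le_mul_of_nonneg_right
    (Real.rpow_le_rpow_of_exponent_le (one_le_gauss n) h) (by positivity)

/-- Square-summability of `|n|^s |n|^m ‖ŵ(n)‖`, for `m ≤ 3`, `w ∈ H^{s+3}`. -/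
lemma w_sq_summable {s : ℝ} (hs : 0 ≤ s) {w : Torus → ℝ} (hw : MemHs (s + 3) w)
    (m : ℕ) (hm : m ≤ 3) :
    Summable (fun n : ℤ => (|(n : ℝ)| ^ s * |(n : ℝ)| ^ m * ‖FC w n‖) ^ 2) := by
  apply Summable.of_nonneg_of_le (fun n => by positivity) (fun n => ?_) hw
  have e1 : (|(n : ℝ)| ^ s * |(n : ℝ)| ^ m * ‖FC w n‖) ^ 2
      = ((|(n : ℝ)| ^ s) ^ (2:ℕ) * (|(n : ℝ)| ^ m) ^ (2:ℕ)) * ‖FC w n‖ ^ 2 := by ring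
  rw [e1]
  have e2 : (1 + (n : ℝ) ^ 2) ^ (s + 3) = (1 + (n : ℝ) ^ 2) ^ s * (1 + (n : ℝ) ^ 2) ^ (3:ℕ) := by
    rw [← Real.rpow_natCast (1 + (n:ℝ)^2) 3, ← Real.rpow_add (gauss_pos n)]
    norm_num
  rw [e2]
  apply mul_le_mul_of_nonneg_right _ (sq_nonneg _)
  have h1 : (|(n : ℝ)| ^ s) ^ (2:ℕ) ≤ (1 + (n : ℝ) ^ 2) ^ s := by
    rw [rpow_sq_comm _ (abs_nonneg _), _root_.sq_abs]
    exact Real.rpow_le_rpow (sq_nonneg _) (by nlinarith [sq_nonneg ((n:ℝ))]) hs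
  have h2 : (|(n : ℝ)| ^ m) ^ (2:ℕ) ≤ (1 + (n : ℝ) ^ 2) ^ (3:ℕ) := by
    rw [← pow_mul, show m * 2 = 2 * m from by ring, pow_mul, _root_.sq_abs]
    calc ((n : ℝ) ^ 2) ^ m ≤ (1 + (n : ℝ) ^ 2) ^ m :=
          pow_le_pow_left₀ (sq_nonneg _) (by nlinarith [sq_nonneg ((n:ℝ))]) m
      _ ≤ (1 + (n : ℝ) ^ 2) ^ (3:ℕ) := pow_le_pow_right₀ (one_le_gauss n) hm
  calc (|(n : ℝ)| ^ s) ^ (2:ℕ) * (|(n : ℝ)| ^ m) ^ (2:ℕ)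
      ≤ (1 + (n : ℝ) ^ 2) ^ s * (1 + (n : ℝ) ^ 2) ^ (3:ℕ) := by
        apply mul_le_mul h1 h2 (by positivity) (by positivity)
  

/-- The same without the `|n|^m` factor, with the `HsNorm` bound. -/
lemma wX_summable {s : ℝ} (hs : 0 ≤ s) {w : Torus → ℝ} (hw : MemHs s w) :
    Summable (fun n : ℤ => (|(n : ℝ)| ^ s * ‖FC w n‖) ^ 2) := by
  apply Summable.of_nonneg_of_le (fun n => by positivity) (fun n => ?_) hw
  rw [mul_pow]
  apply mul_le_mul_of_nonneg_right _ (sq_nonneg _)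
  rw [rpow_sq_comm _ (abs_nonneg _), _root_.sq_abs]
  exact Real.rpow_le_rpow (sq_nonneg _) (by nlinarith [sq_nonneg ((n:ℝ))]) hs

lemma wX_le_HsNorm {s : ℝ} (hs : 0 ≤ s) {w : Torus → ℝ} (hw : MemHs s w) :
    ∑' n : ℤ, (|(n : ℝ)| ^ s * ‖FC w n‖) ^ 2 ≤ HsNorm s w ^ 2 := by
  have h2 : HsNorm s w ^ 2 = ∑' n : ℤ, (1 + (n : ℝ) ^ 2) ^ s * ‖FC w n‖ ^ 2 := by
    rw [HsNorm, Real.sq_sqrt (tsum_nonneg (fun n => by positivity))]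
  rw [h2]
  apply Summable.tsum_le_tsum _ (wX_summable hs hw) hw
  intro n
  rw [mul_pow]
  apply mul_le_mul_of_nonneg_right _ (sq_nonneg _)
  rw [rpow_sq_comm _ (abs_nonneg _), _root_.sq_abs]
  exact Real.rpow_le_rpow (sq_nonneg _) (by nlinarith [sq_nonneg ((n:ℝ))]) hs

end Aux5
section Main
open scoped ComplexConjugate

lemma cont_memLp_real (F : Torus → ℝ) (hF : Continuous F) :
    MemLp F 2 haarAddCircle := by
  obtain ⟨C, hC⟩ := isCompact_univ.exists_bound_of_continuousOn (hF.continuousOn (s := Set.univ))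
  exact (memLp_top_of_bound hF.aestronglyMeasurable C
    (Filter.Eventually.of_forall (fun x => hC x trivial))).mono_exponent le_top

set_option maxHeartbeats 2000000 in
theorem statement7' (s s₀ : ℝ) (hs : 0 ≤ s) (hs₀ : 7 / 2 < s₀) :
    ∃ C > (0 : ℝ), ∀ u u1 w a b c : Torus → ℝ,
      Continuous u → MemHs s₀ u →
      Continuous u1 → HasSymbol symDx u u1 →
      Continuous w → MemHs (s + 3) w →
      MemLp a 2 haarAddCircle → HasSymbol (fun n => symD s n * symDx n ^ 3) w a →
      Continuous b → HasSymbol (symD s) w b →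
      Continuous c → HasSymbol (fun n => symD s n * symDx n) w c →
      |inn3 u a b - 3 / 2 * inn3 u1 c c| ≤ C * HsNorm s₀ u * HsNorm s w ^ 2 := by
  set K0 : ℝ := Real.sqrt (∑' k : ℤ, (1 + (k : ℝ) ^ 2) ^ (3 - s₀)) with hK0
  have hK0nn : 0 ≤ K0 := Real.sqrt_nonneg _
  refine ⟨K0 / 2 + 1, by positivity, ?_⟩
  intro u u1 w a b c huc hu hu1c hu1 hwc hw ha hsa hbc hsb hcc hsc
  obtain ⟨huw_sum, huw_le⟩ := FC_weight hs₀ hu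
  set Wt : ℤ → ℝ := fun k => (1 + (k : ℝ) ^ 2) ^ ((3 : ℝ) / 2) * ‖FC u k‖ with hWt
  have hWt_nn : ∀ k, 0 ≤ Wt k := fun k => by positivity
  -- basic coefficient bounds for u
  have hgauss1 : ∀ k : ℤ, (1 : ℝ) ≤ (1 + (k : ℝ) ^ 2) ^ ((3 : ℝ) / 2) := by
    intro k
    calc (1:ℝ) = |(k:ℝ)| ^ (0:ℕ) := by norm_num
      _ ≤ _ := abs_pow_le_gauss k 0 (by norm_num)
  have hu_norm_le : ∀ k : ℤ, ‖FC u k‖ ≤ Wt k := by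
    intro k
    calc ‖FC u k‖ = 1 * ‖FC u k‖ := by ring
      _ ≤ Wt k := mul_le_mul_of_nonneg_right (hgauss1 k) (norm_nonneg _)
  have hu_sum : Summable (fun k : ℤ => ‖FC u k‖) :=
    Summable.of_nonneg_of_le (fun k => norm_nonneg _) hu_norm_le huw_sum
  have hFCu1 : ∀ k : ℤ, FC u1 k = Complex.I * (k : ℂ) * FC u k := fun k => hu1 k
  have hu1_norm : ∀ k : ℤ, ‖FC u1 k‖ = |(k : ℝ)| * ‖FC u k‖ := by
    intro k
    rw [hFCu1 k, norm_mul, norm_mul, Complex.norm_I, one_mul]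
    norm_num
  have hu1_norm_le : ∀ k : ℤ, ‖FC u1 k‖ ≤ Wt k := by
    intro k
    rw [hu1_norm k]
    apply mul_le_mul_of_nonneg_right _ (norm_nonneg _)
    calc |(k:ℝ)| = |(k:ℝ)| ^ (1:ℕ) := by norm_num
      _ ≤ _ := abs_pow_le_gauss k 1 (by norm_num)
  have hu1_sum : Summable (fun k : ℤ => ‖FC u1 k‖) :=
    Summable.of_nonneg_of_le (fun k => norm_nonneg _) hu1_norm_le huw_sum
  have hu3_le : ∀ k : ℤ, ‖FC u k‖ * |(k : ℝ)| ^ (3:ℕ) ≤ Wt k := by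
    intro k
    calc ‖FC u k‖ * |(k:ℝ)| ^ (3:ℕ)
        ≤ ‖FC u k‖ * ((1 + (k:ℝ)^2) ^ ((3:ℝ)/2)) :=
          mul_le_mul_of_nonneg_left (abs_pow_le_gauss k 3 le_rfl) (norm_nonneg _)
      _ = Wt k := by simp only [hWt]; ring
  -- norms of the Fourier coefficients of a, b, c
  have hsymD_norm : ∀ m : ℤ, ‖symD s m‖ = |(m : ℝ)| ^ s := by
    intro m
    rw [symD, Complex.norm_real, Real.norm_eq_abs,
      _root_.abs_of_nonneg (Real.rpow_nonneg (abs_nonneg _) _)]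
  have hsymDx_norm : ∀ m : ℤ, ‖symDx m‖ = |(m : ℝ)| := by
    intro m
    rw [symDx, norm_mul, Complex.norm_I, one_mul]
    norm_num
  set X : ℤ → ℝ := fun n => |(n : ℝ)| ^ s * ‖FC w n‖ with hX
  set Y : ℤ → ℝ := fun n => |(n : ℝ)| ^ s * |(n : ℝ)| ^ (3:ℕ) * ‖FC w n‖ with hY
  set Z : ℤ → ℝ := fun n => |(n : ℝ)| ^ s * |(n : ℝ)| ^ (1:ℕ) * ‖FC w n‖ with hZ
  have hXnn : ∀ n, 0 ≤ X n := fun n => by positivity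
  have hYnn : ∀ n, 0 ≤ Y n := fun n => by positivity
  have hZnn : ∀ n, 0 ≤ Z n := fun n => by positivity
  have hb_norm : ∀ m : ℤ, ‖FC b m‖ = X m := by
    intro m
    rw [hsb m, norm_mul, hsymD_norm]
  have ha_norm : ∀ m : ℤ, ‖FC a m‖ = Y m := by
    intro m
    rw [hsa m, norm_mul, norm_mul, norm_pow, hsymD_norm, hsymDx_norm]
  have hc_norm : ∀ m : ℤ, ‖FC c m‖ = Z m := by
    intro m
    rw [hsc m, norm_mul, norm_mul, hsymD_norm, hsymDx_norm]
    simp only [hZ, pow_one]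
  have hX2 : Summable (fun n => X n ^ 2) := wX_summable hs (MemHs_mono (by linarith) hw)
  have hY2 : Summable (fun n => Y n ^ 2) := w_sq_summable hs hw 3 le_rfl
  have hZ2 : Summable (fun n => Z n ^ 2) := w_sq_summable hs hw 1 (by norm_num)
  have hXle : ∑' n, X n ^ 2 ≤ HsNorm s w ^ 2 := wX_le_HsNorm hs (MemHs_mono (by linarith) hw)
  -- shifts
  have hshift_sum : ∀ (f : ℤ → ℝ), Summable f → ∀ k : ℤ, Summable (fun n => f (n + k)) :=
    fun f hf k => ((Equiv.addRight k).summable_iff (f := f)).mpr hf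
  have hshift_tsum : ∀ (f : ℤ → ℝ) (k : ℤ), ∑' n, f (n + k) = ∑' n, f n :=
    fun f k => (Equiv.addRight k).tsum_eq f
  set MX : ℝ := Real.sqrt (∑' n, X n ^ 2) with hMX
  set MY : ℝ := Real.sqrt (∑' n, Y n ^ 2) with hMY
  set MZ : ℝ := Real.sqrt (∑' n, Z n ^ 2) with hMZ
  -- the three inner sums
  set A : ℤ → ℂ := fun k => ∑' n : ℤ, conj (FC b (n + k)) * FC a n with hA
  set B : ℤ → ℂ := fun k => ∑' n : ℤ, conj (FC c (n + k)) * FC c n with hB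
  set S : ℤ → ℂ := fun k => ∑' n : ℤ,
    ((|((n + k : ℤ) : ℝ)| ^ s * |(n : ℝ)| ^ s : ℝ) : ℂ) * (conj (FC w (n + k)) * FC w n) with hS
  -- summability of the inner sums
  have hAnorm : ∀ k n : ℤ, ‖conj (FC b (n + k)) * FC a n‖ = X (n + k) * Y n := by
    intro k n
    rw [norm_mul, RCLike.norm_conj, hb_norm, ha_norm]
  have hAsum : ∀ k : ℤ, Summable (fun n : ℤ => conj (FC b (n + k)) * FC a n) := by
    intro k
    apply Summable.of_norm
    rw [funext (hAnorm k)]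
    exact summable_mul_of_sq (hshift_sum _ hX2 k) hY2
  have hBnorm : ∀ k n : ℤ, ‖conj (FC c (n + k)) * FC c n‖ = Z (n + k) * Z n := by
    intro k n
    rw [norm_mul, RCLike.norm_conj, hc_norm, hc_norm]
  have hBsum : ∀ k : ℤ, Summable (fun n : ℤ => conj (FC c (n + k)) * FC c n) := by
    intro k
    apply Summable.of_norm
    rw [funext (hBnorm k)]
    exact summable_mul_of_sq (hshift_sum _ hZ2 k) hZ2
  have hSnorm : ∀ k n : ℤ, ‖((|((n + k : ℤ) : ℝ)| ^ s * |(n : ℝ)| ^ s : ℝ) : ℂ)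
      * (conj (FC w (n + k)) * FC w n)‖ = X (n + k) * X n := by
    intro k n
    rw [norm_mul, norm_mul, RCLike.norm_conj, Complex.norm_real, Real.norm_eq_abs,
      _root_.abs_of_nonneg (by positivity), hX]
    push_cast
    ring
  have hSsum : ∀ k : ℤ, Summable (fun n : ℤ =>
      ((|((n + k : ℤ) : ℝ)| ^ s * |(n : ℝ)| ^ s : ℝ) : ℂ) * (conj (FC w (n + k)) * FC w n)) := by
    intro k
    apply Summable.of_norm
    rw [funext (hSnorm k)]
    exact summable_mul_of_sq (hshift_sum _ hX2 k) hX2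
  -- bounds on the inner sums
  have hshift_cs : ∀ (f g : ℤ → ℝ), (∀ n, 0 ≤ f n) → (∀ n, 0 ≤ g n) →
      Summable (fun n => f n ^ 2) → Summable (fun n => g n ^ 2) → ∀ k : ℤ,
      ∑' n, f (n + k) * g n ≤ Real.sqrt (∑' n, f n ^ 2) * Real.sqrt (∑' n, g n ^ 2) := by
    intro f g hf0 hg0 hf2 hg2 k
    calc ∑' n, f (n + k) * g n
        ≤ Real.sqrt (∑' n, f (n + k) ^ 2) * Real.sqrt (∑' n, g n ^ 2) :=
          tsum_mul_le_sqrt_mul_sqrt (hshift_sum (fun n => f n ^ 2) hf2 k) hg2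
      _ = Real.sqrt (∑' n, f n ^ 2) * Real.sqrt (∑' n, g n ^ 2) := by
          rw [hshift_tsum (fun n => f n ^ 2) k]
  have hAle : ∀ k : ℤ, ‖A k‖ ≤ MX * MY := by
    intro k
    calc ‖A k‖ ≤ ∑' n, ‖conj (FC b (n + k)) * FC a n‖ := norm_tsum_le_tsum_norm
          (by rw [funext (hAnorm k)]; exact summable_mul_of_sq (hshift_sum _ hX2 k) hY2)
      _ = ∑' n, X (n + k) * Y n := by rw [funext (hAnorm k)]
      _ ≤ MX * MY := hshift_cs X Y hXnn hYnn hX2 hY2 k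
  have hBle : ∀ k : ℤ, ‖B k‖ ≤ MZ * MZ := by
    intro k
    calc ‖B k‖ ≤ ∑' n, ‖conj (FC c (n + k)) * FC c n‖ := norm_tsum_le_tsum_norm
          (by rw [funext (hBnorm k)]; exact summable_mul_of_sq (hshift_sum _ hZ2 k) hZ2)
      _ = ∑' n, Z (n + k) * Z n := by rw [funext (hBnorm k)]
      _ ≤ MZ * MZ := hshift_cs Z Z hZnn hZnn hZ2 hZ2 k
  have hSle : ∀ k : ℤ, ‖S k‖ ≤ HsNorm s w ^ 2 := by
    intro k
    calc ‖S k‖ ≤ ∑' n, ‖((|((n + k : ℤ) : ℝ)| ^ s * |(n : ℝ)| ^ s : ℝ) : ℂ)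
          * (conj (FC w (n + k)) * FC w n)‖ := norm_tsum_le_tsum_norm
          (by rw [funext (hSnorm k)]; exact summable_mul_of_sq (hshift_sum _ hX2 k) hX2)
      _ = ∑' n, X (n + k) * X n := by rw [funext (hSnorm k)]
      _ ≤ MX * MX := hshift_cs X X hXnn hXnn hX2 hX2 k
      _ = ∑' n, X n ^ 2 := Real.mul_self_sqrt (tsum_nonneg (fun n => sq_nonneg _))
      _ ≤ HsNorm s w ^ 2 := hXle
  -- expansions of the trilinear integrals
  have hE1 : ((inn3 u a b : ℝ) : ℂ) = ∑' k : ℤ, FC u k * A k :=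
    inn3_eq u b a huc hu_sum hbc ha
  have hE2 : ((inn3 u1 c c : ℝ) : ℂ) = ∑' k : ℤ, FC u1 k * B k :=
    inn3_eq u1 c c hu1c hu1_sum hcc (cont_memLp_real c hcc)
  -- the key pointwise identity
  have hABkey : ∀ k : ℤ, A k - 3 / 2 * (Complex.I * (k : ℂ)) * B k
      = Complex.I * (k : ℂ) ^ 3 / 2 * S k := by
    intro k
    set F : ℤ → ℂ := fun n => conj (FC b (n + k)) * FC a n
      - 3 / 2 * (Complex.I * (k : ℂ)) * (conj (FC c (n + k)) * FC c n) with hF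
    have hFsum : Summable F := (hAsum k).sub ((hBsum k).mul_left _)
    set e : ℤ ≃ ℤ := (Equiv.neg ℤ).trans (Equiv.addRight (-k)) with he
    have hen : ∀ n : ℤ, e n = -(n + k) := by
      intro n
      rw [he]
      simp only [Equiv.trans_apply, Equiv.neg_apply, Equiv.coe_addRight]
      ring
    have hFe : Summable (fun n => F (e n)) := e.summable_iff.mpr hFsum
    have hpoint : ∀ n : ℤ, F n + F (e n) = Complex.I * (k : ℂ) ^ 3 *
        (((|((n + k : ℤ) : ℝ)| ^ s * |(n : ℝ)| ^ s : ℝ) : ℂ)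
          * (conj (FC w (n + k)) * FC w n)) := by
      intro n
      rw [hen n]
      simp only [hF]
      have hidx : (-(n + k)) + k = -n := by ring
      -- coefficient identities
      have e1 : conj (FC b (n + k)) = ((|((n + k : ℤ) : ℝ)| ^ s : ℝ) : ℂ)
          * conj (FC w (n + k)) := by
        rw [hsb (n + k), map_mul, symD, Complex.conj_ofReal]
      have e2 : FC a n = ((|(n : ℝ)| ^ s : ℝ) : ℂ)
          * (Complex.I * (n : ℂ)) ^ 3 * FC w n := hsa n
      have e3 : conj (FC c (n + k)) = ((|((n + k : ℤ) : ℝ)| ^ s : ℝ) : ℂ)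
          * (-(Complex.I * ((n : ℂ) + (k : ℂ)))) * conj (FC w (n + k)) := by
        rw [hsc (n + k)]
        simp only [symD, symDx, map_mul, Complex.conj_ofReal, Complex.conj_I, map_intCast]
        push_cast
        ring
      have e4 : FC c n = ((|(n : ℝ)| ^ s : ℝ) : ℂ)
          * (Complex.I * (n : ℂ)) * FC w n := hsc n
      have e5 : conj (FC b ((-(n + k)) + k)) = ((|(n : ℝ)| ^ s : ℝ) : ℂ) * FC w n := by
        rw [hidx, hsb (-n), FC_neg w n]
        simp only [symD, map_mul, Complex.conj_ofReal, Complex.conj_conj]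
        push_cast
        rw [abs_neg]
      have e6 : FC a (-(n + k)) = ((|((n + k : ℤ) : ℝ)| ^ s : ℝ) : ℂ)
          * (Complex.I * (-((n : ℂ) + (k : ℂ)))) ^ 3 * conj (FC w (n + k)) := by
        rw [hsa (-(n + k)), FC_neg w (n + k)]
        simp only [symD, symDx]
        push_cast
        rw [abs_neg]
      have e7 : conj (FC c ((-(n + k)) + k)) = ((|(n : ℝ)| ^ s : ℝ) : ℂ)
          * (Complex.I * (n : ℂ)) * FC w n := by
        rw [hidx, hsc (-n), FC_neg w n]
        simp only [symD, symDx, map_mul, Complex.conj_ofReal, Complex.conj_I, map_intCast,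
          Complex.conj_conj]
        push_cast
        rw [abs_neg]
        ring
      have e8 : FC c (-(n + k)) = ((|((n + k : ℤ) : ℝ)| ^ s : ℝ) : ℂ)
          * (Complex.I * (-((n : ℂ) + (k : ℂ)))) * conj (FC w (n + k)) := by
        rw [hsc (-(n + k)), FC_neg w (n + k)]
        simp only [symD, symDx]
        push_cast
        rw [abs_neg]
      have e9 : ((|((n + k : ℤ) : ℝ)| ^ s * |(n : ℝ)| ^ s : ℝ) : ℂ)
          = ((|((n + k : ℤ) : ℝ)| ^ s : ℝ) : ℂ) * ((|(n : ℝ)| ^ s : ℝ) : ℂ) := by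
        push_cast
        ring
      rw [e1, e2, e3, e4, e5, e6, e7, e8, e9]
      exact key_alg _ _ _ _ _ _
    have hhalf : A k - 3 / 2 * (Complex.I * (k : ℂ)) * B k = ∑' n, F n := by
      show (∑' n : ℤ, conj (FC b (n + k)) * FC a n)
        - 3 / 2 * (Complex.I * (k : ℂ)) * (∑' n : ℤ, conj (FC c (n + k)) * FC c n)
        = ∑' n, F n
      rw [← tsum_mul_left, ← Summable.tsum_sub (hAsum k) ((hBsum k).mul_left _)]
    have h2 : (2 : ℂ) * ∑' n, F n = Complex.I * (k : ℂ) ^ 3 * S k := by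
      calc (2 : ℂ) * ∑' n, F n = (∑' n, F n) + ∑' n, F (e n) := by
            rw [e.tsum_eq F]; ring
        _ = ∑' n, (F n + F (e n)) := (Summable.tsum_add hFsum hFe).symm
        _ = ∑' n, Complex.I * (k : ℂ) ^ 3 *
            (((|((n + k : ℤ) : ℝ)| ^ s * |(n : ℝ)| ^ s : ℝ) : ℂ)
              * (conj (FC w (n + k)) * FC w n)) := tsum_congr hpoint
        _ = Complex.I * (k : ℂ) ^ 3 * S k := by
            rw [hS]
            exact tsum_mul_left
    linear_combination hhalf + (1 / 2 : ℂ) * h2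
  have hkey : ∀ k : ℤ, FC u k * A k - 3 / 2 * (FC u1 k * B k)
      = FC u k * (Complex.I * (k : ℂ) ^ 3 / 2 * S k) := by
    intro k
    rw [hFCu1 k]
    linear_combination (FC u k) * hABkey k
  -- summability of the outer sums
  have hsum1 : Summable (fun k : ℤ => FC u k * A k) := by
    apply Summable.of_norm_bounded (huw_sum.mul_right (MX * MY))
    intro k
    rw [norm_mul]
    exact mul_le_mul (hu_norm_le k) (hAle k) (norm_nonneg _) (hWt_nn k)
  have hsum2 : Summable (fun k : ℤ => FC u1 k * B k) := by
    apply Summable.of_norm_bounded (huw_sum.mul_right (MZ * MZ))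
    intro k
    rw [norm_mul]
    exact mul_le_mul (hu1_norm_le k) (hBle k) (norm_nonneg _) (hWt_nn k)
  have hbig : ((inn3 u a b - 3 / 2 * inn3 u1 c c : ℝ) : ℂ)
      = ∑' k : ℤ, FC u k * (Complex.I * (k : ℂ) ^ 3 / 2 * S k) := by
    have hcast : ((inn3 u a b - 3 / 2 * inn3 u1 c c : ℝ) : ℂ)
        = ((inn3 u a b : ℝ) : ℂ) - (3 / 2 : ℂ) * ((inn3 u1 c c : ℝ) : ℂ) := by
      push_cast
      ring
    rw [hcast, hE1, hE2, ← tsum_mul_left, ← Summable.tsum_sub hsum1 (hsum2.mul_left _)]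
    apply tsum_congr
    intro k
    rw [← hkey k]
  -- final estimate
  have hHsWsq_nn : (0 : ℝ) ≤ HsNorm s w ^ 2 := sq_nonneg _
  have hHsU_nn : (0 : ℝ) ≤ HsNorm s₀ u := Real.sqrt_nonneg _
  have hterm_norm : ∀ k : ℤ, ‖FC u k * (Complex.I * (k : ℂ) ^ 3 / 2 * S k)‖
      ≤ Wt k * (HsNorm s w ^ 2 / 2) := by
    intro k
    have hkn : ‖(Complex.I * (k : ℂ) ^ 3 / 2 : ℂ)‖ = |(k : ℝ)| ^ (3:ℕ) / 2 := by
      rw [norm_div, norm_mul, Complex.norm_I, one_mul, norm_pow]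
      congr 1
      · congr 1
        rw [Complex.norm_intCast]
      · norm_num
    rw [norm_mul, norm_mul, hkn]
    calc ‖FC u k‖ * (|(k : ℝ)| ^ (3:ℕ) / 2 * ‖S k‖)
        ≤ ‖FC u k‖ * (|(k : ℝ)| ^ (3:ℕ) / 2 * HsNorm s w ^ 2) := by
          apply mul_le_mul_of_nonneg_left _ (norm_nonneg _)
          apply mul_le_mul_of_nonneg_left (hSle k) (by positivity)
      _ = (‖FC u k‖ * |(k : ℝ)| ^ (3:ℕ)) * (HsNorm s w ^ 2 / 2) := by ring
      _ ≤ Wt k * (HsNorm s w ^ 2 / 2) :=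
          mul_le_mul_of_nonneg_right (hu3_le k) (by positivity)
  have hsum3n : Summable (fun k : ℤ => ‖FC u k * (Complex.I * (k : ℂ) ^ 3 / 2 * S k)‖) :=
    Summable.of_nonneg_of_le (fun k => norm_nonneg _) hterm_norm
      (huw_sum.mul_right _)
  have habs : |inn3 u a b - 3 / 2 * inn3 u1 c c|
      = ‖((inn3 u a b - 3 / 2 * inn3 u1 c c : ℝ) : ℂ)‖ := by
    rw [Complex.norm_real, Real.norm_eq_abs]
  rw [habs, hbig]
  calc ‖∑' k : ℤ, FC u k * (Complex.I * (k : ℂ) ^ 3 / 2 * S k)‖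
      ≤ ∑' k : ℤ, ‖FC u k * (Complex.I * (k : ℂ) ^ 3 / 2 * S k)‖ :=
        norm_tsum_le_tsum_norm hsum3n
    _ ≤ ∑' k : ℤ, Wt k * (HsNorm s w ^ 2 / 2) :=
        Summable.tsum_le_tsum hterm_norm hsum3n (huw_sum.mul_right _)
    _ = (∑' k : ℤ, Wt k) * (HsNorm s w ^ 2 / 2) := tsum_mul_right
    _ ≤ (K0 * HsNorm s₀ u) * (HsNorm s w ^ 2 / 2) :=
        mul_le_mul_of_nonneg_right huw_le (by positivity)
    _ ≤ (K0 / 2 + 1) * HsNorm s₀ u * HsNorm s w ^ 2 := by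
        nlinarith [mul_nonneg hHsU_nn hHsWsq_nn, mul_nonneg hHsU_nn hHsWsq_nn]

end Main
/-- `|⟨u D^s∂ₓ³w, D^s w⟩ − (3/2)⟨∂ₓu, (D^s∂ₓ w)²⟩| ≤ C‖u‖_{H^{s₀}}‖w‖_{H^s}²`. -/
theorem statement7 (s s₀ : ℝ) (hs : 0 ≤ s) (hs₀ : 7 / 2 < s₀) :
    ∃ C > (0 : ℝ), ∀ u u1 w a b c : Torus → ℝ,
      Continuous u → MemHs s₀ u →
      Continuous u1 → HasSymbol symDx u u1 →
      Continuous w → MemHs (s + 3) w →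
      MemLp a 2 haarAddCircle → HasSymbol (fun n => symD s n * symDx n ^ 3) w a →
      Continuous b → HasSymbol (symD s) w b →
      Continuous c → HasSymbol (fun n => symD s n * symDx n) w c →
      |inn3 u a b - 3 / 2 * inn3 u1 c c| ≤ C * HsNorm s₀ u * HsNorm s w ^ 2 := by
  exact statement7' s s₀ hs hs₀

end
end

section
/- Let s ≥ 0, s₀ > 5/2. There exists C > 0 such that for all u ∈ H^{s₀}(𝕋) and w ∈ H^{s+2}(𝕋): |⟨u, (HD^s∂_x w)²⟩ − ⟨u, (D^s∂_x w)²⟩| ≤ C‖u‖_{H^{s₀}}‖w‖_{H^s}², where H is the Hilbert transform. -/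
open MeasureTheory Real Complex AddCircle
open scoped BigOperators ENNReal

noncomputable section

namespace S8

lemma norm_fourier (n : ℤ) (x : Torus) : ‖fourier n x‖ = 1 := by
  rw [fourier_apply]; exact Circle.norm_coe _

lemma integrableC {f : Torus → ℂ} (hf : Continuous f) : Integrable f haarAddCircle :=
  hf.integrable_of_hasCompactSupport (HasCompactSupport.of_compactSpace f)

lemma fourier_inversion {g : Torus → ℝ} (hg : Continuous g)
    (h1 : Summable fun n => ‖FC g n‖) (x : Torus) :
    HasSum (fun n => FC g n * fourier n x) ((g x : ℂ)) := by
  set G : C(Torus, ℂ) := ⟨fun y => (g y : ℂ), Complex.continuous_ofReal.comp hg⟩ with hG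
  have hc : ∀ n, fourierCoeff (G : Torus → ℂ) n = FC g n := fun n => rfl
  have hs : Summable (fourierCoeff (G : Torus → ℂ)) := by
    refine Summable.of_norm ?_
    simpa [hc] using h1
  have := has_pointwise_sum_fourier_series_of_summable (f := G) hs x
  simp only [hc, smul_eq_mul] at this; exact this

lemma FC_bound {f : Torus → ℝ} (hf : Continuous f) :
    ∃ M : ℝ, 0 ≤ M ∧ ∀ n, ‖FC f n‖ ≤ M := by
  set F : C(Torus, ℂ) := ⟨fun y => (f y : ℂ), Complex.continuous_ofReal.comp hf⟩ with hF
  refine ⟨‖F‖, norm_nonneg _, fun n => ?_⟩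
  have : FC f n = ∫ t : Torus, fourier (-n) t • F t ∂haarAddCircle := rfl
  rw [this]
  have hb : ∀ t : Torus, ‖fourier (-n) t • F t‖ ≤ ‖F‖ := by
    intro t
    rw [norm_smul, norm_fourier, one_mul]
    exact F.norm_coe_le_norm t
  calc ‖∫ t : Torus, fourier (-n) t • F t ∂haarAddCircle‖
      ≤ ‖F‖ * (haarAddCircle Set.univ).toReal := by
        exact norm_integral_le_of_norm_le_const (Filter.Eventually.of_forall hb)
    _ = ‖F‖ := by simp

end S8
namespace S8

lemma inn3_fourier {f g h : Torus → ℝ} (hf : Continuous f) (hg : Continuous g)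
    (hh : Continuous h)
    (hg1 : Summable fun n => ‖FC g n‖) (hh1 : Summable fun n => ‖FC h n‖) :
    ((inn3 f g h : ℝ) : ℂ) = ∑' p : ℤ × ℤ, FC f (-(p.1 + p.2)) * FC g p.1 * FC h p.2 := by
  set Fc : C(Torus, ℂ) := ⟨fun y => (f y : ℂ), Complex.continuous_ofReal.comp hf⟩ with hFc
  set F : (ℤ × ℤ) → Torus → ℂ := fun p x =>
    (f x : ℂ) * (FC g p.1 * fourier p.1 x * (FC h p.2 * fourier p.2 x)) with hFdef
  have hFcont : ∀ p, Continuous (F p) := fun p =>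
    (Complex.continuous_ofReal.comp hf).mul
      (((continuous_const.mul (fourier p.1).continuous).mul
        (continuous_const.mul (fourier p.2).continuous)))
  have hFint : ∀ p, Integrable (F p) haarAddCircle := fun p => integrableC (hFcont p)
  have hFnorm : ∀ p x, ‖F p x‖ = ‖f x‖ * (‖FC g p.1‖ * ‖FC h p.2‖) := by
    intro p x
    simp only [hFdef, norm_mul, norm_fourier, Complex.norm_real, mul_one]
  have hfM : ∀ x : Torus, ‖f x‖ ≤ ‖Fc‖ := by
    intro x
    have := Fc.norm_coe_le_norm x
    simpa [hFc, Complex.norm_real] using this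
  have hIntLe : ∀ p, (∫ x : Torus, ‖F p x‖ ∂haarAddCircle)
      ≤ ‖Fc‖ * (‖FC g p.1‖ * ‖FC h p.2‖) := by
    intro p
    calc (∫ x : Torus, ‖F p x‖ ∂haarAddCircle)
        ≤ ∫ _x : Torus, ‖Fc‖ * (‖FC g p.1‖ * ‖FC h p.2‖) ∂haarAddCircle := by
          refine integral_mono (hFint p).norm (integrable_const _) (fun x => ?_)
          rw [hFnorm p x]
          exact mul_le_mul_of_nonneg_right (hfM x) (by positivity)
      _ = ‖Fc‖ * (‖FC g p.1‖ * ‖FC h p.2‖) := by simp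
  have hsumM : Summable fun p : ℤ × ℤ => ‖Fc‖ * (‖FC g p.1‖ * ‖FC h p.2‖) :=
    (Summable.mul_of_nonneg hg1 hh1 (fun _ => norm_nonneg _) (fun _ => norm_nonneg _)).mul_left _
  have hsum_int : Summable fun p : ℤ × ℤ => ∫ x : Torus, ‖F p x‖ ∂haarAddCircle :=
    Summable.of_nonneg_of_le (fun p => integral_nonneg (fun x => norm_nonneg _)) hIntLe hsumM
  have key1 : ∑' p : ℤ × ℤ, (∫ x : Torus, F p x ∂haarAddCircle)
      = ∫ x : Torus, (∑' p : ℤ × ℤ, F p x) ∂haarAddCircle :=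
    integral_tsum_of_summable_integral_norm hFint hsum_int
  have key2 : ∀ x : Torus, ∑' p : ℤ × ℤ, F p x = (f x : ℂ) * ((g x : ℂ) * (h x : ℂ)) := by
    intro x
    have hgs : Summable fun m : ℤ => ‖FC g m * fourier m x‖ := by
      simpa [norm_mul, norm_fourier, Circle.norm_coe] using hg1
    have hhs : Summable fun k : ℤ => ‖FC h k * fourier k x‖ := by
      simpa [norm_mul, norm_fourier, Circle.norm_coe] using hh1
    have hprod := tsum_mul_tsum_of_summable_norm hgs hhs
    rw [(fourier_inversion hg hg1 x).tsum_eq, (fourier_inversion hh hh1 x).tsum_eq] at hprod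
    calc ∑' p : ℤ × ℤ, F p x
        = (f x : ℂ) * ∑' p : ℤ × ℤ, (FC g p.1 * fourier p.1 x) * (FC h p.2 * fourier p.2 x) := by
          rw [← tsum_mul_left]
      _ = (f x : ℂ) * ((g x : ℂ) * (h x : ℂ)) := by rw [← hprod]
  have key3 : ∀ p : ℤ × ℤ, (∫ x : Torus, F p x ∂haarAddCircle)
      = FC f (-(p.1 + p.2)) * FC g p.1 * FC h p.2 := by
    intro p
    have e1 : ∀ x : Torus, F p x
        = (FC g p.1 * FC h p.2) * ((f x : ℂ) * fourier (p.1 + p.2) x) := by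
      intro x
      rw [hFdef]
      simp only [fourier_add]
      ring
    have e2 : FC f (-(p.1 + p.2)) = ∫ x : Torus, (f x : ℂ) * fourier (p.1 + p.2) x ∂haarAddCircle := by
      rw [FC, fourierCoeff]
      simp only [neg_neg, smul_eq_mul]
      exact integral_congr_ae (Filter.Eventually.of_forall (fun x => mul_comm _ _))
    calc (∫ x : Torus, F p x ∂haarAddCircle)
        = ∫ x : Torus, (FC g p.1 * FC h p.2) • ((f x : ℂ) * fourier (p.1 + p.2) x) ∂haarAddCircle := by
          simp only [smul_eq_mul]
          exact integral_congr_ae (Filter.Eventually.of_forall e1)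
      _ = (FC g p.1 * FC h p.2) • ∫ x : Torus, (f x : ℂ) * fourier (p.1 + p.2) x ∂haarAddCircle :=
          integral_smul _ _
      _ = FC f (-(p.1 + p.2)) * FC g p.1 * FC h p.2 := by
          rw [← e2, smul_eq_mul]; ring
  calc ((inn3 f g h : ℝ) : ℂ)
      = ∫ x : Torus, ((f x * g x * h x : ℝ) : ℂ) ∂haarAddCircle := by
        rw [inn3]; exact integral_ofReal.symm
    _ = ∫ x : Torus, (∑' p : ℤ × ℤ, F p x) ∂haarAddCircle := by
        refine integral_congr_ae (Filter.Eventually.of_forall (fun x => ?_))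
        show ((f x * g x * h x : ℝ) : ℂ) = ∑' p : ℤ × ℤ, F p x
        rw [key2 x]; push_cast; ring
    _ = ∑' p : ℤ × ℤ, (∫ x : Torus, F p x ∂haarAddCircle) := key1.symm
    _ = ∑' p : ℤ × ℤ, FC f (-(p.1 + p.2)) * FC g p.1 * FC h p.2 := by
        exact tsum_congr key3

end S8
namespace S8

lemma FC_neg (f : Torus → ℝ) (n : ℤ) : FC f (-n) = (starRingEnd ℂ) (FC f n) := by
  rw [FC, FC, fourierCoeff, fourierCoeff, ← integral_conj]
  refine integral_congr_ae (Filter.Eventually.of_forall (fun x => ?_))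
  simp [smul_eq_mul, map_mul, fourier_neg, Complex.conj_ofReal, neg_neg]

lemma norm_FC_neg (f : Torus → ℝ) (n : ℤ) : ‖FC f (-n)‖ = ‖FC f n‖ := by
  rw [FC_neg]; exact RCLike.norm_conj _

lemma tsum_cs {f g : ℤ → ℝ} (hf0 : ∀ n, 0 ≤ f n) (hg0 : ∀ n, 0 ≤ g n)
    (hf : Summable fun n => f n ^ 2) (hg : Summable fun n => g n ^ 2) :
    Summable (fun n => f n * g n) ∧
      ∑' n, f n * g n ≤ Real.sqrt (∑' n, f n ^ 2) * Real.sqrt (∑' n, g n ^ 2) := by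
  have hs : Summable fun n => f n * g n := by
    refine Summable.of_nonneg_of_le (fun n => mul_nonneg (hf0 n) (hg0 n)) (fun n => ?_)
      ((hf.add hg).mul_left (1/2 : ℝ))
    nlinarith [sq_nonneg (f n - g n)]
  refine ⟨hs, Summable.tsum_le_of_sum_le hs (fun S => ?_)⟩
  have h1 := Finset.sum_mul_sq_le_sq_mul_sq S f g
  have h2 : ∑ i ∈ S, f i * g i ≤ Real.sqrt ((∑ i ∈ S, f i ^ 2) * ∑ i ∈ S, g i ^ 2) := by
    rw [← Real.sqrt_sq (Finset.sum_nonneg (fun i _ => mul_nonneg (hf0 i) (hg0 i)))]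
    exact Real.sqrt_le_sqrt h1
  refine h2.trans ?_
  rw [Real.sqrt_mul (Finset.sum_nonneg (fun i _ => sq_nonneg _))]
  gcongr
  · exact Summable.sum_le_tsum S (fun i _ => sq_nonneg _) hf
  · exact Summable.sum_le_tsum S (fun i _ => sq_nonneg _) hg

lemma summable_jap {t : ℝ} (ht : t < -(1/2)) :
    Summable fun n : ℤ => (1 + (n : ℝ) ^ 2) ^ t := by
  have hb : (1 : ℝ) < -(2 * t) := by linarith
  have hg : Summable fun n : ℤ => |(n : ℝ)| ^ (2 * t) := by
    simpa using Real.summable_abs_int_rpow hb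
  have hδ : Summable fun n : ℤ => (if n = 0 then (1 : ℝ) else 0) := by
    refine summable_of_ne_finset_zero (s := {0}) (fun b hb => ?_)
    simp only [Finset.mem_singleton] at hb
    exact if_neg hb
  refine Summable.of_nonneg_of_le (fun n => Real.rpow_nonneg (by positivity) _)
    (fun n => ?_) (hg.add hδ)
  rcases eq_or_ne n 0 with hn | hn
  · subst hn
    simp only [Int.cast_zero, if_pos rfl]
    have : ((1 : ℝ) + 0 ^ 2) ^ t = 1 := by norm_num
    rw [this]
    have h00 : (0 : ℝ) ≤ |((0:ℤ) : ℝ)| ^ (2 * t) := Real.rpow_nonneg (abs_nonneg _) _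
    push_cast at h00 ⊢
    linarith
  · have hn' : (0 : ℝ) < (n : ℝ) ^ 2 := by
      have : (n : ℝ) ≠ 0 := Int.cast_ne_zero.2 hn
      positivity
    have h1 : ((1 : ℝ) + (n : ℝ) ^ 2) ^ t ≤ ((n : ℝ) ^ 2) ^ t :=
      Real.rpow_le_rpow_of_nonpos hn' (by linarith) (by linarith)
    have h2 : ((n : ℝ) ^ 2) ^ t = |(n : ℝ)| ^ (2 * t) := by
      rw [← _root_.sq_abs, ← Real.rpow_natCast |(n : ℝ)| 2, ← Real.rpow_mul (abs_nonneg _)]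
      norm_num
    rw [if_neg hn, add_zero]
    rw [h2] at h1
    exact h1

lemma conv_eval {a c : ℤ → ℝ} (ha0 : ∀ n, 0 ≤ a n) (hc0 : ∀ n, 0 ≤ c n)
    (ha : Summable a) (hc : Summable c) :
    Summable (fun p : ℤ × ℤ => a (p.1 + p.2) * c p.1) ∧
      ∑' p : ℤ × ℤ, a (p.1 + p.2) * c p.1 = (∑' n, a n) * (∑' n, c n) := by
  have hshift : ∀ m : ℤ, Summable (fun k => a (m + k)) := fun m =>
    ha.comp_injective (add_right_injective m)
  have htshift : ∀ m : ℤ, ∑' k, a (m + k) = ∑' n, a n := fun m => by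
    simpa [Equiv.coe_addLeft] using (Equiv.addLeft m).tsum_eq a
  have h0 : ∀ p : ℤ × ℤ, 0 ≤ a (p.1 + p.2) * c p.1 := fun p =>
    mul_nonneg (ha0 _) (hc0 _)
  have hsum : Summable (fun p : ℤ × ℤ => a (p.1 + p.2) * c p.1) := by
    rw [summable_prod_of_nonneg h0]
    constructor
    · intro m
      exact (hshift m).mul_right (c m)
    · refine Summable.congr (hc.mul_left (∑' n, a n)) (fun m => ?_)
      show (∑' n, a n) * c m = ∑' k : ℤ, a (m + k) * c m
      rw [tsum_mul_right, htshift m]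
  refine ⟨hsum, ?_⟩
  rw [Summable.tsum_prod hsum]
  calc ∑' m : ℤ, ∑' k : ℤ, a (m + k) * c m
      = ∑' m : ℤ, (∑' n, a n) * c m := by
        refine tsum_congr (fun m => ?_)
        rw [tsum_mul_right, htshift m]
    _ = (∑' n, a n) * (∑' n, c n) := tsum_mul_left

end S8
namespace S8

lemma norm_symD (s : ℝ) (n : ℤ) : ‖symD s n‖ = |(n : ℝ)| ^ s := by
  rw [symD, Complex.norm_real, Real.norm_eq_abs,
    _root_.abs_of_nonneg (Real.rpow_nonneg (abs_nonneg _) _)]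

lemma norm_symDx (n : ℤ) : ‖symDx n‖ = |(n : ℝ)| := by
  rw [symDx, norm_mul, Complex.norm_I, one_mul]
  simp

lemma symH_pp {m k : ℤ} (hm : 0 < m) (hk : 0 < k) : symH m * symH k = -1 := by
  rw [symH, symH, Int.sign_eq_one_iff_pos.mpr hm, Int.sign_eq_one_iff_pos.mpr hk]
  push_cast
  ring_nf
  simp [Complex.I_sq]

lemma symH_nn {m k : ℤ} (hm : m < 0) (hk : k < 0) : symH m * symH k = -1 := by
  rw [symH, symH, Int.sign_eq_neg_one_iff_neg.mpr hm, Int.sign_eq_neg_one_iff_neg.mpr hk]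
  push_cast
  ring_nf
  simp [Complex.I_sq]

lemma symH_mix {m k : ℤ} (hm : m < 0) (hk : 0 < k) : symH m * symH k = 1 := by
  rw [symH, symH, Int.sign_eq_neg_one_iff_neg.mpr hm, Int.sign_eq_one_iff_pos.mpr hk]
  push_cast
  ring_nf
  simp [Complex.I_sq]

lemma FC_c_zero {s : ℝ} {w c : Torus → ℝ}
    (hwc : HasSymbol (fun n => symD s n * symDx n) w c) : FC c 0 = 0 := by
  rw [hwc 0]
  simp [symDx]

lemma key_term (s : ℝ) (u w c Hc : Torus → ℝ)
    (hwc : HasSymbol (fun n => symD s n * symDx n) w c)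
    (hHcS : HasSymbol symH c Hc) (m k : ℤ) :
    ‖FC u (-(m + k)) * FC Hc m * FC Hc k - FC u (-(m + k)) * FC c m * FC c k‖
      ≤ (1 + ((m + k : ℤ) : ℝ) ^ 2) * ‖FC u (m + k)‖ *
        ((|(m : ℝ)| ^ s * ‖FC w m‖) ^ 2 + (|(k : ℝ)| ^ s * ‖FC w k‖) ^ 2) := by
  set bm := |(m : ℝ)| ^ s * ‖FC w m‖ with hbm
  set bk := |(k : ℝ)| ^ s * ‖FC w k‖ with hbk
  have hbm0 : 0 ≤ bm := mul_nonneg (Real.rpow_nonneg (abs_nonneg _) _) (norm_nonneg _)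
  have hbk0 : 0 ≤ bk := mul_nonneg (Real.rpow_nonneg (abs_nonneg _) _) (norm_nonneg _)
  have hRHS : 0 ≤ (1 + ((m + k : ℤ) : ℝ) ^ 2) * ‖FC u (m + k)‖ * (bm ^ 2 + bk ^ 2) := by
    positivity
  have hfac : FC u (-(m + k)) * FC Hc m * FC Hc k - FC u (-(m + k)) * FC c m * FC c k
      = (symH m * symH k - 1) * (FC u (-(m + k)) * (FC c m * FC c k)) := by
    rw [hHcS m, hHcS k]; ring
  -- zero cases
  rcases eq_or_ne m 0 with hm0 | hm0
  · subst hm0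
    rw [hfac, hwc 0]
    simpa [symDx] using hRHS
  rcases eq_or_ne k 0 with hk0 | hk0
  · subst hk0
    rw [hfac, hwc 0]
    simpa [symDx] using hRHS
  have hcm : ‖FC c m‖ = |(m : ℝ)| * bm := by
    rw [hwc m, norm_mul, norm_mul, norm_symD, norm_symDx, hbm]; ring
  have hck : ‖FC c k‖ = |(k : ℝ)| * bk := by
    rw [hwc k, norm_mul, norm_mul, norm_symD, norm_symDx, hbk]; ring
  -- mixed sign case: factor vanishes
  have hmix : ∀ {a b : ℤ}, a < 0 → 0 < b → symH a * symH b - 1 = 0 := by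
    intro a b ha hb; rw [symH_mix ha hb]; ring
  rcases lt_trichotomy m 0 with hm | hm | hm
  · rcases lt_trichotomy k 0 with hk | hk | hk
    · -- both negative
      rw [hfac, norm_mul]
      rw [show symH m * symH k - 1 = -2 by rw [symH_nn hm hk]; ring]
      have hsame : |(m : ℝ)| * |(k : ℝ)| ≤ 1 + ((m + k : ℤ) : ℝ) ^ 2 := by
        have hm' : (m : ℝ) < 0 := by exact_mod_cast hm
        have hk' : (k : ℝ) < 0 := by exact_mod_cast hk
        push_cast
        rw [abs_of_neg hm', abs_of_neg hk']
        nlinarith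
      have h2ab : 2 * (bm * bk) ≤ bm ^ 2 + bk ^ 2 := by nlinarith [sq_nonneg (bm - bk)]
      calc ‖(-2 : ℂ)‖ * ‖FC u (-(m + k)) * (FC c m * FC c k)‖
          = ‖FC u (m + k)‖ * ((|(m : ℝ)| * |(k : ℝ)|) * (2 * (bm * bk))) := by
            rw [norm_mul, norm_mul, hcm, hck, norm_FC_neg]
            simp only [Complex.norm_ofNat, norm_neg]
            ring
        _ ≤ ‖FC u (m + k)‖ * ((1 + ((m + k : ℤ) : ℝ) ^ 2) * (bm ^ 2 + bk ^ 2)) := by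
            refine mul_le_mul_of_nonneg_left
              (mul_le_mul hsame h2ab (by positivity) (by positivity)) (norm_nonneg _)
        _ = (1 + ((m + k : ℤ) : ℝ) ^ 2) * ‖FC u (m + k)‖ * (bm ^ 2 + bk ^ 2) := by ring
    · exact absurd hk hk0
    · -- m < 0 < k : factor zero
      rw [hfac, hmix hm hk]
      simpa using hRHS
  · exact absurd hm hm0
  · rcases lt_trichotomy k 0 with hk | hk | hk
    · -- k < 0 < m
      rw [hfac, show symH m * symH k - 1 = 0 by
        rw [mul_comm]; exact hmix hk hm]
      simpa using hRHS
    · exact absurd hk hk0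
    · -- both positive
      rw [hfac, norm_mul]
      rw [show symH m * symH k - 1 = -2 by rw [symH_pp hm hk]; ring]
      have hsame : |(m : ℝ)| * |(k : ℝ)| ≤ 1 + ((m + k : ℤ) : ℝ) ^ 2 := by
        have hm' : (0 : ℝ) < (m : ℝ) := by exact_mod_cast hm
        have hk' : (0 : ℝ) < (k : ℝ) := by exact_mod_cast hk
        push_cast
        rw [abs_of_pos hm', abs_of_pos hk']
        nlinarith
      have h2ab : 2 * (bm * bk) ≤ bm ^ 2 + bk ^ 2 := by nlinarith [sq_nonneg (bm - bk)]
      calc ‖(-2 : ℂ)‖ * ‖FC u (-(m + k)) * (FC c m * FC c k)‖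
          = ‖FC u (m + k)‖ * ((|(m : ℝ)| * |(k : ℝ)|) * (2 * (bm * bk))) := by
            rw [norm_mul, norm_mul, hcm, hck, norm_FC_neg]
            simp only [Complex.norm_ofNat, norm_neg]
            ring
        _ ≤ ‖FC u (m + k)‖ * ((1 + ((m + k : ℤ) : ℝ) ^ 2) * (bm ^ 2 + bk ^ 2)) := by
            refine mul_le_mul_of_nonneg_left
              (mul_le_mul hsame h2ab (by positivity) (by positivity)) (norm_nonneg _)
        _ = (1 + ((m + k : ℤ) : ℝ) ^ 2) * ‖FC u (m + k)‖ * (bm ^ 2 + bk ^ 2) := by ring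

end S8
namespace S8

lemma rpow_sq {x : ℝ} (hx : 0 ≤ x) (t : ℝ) : (x ^ t) ^ 2 = x ^ (2 * t) := by
  rw [← Real.rpow_natCast (x ^ t) 2, ← Real.rpow_mul hx]
  norm_num [mul_comm]

lemma norm_symH_le (n : ℤ) : ‖symH n‖ ≤ 1 := by
  rcases lt_trichotomy n 0 with h | h | h
  · simp [symH, Int.sign_eq_neg_one_iff_neg.mpr h]
  · simp [symH, h]
  · simp [symH, Int.sign_eq_one_iff_pos.mpr h]

end S8
/-- `|⟨u, (HD^s∂ₓ w)²⟩ − ⟨u, (D^s∂ₓ w)²⟩| ≤ C‖u‖_{H^{s₀}}‖w‖_{H^s}²`. -/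
theorem statement8 (s s₀ : ℝ) (hs : 0 ≤ s) (hs₀ : 5 / 2 < s₀) :
    ∃ C > (0 : ℝ), ∀ u w c Hc : Torus → ℝ,
      Continuous u → MemHs s₀ u →
      Continuous w → MemHs (s + 2) w →
      Continuous c → HasSymbol (fun n => symD s n * symDx n) w c →
      Continuous Hc → HasSymbol symH c Hc →
      |inn3 u Hc Hc - inn3 u c c| ≤ C * HsNorm s₀ u * HsNorm s w ^ 2 := by
  have hK : Summable fun n : ℤ => (1 + (n : ℝ) ^ 2) ^ (2 - s₀) :=
    S8.summable_jap (by linarith)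
  set K := ∑' n : ℤ, (1 + (n : ℝ) ^ 2) ^ (2 - s₀) with hKdef
  have hK0 : 0 ≤ K := tsum_nonneg (fun n => Real.rpow_nonneg (by positivity) _)
  refine ⟨2 * Real.sqrt K + 1, by positivity, ?_⟩
  intro u w c Hc hu huH hw hwH hc hwc hHcC hHcS
  set X := HsNorm s₀ u with hXdef
  set Y := HsNorm s w with hYdef
  have hX0 : 0 ≤ X := Real.sqrt_nonneg _
  have hY0 : 0 ≤ Y := Real.sqrt_nonneg _
  set a : ℤ → ℝ := fun n => (1 + (n : ℝ) ^ 2) * ‖FC u n‖ with hadef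
  set b2 : ℤ → ℝ := fun m => (|(m : ℝ)| ^ s * ‖FC w m‖) ^ 2 with hb2def
  have ha0 : ∀ n, 0 ≤ a n := fun n => mul_nonneg (by positivity) (norm_nonneg _)
  have hb20 : ∀ n, 0 ≤ b2 n := fun n => sq_nonneg _
  -- Step A : summability and bound for `a`
  have hbase : ∀ n : ℤ, (0 : ℝ) < 1 + (n : ℝ) ^ 2 := fun n => by positivity
  have hfsq : Summable fun n : ℤ => ((1 + (n : ℝ) ^ 2) ^ (1 - s₀ / 2)) ^ 2 := by
    refine hK.congr (fun n => ?_)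
    rw [S8.rpow_sq (hbase n).le]
    congr 1
    ring
  have hgsq : Summable fun n : ℤ => ((1 + (n : ℝ) ^ 2) ^ (s₀ / 2) * ‖FC u n‖) ^ 2 := by
    refine huH.congr (fun n => ?_)
    rw [mul_pow, S8.rpow_sq (hbase n).le]
    congr 2
    ring
  obtain ⟨hsum_fg, hbd_fg⟩ := S8.tsum_cs
    (f := fun n : ℤ => (1 + (n : ℝ) ^ 2) ^ (1 - s₀ / 2))
    (g := fun n : ℤ => (1 + (n : ℝ) ^ 2) ^ (s₀ / 2) * ‖FC u n‖)
    (fun n => Real.rpow_nonneg (hbase n).le _)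
    (fun n => mul_nonneg (Real.rpow_nonneg (hbase n).le _) (norm_nonneg _))
    hfsq hgsq
  have haeq : ∀ n : ℤ, a n = (1 + (n : ℝ) ^ 2) ^ (1 - s₀ / 2) *
      ((1 + (n : ℝ) ^ 2) ^ (s₀ / 2) * ‖FC u n‖) := by
    intro n
    rw [hadef, ← mul_assoc, ← Real.rpow_add (hbase n)]
    norm_num
  have hsum_a : Summable a := hsum_fg.congr (fun n => (haeq n).symm)
  have hbd_a : ∑' n, a n ≤ Real.sqrt K * X := by
    have e1 : ∑' n, a n = ∑' n : ℤ, (1 + (n : ℝ) ^ 2) ^ (1 - s₀ / 2) *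
        ((1 + (n : ℝ) ^ 2) ^ (s₀ / 2) * ‖FC u n‖) := tsum_congr haeq
    have e2 : ∑' n : ℤ, ((1 + (n : ℝ) ^ 2) ^ (1 - s₀ / 2)) ^ 2 = K := by
      rw [hKdef]
      refine tsum_congr (fun n => ?_)
      rw [S8.rpow_sq (hbase n).le]
      congr 1
      ring
    have e3 : Real.sqrt (∑' n : ℤ, ((1 + (n : ℝ) ^ 2) ^ (s₀ / 2) * ‖FC u n‖) ^ 2) = X := by
      rw [hXdef, HsNorm]
      congr 1
      refine tsum_congr (fun n => ?_)
      rw [mul_pow, S8.rpow_sq (hbase n).le]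
      congr 2
      ring
    rw [e1]
    calc ∑' n : ℤ, (1 + (n : ℝ) ^ 2) ^ (1 - s₀ / 2) *
        ((1 + (n : ℝ) ^ 2) ^ (s₀ / 2) * ‖FC u n‖) ≤ _ := hbd_fg
      _ = Real.sqrt K * X := by rw [e2, e3]
  -- Step B : summability and bound for `b2`
  have hb2eq : ∀ m : ℤ, b2 m = (|(m : ℝ)| ^ s) ^ 2 * ‖FC w m‖ ^ 2 := fun m => by
    simp only [hb2def, mul_pow]
  have habs_le : ∀ (m : ℤ) (t : ℝ), 0 ≤ t → |(m : ℝ)| ^ (2 * t) ≤ (1 + (m : ℝ) ^ 2) ^ t := by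
    intro m t ht
    have h1 : |(m : ℝ)| ^ (2 * t) = ((m : ℝ) ^ 2) ^ t := by
      rw [← _root_.sq_abs, ← Real.rpow_natCast |(m : ℝ)| 2, ← Real.rpow_mul (abs_nonneg _)]
      norm_num
    rw [h1]
    exact Real.rpow_le_rpow (sq_nonneg _) (by linarith) ht
  have hcomp1 : ∀ m : ℤ, b2 m ≤ (1 + (m : ℝ) ^ 2) ^ s * ‖FC w m‖ ^ 2 := by
    intro m
    rw [hb2eq m]
    refine mul_le_mul_of_nonneg_right ?_ (sq_nonneg _)
    rw [S8.rpow_sq (abs_nonneg _)]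
    exact habs_le m s hs
  have hcomp2 : ∀ m : ℤ, (1 + (m : ℝ) ^ 2) ^ s * ‖FC w m‖ ^ 2
      ≤ (1 + (m : ℝ) ^ 2) ^ (s + 2) * ‖FC w m‖ ^ 2 := by
    intro m
    refine mul_le_mul_of_nonneg_right ?_ (sq_nonneg _)
    refine Real.rpow_le_rpow_of_exponent_le ?_ (by linarith)
    nlinarith [sq_nonneg ((m : ℝ))]
  have hsum_mid : Summable fun m : ℤ => (1 + (m : ℝ) ^ 2) ^ s * ‖FC w m‖ ^ 2 :=
    Summable.of_nonneg_of_le (fun m => by positivity) hcomp2 hwH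
  have hsum_b2 : Summable b2 := Summable.of_nonneg_of_le hb20 hcomp1 hsum_mid
  have hb2_le : ∑' m, b2 m ≤ Y ^ 2 := by
    have : Y ^ 2 = ∑' m : ℤ, (1 + (m : ℝ) ^ 2) ^ s * ‖FC w m‖ ^ 2 := by
      rw [hYdef, HsNorm, Real.sq_sqrt (tsum_nonneg (fun m => by positivity))]
    rw [this]
    exact Summable.tsum_le_tsum hcomp1 hsum_b2 hsum_mid
  -- Step C : ℓ¹ facts
  have hcl1 : Summable fun m : ℤ => ‖FC c m‖ := by
    have hf2 : Summable fun m : ℤ => ((1 + (m : ℝ) ^ 2) ^ (-(1 : ℝ) / 2)) ^ 2 := by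
      refine (S8.summable_jap (t := -1) (by norm_num)).congr (fun m => ?_)
      rw [S8.rpow_sq (hbase m).le]
      congr 1
      ring
    have hg2 : Summable fun m : ℤ => ((1 + (m : ℝ) ^ 2) ^ ((s + 2) / 2) * ‖FC w m‖) ^ 2 := by
      refine hwH.congr (fun m => ?_)
      rw [mul_pow, S8.rpow_sq (hbase m).le]
      congr 2
      ring
    obtain ⟨hsum', _⟩ := S8.tsum_cs
      (f := fun m : ℤ => (1 + (m : ℝ) ^ 2) ^ (-(1 : ℝ) / 2))
      (g := fun m : ℤ => (1 + (m : ℝ) ^ 2) ^ ((s + 2) / 2) * ‖FC w m‖)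
      (fun m => Real.rpow_nonneg (hbase m).le _)
      (fun m => mul_nonneg (Real.rpow_nonneg (hbase m).le _) (norm_nonneg _))
      hf2 hg2
    refine Summable.of_nonneg_of_le (fun m => norm_nonneg _) (fun m => ?_) hsum'
    rcases eq_or_ne m 0 with hm0 | hm0
    · subst hm0
      rw [S8.FC_c_zero hwc, norm_zero]
      positivity
    · have e : ‖FC c m‖ = |(m : ℝ)| ^ (s + 1) * ‖FC w m‖ := by
        rw [hwc m, norm_mul, norm_mul, S8.norm_symD, S8.norm_symDx,
          Real.rpow_add_one (by simpa using (by exact_mod_cast hm0 : ((m : ℝ)) ≠ 0))]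
      rw [e]
      have h1 : |(m : ℝ)| ^ (s + 1) ≤ (1 + (m : ℝ) ^ 2) ^ ((s + 1) / 2) := by
        have := habs_le m ((s + 1) / 2) (by linarith)
        calc |(m : ℝ)| ^ (s + 1) = |(m : ℝ)| ^ (2 * ((s + 1) / 2)) := by congr 1; ring
          _ ≤ (1 + (m : ℝ) ^ 2) ^ ((s + 1) / 2) := this
      have h2 : (1 + (m : ℝ) ^ 2) ^ (-(1 : ℝ) / 2) *
          ((1 + (m : ℝ) ^ 2) ^ ((s + 2) / 2) * ‖FC w m‖)
          = (1 + (m : ℝ) ^ 2) ^ ((s + 1) / 2) * ‖FC w m‖ := by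
        rw [← mul_assoc, ← Real.rpow_add (hbase m)]
        have he : -(1 : ℝ) / 2 + (s + 2) / 2 = (s + 1) / 2 := by ring
        rw [he]
      rw [h2]
      exact mul_le_mul_of_nonneg_right h1 (norm_nonneg _)
  have hHcl1 : Summable fun m : ℤ => ‖FC Hc m‖ := by
    refine Summable.of_nonneg_of_le (fun m => norm_nonneg _) (fun m => ?_) hcl1
    rw [hHcS m, norm_mul]
    calc ‖symH m‖ * ‖FC c m‖ ≤ 1 * ‖FC c m‖ :=
          mul_le_mul_of_nonneg_right (S8.norm_symH_le m) (norm_nonneg _)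
      _ = ‖FC c m‖ := one_mul _
  -- Step D : Fourier expansion of both trilinear forms
  have h1 := S8.inn3_fourier hu hHcC hHcC hHcl1 hHcl1
  have h2 := S8.inn3_fourier hu hc hc hcl1 hcl1
  obtain ⟨Mu, _, hMu⟩ := S8.FC_bound hu
  have hP2sum : Summable fun p : ℤ × ℤ => FC u (-(p.1 + p.2)) * FC c p.1 * FC c p.2 := by
    refine Summable.of_norm (Summable.of_nonneg_of_le (fun _ => norm_nonneg _) (fun p => ?_)
      ((Summable.mul_of_nonneg hcl1 hcl1 (fun _ => norm_nonneg _)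
        (fun _ => norm_nonneg _)).mul_left Mu))
    rw [norm_mul, norm_mul]
    calc ‖FC u (-(p.1 + p.2))‖ * ‖FC c p.1‖ * ‖FC c p.2‖
        = ‖FC u (-(p.1 + p.2))‖ * (‖FC c p.1‖ * ‖FC c p.2‖) := by ring
      _ ≤ Mu * (‖FC c p.1‖ * ‖FC c p.2‖) :=
          mul_le_mul_of_nonneg_right (hMu _) (by positivity)
  have hP1sum : Summable fun p : ℤ × ℤ => FC u (-(p.1 + p.2)) * FC Hc p.1 * FC Hc p.2 := by
    refine Summable.of_norm (Summable.of_nonneg_of_le (fun _ => norm_nonneg _) (fun p => ?_)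
      ((Summable.mul_of_nonneg hHcl1 hHcl1 (fun _ => norm_nonneg _)
        (fun _ => norm_nonneg _)).mul_left Mu))
    rw [norm_mul, norm_mul]
    calc ‖FC u (-(p.1 + p.2))‖ * ‖FC Hc p.1‖ * ‖FC Hc p.2‖
        = ‖FC u (-(p.1 + p.2))‖ * (‖FC Hc p.1‖ * ‖FC Hc p.2‖) := by ring
      _ ≤ Mu * (‖FC Hc p.1‖ * ‖FC Hc p.2‖) :=
          mul_le_mul_of_nonneg_right (hMu _) (by positivity)
  have hdiff : ((inn3 u Hc Hc - inn3 u c c : ℝ) : ℂ)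
      = ∑' p : ℤ × ℤ, (FC u (-(p.1 + p.2)) * FC Hc p.1 * FC Hc p.2
          - FC u (-(p.1 + p.2)) * FC c p.1 * FC c p.2) := by
    push_cast
    rw [h1, h2, Summable.tsum_sub hP1sum hP2sum]
  -- Step E : majorant
  set maj : ℤ × ℤ → ℝ := fun p => a (p.1 + p.2) * b2 p.1 + a (p.1 + p.2) * b2 p.2 with hmajdef
  have hterm : ∀ p : ℤ × ℤ,
      ‖FC u (-(p.1 + p.2)) * FC Hc p.1 * FC Hc p.2
        - FC u (-(p.1 + p.2)) * FC c p.1 * FC c p.2‖ ≤ maj p := by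
    intro p
    refine (S8.key_term s u w c Hc hwc hHcS p.1 p.2).trans_eq ?_
    rw [hmajdef, hadef, hb2def]
    push_cast
    ring
  obtain ⟨hconv1, hconv1eq⟩ := S8.conv_eval ha0 hb20 hsum_a hsum_b2
  have hconv2 : Summable fun p : ℤ × ℤ => a (p.1 + p.2) * b2 p.2 := by
    have hcc : Summable ((fun p : ℤ × ℤ => a (p.1 + p.2) * b2 p.2) ∘ (Equiv.prodComm ℤ ℤ)) :=
      hconv1.congr (fun q => by simp [Function.comp, add_comm])
    exact ((Equiv.prodComm ℤ ℤ).summable_iff).mp hcc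
  have hconv2eq : ∑' p : ℤ × ℤ, a (p.1 + p.2) * b2 p.2 = (∑' n, a n) * (∑' n, b2 n) := by
    rw [← (Equiv.prodComm ℤ ℤ).tsum_eq (fun p : ℤ × ℤ => a (p.1 + p.2) * b2 p.2)]
    rw [← hconv1eq]
    exact tsum_congr (fun q => by simp [add_comm])
  have hmajsum : Summable maj := hconv1.add hconv2
  have hmajeq : ∑' p, maj p = 2 * ((∑' n, a n) * (∑' n, b2 n)) := by
    rw [hmajdef, Summable.tsum_add hconv1 hconv2, hconv1eq, hconv2eq]
    ring
  have hnrm : Summable fun p : ℤ × ℤ =>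
      ‖FC u (-(p.1 + p.2)) * FC Hc p.1 * FC Hc p.2
        - FC u (-(p.1 + p.2)) * FC c p.1 * FC c p.2‖ :=
    Summable.of_nonneg_of_le (fun _ => norm_nonneg _) hterm hmajsum
  -- Step F : conclusion
  have ha_nonneg : 0 ≤ ∑' n, a n := tsum_nonneg ha0
  have hb2_nonneg : 0 ≤ ∑' n, b2 n := tsum_nonneg hb20
  calc |inn3 u Hc Hc - inn3 u c c|
      = ‖((inn3 u Hc Hc - inn3 u c c : ℝ) : ℂ)‖ := by
        rw [Complex.norm_real, Real.norm_eq_abs]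
    _ ≤ ∑' p : ℤ × ℤ, ‖FC u (-(p.1 + p.2)) * FC Hc p.1 * FC Hc p.2
          - FC u (-(p.1 + p.2)) * FC c p.1 * FC c p.2‖ := by
        rw [hdiff]
        exact norm_tsum_le_tsum_norm hnrm
    _ ≤ ∑' p, maj p := Summable.tsum_le_tsum hterm hnrm hmajsum
    _ = 2 * ((∑' n, a n) * (∑' n, b2 n)) := hmajeq
    _ ≤ 2 * ((Real.sqrt K * X) * Y ^ 2) := by
        have := mul_le_mul hbd_a hb2_le hb2_nonneg (by positivity)
        linarith
    _ ≤ (2 * Real.sqrt K + 1) * X * Y ^ 2 := by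
        have hXY : 0 ≤ X * Y ^ 2 := by positivity
        nlinarith

end
end
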